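/- arXiv:2602.00545 — 12 statements merged into one kernel-verified Lean document; each statement's English description precedes it below -/
import Mathlib

section
/- Let L ≥ 2 and let d_0, d_1, …, d_L be positive integers with d_* := min{d_0, d_L} ≤ min{d_1, …, d_{L−1}}, and let 1 ≤ r ≤ d_*. Let U ∈ ℝ^{d_L×d_*} and V ∈ ℝ^{d_0×d_*} have orthonormal columns. Let I_r denote the d_*×d_* diagonal matrix whose first r diagonal entries are 1 and whose remaining entries are 0. Let Σ_xx ∈ ℝ^{d_0×d_0} be symmetric with Σ_xx V = V I_r, and set Σ_yx = U I_r Vᵀ. Fix η > 0 and initial values λ_{1,0}, …, λ_{d_*,0} > 0, let D_0 = diag(λ_{1,0}, …, λ_{d_*,0}), and initialize W^1_0 = pad_{d_1×d_0}(D_0 Vᵀ), W^L_0 = pad_{d_L×d_{L−1}}(U D_0), and W^k_0 = pad_{d_k×d_{k−1}}(D_0) for 1 < k < L. Run gradient descent W^l_{t+1} = W^l_t − η (W^{l+1}_t)ᵀ⋯(W^L_t)ᵀ (W^L_t⋯W^1_t Σ_xx − Σ_yx) (W^1_t)ᵀ⋯(W^{l−1}_t)ᵀ for each l. Then for every t ≥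 0 there is a diagonal matrix D_t = diag(λ_{1,t}, …, λ_{d_*,t}) such that W^1_t = pad_{d_1×d_0}(D_t Vᵀ), W^L_t = pad_{d_L×d_{L−1}}(U D_t), and W^k_t = pad_{d_k×d_{k−1}}(D_t) for 1 < k < L; moreover λ_{i,t+1} = λ_{i,t} − η λ_{i,t}^{2L−1} + η λ_{i,t}^{L−1} for 1 ≤ i ≤ r, and λ_{i,t} = λ_{i,0} for r < i ≤ d_*. -/
open Matrix

/-- `padMat m n D` is the `m × n` matrix whose top-left `p × q` block is `D` and whose
remaining entries are zero (the padding operator `pad_{m×n}`). -/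
def padMat {p q : ℕ} (m n : ℕ) (D : Matrix (Fin p) (Fin q) ℝ) : Matrix (Fin m) (Fin n) ℝ :=
  Matrix.of fun i j =>
    if h : (i : ℕ) < p ∧ (j : ℕ) < q then D ⟨i, h.1⟩ ⟨j, h.2⟩ else 0

/-- `chainProd d W a = W^a * W^{a-1} * ⋯ * W^1` (the identity matrix for `a = 0`). -/
def chainProd (d : ℕ → ℕ) (W : ∀ l : ℕ, Matrix (Fin (d l)) (Fin (d (l - 1))) ℝ) :
    (a : ℕ) → Matrix (Fin (d a)) (Fin (d 0)) ℝ
  | 0 => 1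
  | a + 1 => (show Matrix (Fin (d (a + 1))) (Fin (d a)) ℝ from W (a + 1)) * chainProd d W a

/-- `prodAbove d W l k = W^{l+k} * W^{l+k-1} * ⋯ * W^{l+1}` (the identity for `k = 0`). -/
def prodAbove (d : ℕ → ℕ) (W : ∀ l : ℕ, Matrix (Fin (d l)) (Fin (d (l - 1))) ℝ) (l : ℕ) :
    (k : ℕ) → Matrix (Fin (d (l + k))) (Fin (d l)) ℝ
  | 0 => show Matrix (Fin (d (l + 0))) (Fin (d l)) ℝ from (1 : Matrix (Fin (d l)) (Fin (d l)) ℝ)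
  | k + 1 => (show Matrix (Fin (d (l + k + 1))) (Fin (d (l + k))) ℝ from W (l + k + 1)) *
      prodAbove d W l k

/-!
If every layer is a padded copy of `D = diag λ` (with `Vᵀ` attached to the first layer and `U` to
the last), then, since the hidden widths are at least `d_*`, padded blocks multiply like their
cores. Hence every partial product of layers is a padded `Dᵏ` (with `U`, `Vᵀ` attached at the
ends), and `Vᵀ Σ_xx = J Vᵀ` turns the residual into `U (Dᴸ J - J) Vᵀ`, where `J = 𝓘_r`. Between
the partial products, `Uᵀ U = Vᵀ V = 1` leave the same diagonal gradient `Dᴸ⁻¹ (Dᴸ J - J)` at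
every layer, so the shape is preserved and `λ` takes the step `λ ↦ λ - η λᴸ⁻¹ (λᴸ J - J)`: this
is the claimed recursion for `i < r` and the identity for `i ≥ r`.
-/

lemma sum_dite_lt_eq_sum_fin {n q : ℕ} (hq : q ≤ n) (g : Fin q → ℝ) :
    ∑ s : Fin n, (if h : (s : ℕ) < q then g ⟨s, h⟩ else 0) = ∑ t : Fin q, g t := by
  rw [Fin.sum_univ_eq_sum_range (fun s => if h : s < q then g ⟨s, h⟩ else 0),
    Finset.sum_fin_eq_sum_range, ← Finset.sum_range_add_sum_Ico _ hq,
    Finset.sum_eq_zero (s := Finset.Ico q n) fun s hs => dif_neg (by simp at hs; omega),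
    add_zero]

section padMat

variable {p q m n : ℕ}

lemma padMat_apply (A : Matrix (Fin p) (Fin q) ℝ) (i : Fin m) (j : Fin n) :
    padMat m n A i j = if h : (i : ℕ) < p ∧ (j : ℕ) < q then A ⟨i, h.1⟩ ⟨j, h.2⟩ else 0 :=
  rfl

lemma padMat_self (A : Matrix (Fin m) (Fin n) ℝ) : padMat m n A = A := by
  ext i j
  simp [padMat_apply]

lemma padMat_transpose (A : Matrix (Fin p) (Fin q) ℝ) : (padMat m n A)ᵀ = padMat n m Aᵀ := by
  ext i j
  simp only [padMat_apply, transpose_apply]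
  exact dite_congr (propext and_comm) (fun _ => rfl) (fun _ => rfl)

lemma padMat_sub_smul (A B : Matrix (Fin p) (Fin q) ℝ) (c : ℝ) :
    padMat m n A - c • padMat m n B = padMat m n (A - c • B) := by
  ext i j
  simp only [padMat_apply, Matrix.sub_apply, Matrix.smul_apply]
  split_ifs <;> simp

lemma padMat_mul {k o : ℕ} (hq : q ≤ n) (A : Matrix (Fin p) (Fin q) ℝ)
    (B : Matrix (Fin q) (Fin k) ℝ) : padMat m n A * padMat n o B = padMat m o (A * B) := by
  ext i j
  rw [mul_apply, padMat_apply]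
  by_cases hij : (i : ℕ) < p ∧ (j : ℕ) < k
  · rw [dif_pos hij, mul_apply, ← sum_dite_lt_eq_sum_fin hq]
    refine Finset.sum_congr rfl fun s _ => ?_
    by_cases hs : (s : ℕ) < q <;> simp [padMat_apply, hij, hs]
  · rw [dif_neg hij]
    refine Finset.sum_eq_zero fun s _ => ?_
    simp only [padMat_apply]
    split_ifs <;> simp_all

end padMat

structure IsBalanced (d : ℕ → ℕ) (L : ℕ) {n : ℕ} (U : Matrix (Fin (d L)) (Fin n) ℝ)
    (V : Matrix (Fin (d 0)) (Fin n) ℝ) (lam : Fin n → ℝ)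
    (X : ∀ l : ℕ, Matrix (Fin (d l)) (Fin (d (l - 1))) ℝ) : Prop where
  first : X 1 = padMat (d 1) (d 0) (diagonal lam * Vᵀ)
  last : X L = padMat (d L) (d (L - 1)) (U * diagonal lam)
  mid : ∀ k, 1 < k → k < L → X k = padMat (d k) (d (k - 1)) (diagonal lam)

def layerGrad (d : ℕ → ℕ) (L : ℕ) (X : ∀ l : ℕ, Matrix (Fin (d l)) (Fin (d (l - 1))) ℝ)
    (Sxx : Matrix (Fin (d 0)) (Fin (d 0)) ℝ) (Syx : Matrix (Fin (d L)) (Fin (d 0)) ℝ) (l : ℕ)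
    (hlL : l ≤ L) : Matrix (Fin (d l)) (Fin (d (l - 1))) ℝ :=
  (prodAbove d X l (L - l))ᵀ.submatrix id (Fin.cast (congrArg d (Nat.add_sub_cancel' hlL)).symm) *
    (chainProd d X L * Sxx - Syx) * (chainProd d X (l - 1))ᵀ

section Balanced

variable {d : ℕ → ℕ} {L n : ℕ} {U : Matrix (Fin (d L)) (Fin n) ℝ}
  {V : Matrix (Fin (d 0)) (Fin n) ℝ} {lam : Fin n → ℝ}
  {X : ∀ l : ℕ, Matrix (Fin (d l)) (Fin (d (l - 1))) ℝ}

lemma chainProd_succ_of_eq {a p q : ℕ} {A : Matrix (Fin p) (Fin q) ℝ}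
    (h : X (a + 1) = padMat (d (a + 1)) (d a) A) :
    chainProd d X (a + 1) = padMat (d (a + 1)) (d a) A * chainProd d X a := by
  simp only [chainProd]
  rw [h]

lemma chainProd_of_isBalanced (hX : IsBalanced d L U V lam X)
    (hwidth : ∀ l, 1 ≤ l → l ≤ L - 1 → n ≤ d l) {a : ℕ} (ha : 1 ≤ a) (haL : a < L) :
    chainProd d X a = padMat (d a) (d 0) (diagonal lam ^ a * Vᵀ) := by
  induction a with
  | zero => omega
  | succ a ih =>
    rcases Nat.eq_zero_or_pos a with rfl | ha
    · rw [chainProd_succ_of_eq hX.first, show chainProd d X 0 = 1 from rfl, Matrix.mul_one,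
        pow_one]
    · rw [chainProd_succ_of_eq (hX.mid (a + 1) (by omega) haL), ih ha (by omega),
        padMat_mul (hwidth a ha (by omega)), ← Matrix.mul_assoc, ← pow_succ']

lemma chainProd_top_of_isBalanced (hX : IsBalanced d L U V lam X)
    (hwidth : ∀ l, 1 ≤ l → l ≤ L - 1 → n ≤ d l) (hL : 1 < L) :
    chainProd d X L = U * diagonal lam ^ L * Vᵀ := by
  obtain ⟨m, rfl⟩ : ∃ m, L = m + 1 := ⟨L - 1, by omega⟩
  rw [chainProd_succ_of_eq hX.last, chainProd_of_isBalanced hX hwidth (by omega) (by omega),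
    padMat_mul (hwidth m (by omega) (by omega)), padMat_self, Matrix.mul_assoc U,
    ← Matrix.mul_assoc (diagonal lam), ← pow_succ', Matrix.mul_assoc]

lemma prodAbove_succ_of_eq {l k p q : ℕ} {A : Matrix (Fin p) (Fin q) ℝ}
    (h : X (l + k + 1) = padMat (d (l + k + 1)) (d (l + k)) A) :
    prodAbove d X l (k + 1) = padMat (d (l + k + 1)) (d (l + k)) A * prodAbove d X l k := by
  simp only [prodAbove]
  rw [h]

lemma prodAbove_of_isBalanced (hX : IsBalanced d L U V lam X)
    (hwidth : ∀ l, 1 ≤ l → l ≤ L - 1 → n ≤ d l) {l k : ℕ} (hl : 1 ≤ l) (hk : 0 < k)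
    (hlk : l + k < L) :
    prodAbove d X l k = padMat (d (l + k)) (d l) (diagonal lam ^ k) := by
  induction k with
  | zero => omega
  | succ k ih =>
    rw [prodAbove_succ_of_eq (hX.mid (l + k + 1) (by omega) (by omega))]
    rcases Nat.eq_zero_or_pos k with rfl | hk
    · rw [show prodAbove d X l 0 = 1 from rfl, Matrix.mul_one, pow_one]
      rfl
    · rw [ih hk (by omega), padMat_mul (hwidth (l + k) (by omega) (by omega)), ← pow_succ']
      rfl

lemma prodAbove_cast_of_isBalanced (hX : IsBalanced d L U V lam X)
    (hwidth : ∀ l, 1 ≤ l → l ≤ L - 1 → n ≤ d l) {l k : ℕ} (hl : 1 ≤ l) (hk : 0 < k)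
    (h : l + k = L) :
    (prodAbove d X l k).submatrix (Fin.cast (congrArg d h).symm) id =
      padMat (d L) (d l) (U * diagonal lam ^ k) := by
  subst h
  obtain ⟨k, rfl⟩ : ∃ j, k = j + 1 := ⟨k - 1, by omega⟩
  rw [prodAbove_succ_of_eq hX.last]
  rcases Nat.eq_zero_or_pos k with rfl | hk
  · rw [show prodAbove d X l 0 = 1 from rfl, Matrix.mul_one, pow_one]
    rfl
  · rw [prodAbove_of_isBalanced hX hwidth hl hk (by omega),
      padMat_mul (hwidth (l + k) (by omega) (by omega)), Matrix.mul_assoc, ← pow_succ']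
    rfl

lemma prodAbove_zero_cast {l k : ℕ} (h : l + k = l) :
    (prodAbove d X l k).submatrix (Fin.cast (congrArg d h).symm) id = 1 := by
  obtain rfl : k = 0 := by omega
  rfl

section Gradient

variable {Sxx : Matrix (Fin (d 0)) (Fin (d 0)) ℝ} {Syx : Matrix (Fin (d L)) (Fin (d 0)) ℝ}
  {e : Fin n → ℝ}

lemma layerGrad_first (hX : IsBalanced d L U V lam X)
    (hwidth : ∀ l, 1 ≤ l → l ≤ L - 1 → n ≤ d l) (hL : 1 < L) (hU : Uᵀ * U = 1)
    (hres : chainProd d X L * Sxx - Syx = U * diagonal e * Vᵀ) :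
    layerGrad d L X Sxx Syx 1 hL.le =
      padMat (d 1) (d 0) (diagonal lam ^ (L - 1) * diagonal e * Vᵀ) := by
  rw [layerGrad, ← transpose_submatrix, prodAbove_cast_of_isBalanced hX hwidth le_rfl
    (by omega) (Nat.add_sub_cancel' hL.le), hres, show chainProd d X (1 - 1) = 1 from rfl,
    transpose_one, Matrix.mul_one, padMat_transpose, ← padMat_self (U * diagonal e * Vᵀ),
    padMat_mul le_rfl]
  congr 1
  simp only [transpose_mul, diagonal_transpose, transpose_pow, Matrix.mul_assoc]
  rw [← Matrix.mul_assoc Uᵀ, hU, Matrix.one_mul]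

lemma layerGrad_last (hX : IsBalanced d L U V lam X)
    (hwidth : ∀ l, 1 ≤ l → l ≤ L - 1 → n ≤ d l) (hL : 1 < L) (hV : Vᵀ * V = 1)
    (hres : chainProd d X L * Sxx - Syx = U * diagonal e * Vᵀ) :
    layerGrad d L X Sxx Syx L le_rfl =
      padMat (d L) (d (L - 1)) (U * (diagonal lam ^ (L - 1) * diagonal e)) := by
  rw [layerGrad, ← transpose_submatrix, prodAbove_zero_cast (Nat.add_sub_cancel' le_rfl),
    transpose_one, Matrix.one_mul, hres, chainProd_of_isBalanced hX hwidth (by omega) (by omega),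
    padMat_transpose, ← padMat_self (U * diagonal e * Vᵀ), padMat_mul le_rfl]
  congr 1
  simp only [transpose_mul, diagonal_transpose, transpose_pow, transpose_transpose,
    Matrix.mul_assoc]
  rw [← Matrix.mul_assoc Vᵀ, hV, Matrix.one_mul, ((commute_diagonal lam e).pow_left _).eq]

lemma layerGrad_mid (hX : IsBalanced d L U V lam X)
    (hwidth : ∀ l, 1 ≤ l → l ≤ L - 1 → n ≤ d l) (hU : Uᵀ * U = 1) (hV : Vᵀ * V = 1)
    (hres : chainProd d X L * Sxx - Syx = U * diagonal e * Vᵀ) {k : ℕ} (hk : 1 < k)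
    (hkL : k < L) :
    layerGrad d L X Sxx Syx k hkL.le =
      padMat (d k) (d (k - 1)) (diagonal lam ^ (L - 1) * diagonal e) := by
  rw [layerGrad, ← transpose_submatrix, prodAbove_cast_of_isBalanced hX hwidth (by omega)
    (by omega) (Nat.add_sub_cancel' hkL.le), hres,
    chainProd_of_isBalanced hX hwidth (by omega) (by omega), padMat_transpose, padMat_transpose,
    ← padMat_self (U * diagonal e * Vᵀ), padMat_mul le_rfl, padMat_mul le_rfl]
  congr 1
  simp only [transpose_mul, diagonal_transpose, transpose_pow, transpose_transpose,
    Matrix.mul_assoc]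
  rw [← Matrix.mul_assoc Vᵀ, hV, Matrix.one_mul, ← Matrix.mul_assoc Uᵀ, hU, Matrix.one_mul,
    ← ((commute_diagonal lam e).pow_left _).eq, ← Matrix.mul_assoc, ← pow_add,
    show L - k + (k - 1) = L - 1 by omega]

lemma chainProd_mul_sub_of_isBalanced (hX : IsBalanced d L U V lam X)
    (hwidth : ∀ l, 1 ≤ l → l ≤ L - 1 → n ≤ d l) (hL : 1 < L) {s : Fin n → ℝ}
    (hSxx : Sxxᵀ = Sxx) (hSxxV : Sxx * V = V * diagonal s) :
    chainProd d X L * Sxx - U * diagonal s * Vᵀ = U * diagonal (lam ^ L * s - s) * Vᵀ := by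
  have hVSxx : Vᵀ * Sxx = diagonal s * Vᵀ := by
    simpa only [transpose_mul, hSxx, diagonal_transpose] using congrArg transpose hSxxV
  have hdiag : diagonal lam ^ L * diagonal s - diagonal s = diagonal (lam ^ L * s - s) := by
    rw [diagonal_pow, diagonal_mul_diagonal', diagonal_sub]
    rfl
  rw [chainProd_top_of_isBalanced hX hwidth hL, Matrix.mul_assoc _ Vᵀ, hVSxx,
    ← Matrix.mul_assoc, Matrix.mul_assoc U, ← Matrix.sub_mul, ← Matrix.mul_sub, hdiag]

lemma isBalanced_of_gradientStep (hX : IsBalanced d L U V lam X)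
    (hwidth : ∀ l, 1 ≤ l → l ≤ L - 1 → n ≤ d l) (hL : 1 < L) (hU : Uᵀ * U = 1)
    (hV : Vᵀ * V = 1) (hres : chainProd d X L * Sxx - Syx = U * diagonal e * Vᵀ) {η : ℝ}
    {X' : ∀ l : ℕ, Matrix (Fin (d l)) (Fin (d (l - 1))) ℝ}
    (hstep : ∀ l, 1 ≤ l → ∀ hlL : l ≤ L, X' l = X l - η • layerGrad d L X Sxx Syx l hlL) :
    IsBalanced d L U V (lam - η • (lam ^ (L - 1) * e)) X' := by
  have hdiag : diagonal (lam - η • (lam ^ (L - 1) * e)) =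
      diagonal lam - η • (diagonal lam ^ (L - 1) * diagonal e) := by
    rw [diagonal_pow, diagonal_mul_diagonal', ← diagonal_smul, diagonal_sub]
    rfl
  refine ⟨?_, ?_, fun k hk hkL => ?_⟩
  · rw [hstep 1 le_rfl hL.le, layerGrad_first hX hwidth hL hU hres, hX.first, padMat_sub_smul,
      hdiag, Matrix.sub_mul, Matrix.smul_mul]
  · rw [hstep L (by omega) le_rfl, layerGrad_last hX hwidth hL hV hres, hX.last,
      padMat_sub_smul, hdiag, Matrix.mul_sub, Matrix.mul_smul]
  · rw [hstep k hk.le hkL.le, layerGrad_mid hX hwidth hU hV hres hk hkL, hX.mid k hk hkL,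
      padMat_sub_smul, hdiag]

end Gradient

end Balanced

theorem statement0_general (L : ℕ) (hL : 2 ≤ L)
    (d : ℕ → ℕ) (hwidth : ∀ l, 1 ≤ l → l ≤ L - 1 → min (d 0) (d L) ≤ d l)
    (r : ℕ)
    (U : Matrix (Fin (d L)) (Fin (min (d 0) (d L))) ℝ)
    (V : Matrix (Fin (d 0)) (Fin (min (d 0) (d L))) ℝ)
    (hU : Uᵀ * U = 1) (hV : Vᵀ * V = 1)
    (Sxx : Matrix (Fin (d 0)) (Fin (d 0)) ℝ) (hSxxSym : Sxxᵀ = Sxx)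
    (hSxxV : Sxx * V = V * Matrix.diagonal
      (fun i : Fin (min (d 0) (d L)) => if (i : ℕ) < r then (1 : ℝ) else 0))
    (η : ℝ)
    (lam0 : Fin (min (d 0) (d L)) → ℝ)
    (W : ℕ → ∀ l : ℕ, Matrix (Fin (d l)) (Fin (d (l - 1))) ℝ)
    (hW1 : W 0 1 = padMat (d 1) (d 0) (Matrix.diagonal lam0 * Vᵀ))
    (hWL : W 0 L = padMat (d L) (d (L - 1)) (U * Matrix.diagonal lam0))
    (hWmid : ∀ k, 1 < k → k < L → W 0 k = padMat (d k) (d (k - 1)) (Matrix.diagonal lam0))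
    (hGD : ∀ t, ∀ l, 1 ≤ l → ∀ hlL : l ≤ L,
      W (t + 1) l = W t l - η •
        (((prodAbove d (W t) l (L - l)).transpose.submatrix id
            (Fin.cast (congrArg d (Nat.add_sub_cancel' hlL)).symm)) *
          (chainProd d (W t) L * Sxx -
            U * Matrix.diagonal
              (fun i : Fin (min (d 0) (d L)) => if (i : ℕ) < r then (1 : ℝ) else 0) * Vᵀ) *
          (chainProd d (W t) (l - 1)).transpose)) :
    ∃ lam : ℕ → Fin (min (d 0) (d L)) → ℝ,
      lam 0 = lam0 ∧
      (∀ t, W t 1 = padMat (d 1) (d 0) (Matrix.diagonal (lam t) * Vᵀ)) ∧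
      (∀ t, W t L = padMat (d L) (d (L - 1)) (U * Matrix.diagonal (lam t))) ∧
      (∀ t k, 1 < k → k < L →
        W t k = padMat (d k) (d (k - 1)) (Matrix.diagonal (lam t))) ∧
      (∀ t, ∀ i : Fin (min (d 0) (d L)), (i : ℕ) < r →
        lam (t + 1) i = lam t i - η * lam t i ^ (2 * L - 1) + η * lam t i ^ (L - 1)) ∧
      (∀ t, ∀ i : Fin (min (d 0) (d L)), r ≤ (i : ℕ) → lam t i = lam0 i) := by
  set s : Fin (min (d 0) (d L)) → ℝ := fun i => if (i : ℕ) < r then 1 else 0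
  set step : (Fin (min (d 0) (d L)) → ℝ) → Fin (min (d 0) (d L)) → ℝ :=
    fun μ => μ - η • (μ ^ (L - 1) * (μ ^ L * s - s))
  have hstep : ∀ t, step^[t + 1] lam0 = step (step^[t] lam0) :=
    fun t => Function.iterate_succ_apply' step t lam0
  have hbal : ∀ t, IsBalanced d L U V (step^[t] lam0) (W t) := by
    intro t
    induction t with
    | zero => exact ⟨hW1, hWL, hWmid⟩
    | succ t ih =>
      rw [hstep]
      exact isBalanced_of_gradientStep ih hwidth hL hU hV
        (chainProd_mul_sub_of_isBalanced ih hwidth hL hSxxSym hSxxV) (hGD t)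
  refine ⟨fun t => step^[t] lam0, rfl, fun t => (hbal t).first, fun t => (hbal t).last,
    fun t => (hbal t).mid, fun t i hi => ?_, fun t i hi => ?_⟩
  · simp only [hstep, step, s, Pi.sub_apply, Pi.smul_apply, Pi.mul_apply, Pi.pow_apply, if_pos hi,
      smul_eq_mul]
    rw [show 2 * L - 1 = (L - 1) + L by omega, pow_add]
    ring
  · have hfix : ∀ μ, step μ i = μ i := fun μ => by simp [step, s, not_lt.2 hi]
    induction t with
    | zero => rfl
    | succ t ih => exact (congrFun (hstep t) i).trans ((hfix _).trans ih)

/-- Shared spectral structure of balanced gradient descent. For a depth-`L`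
deep linear network with widths `d 0, …, d L`, `d_* = min (d 0) (d L) ≤` hidden widths,
orthonormal `U, V`, whitened data (`Σ_xx V = V 𝓘_r`), aligned target `Σ_yx = U 𝓘_r Vᵀ`, and
balanced initialization `W¹₀ = pad(D₀Vᵀ)`, `Wᴸ₀ = pad(UD₀)`, `Wᵏ₀ = pad(D₀)`, gradient
descent preserves the padded-diagonal structure: at every time `t` there is a diagonal
`D_t = diag(λ_{1,t},…,λ_{d_*,t})` with `W¹_t = pad(D_tVᵀ)`, `Wᴸ_t = pad(UD_t)`,
`Wᵏ_t = pad(D_t)`; the first `r` eigenvalues follow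
`λ_{i,t+1} = λ_{i,t} − η λ_{i,t}^{2L−1} + η λ_{i,t}^{L−1}` and the rest stay fixed. -/
theorem statement0 (L : ℕ) (hL : 2 ≤ L)
    (d : ℕ → ℕ) (hd : ∀ l, l ≤ L → 0 < d l)
    (hwidth : ∀ l, 1 ≤ l → l ≤ L - 1 → min (d 0) (d L) ≤ d l)
    (r : ℕ) (hr1 : 1 ≤ r) (hr : r ≤ min (d 0) (d L))
    (U : Matrix (Fin (d L)) (Fin (min (d 0) (d L))) ℝ)
    (V : Matrix (Fin (d 0)) (Fin (min (d 0) (d L))) ℝ)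
    (hU : Uᵀ * U = 1) (hV : Vᵀ * V = 1)
    (Sxx : Matrix (Fin (d 0)) (Fin (d 0)) ℝ) (hSxxSym : Sxxᵀ = Sxx)
    (hSxxV : Sxx * V = V * Matrix.diagonal
      (fun i : Fin (min (d 0) (d L)) => if (i : ℕ) < r then (1 : ℝ) else 0))
    (η : ℝ) (hη : 0 < η)
    (lam0 : Fin (min (d 0) (d L)) → ℝ) (hlam0 : ∀ i, 0 < lam0 i)
    (W : ℕ → ∀ l : ℕ, Matrix (Fin (d l)) (Fin (d (l - 1))) ℝ)
    (hW1 : W 0 1 = padMat (d 1) (d 0) (Matrix.diagonal lam0 * Vᵀ))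
    (hWL : W 0 L = padMat (d L) (d (L - 1)) (U * Matrix.diagonal lam0))
    (hWmid : ∀ k, 1 < k → k < L → W 0 k = padMat (d k) (d (k - 1)) (Matrix.diagonal lam0))
    (hGD : ∀ t, ∀ l, 1 ≤ l → ∀ hlL : l ≤ L,
      W (t + 1) l = W t l - η •
        (((prodAbove d (W t) l (L - l)).transpose.submatrix id
            (Fin.cast (congrArg d (Nat.add_sub_cancel' hlL)).symm)) *
          (chainProd d (W t) L * Sxx -
            U * Matrix.diagonal
              (fun i : Fin (min (d 0) (d L)) => if (i : ℕ) < r then (1 : ℝ) else 0) * Vᵀ) *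
          (chainProd d (W t) (l - 1)).transpose)) :
    ∃ lam : ℕ → Fin (min (d 0) (d L)) → ℝ,
      lam 0 = lam0 ∧
      (∀ t, W t 1 = padMat (d 1) (d 0) (Matrix.diagonal (lam t) * Vᵀ)) ∧
      (∀ t, W t L = padMat (d L) (d (L - 1)) (U * Matrix.diagonal (lam t))) ∧
      (∀ t k, 1 < k → k < L →
        W t k = padMat (d k) (d (k - 1)) (Matrix.diagonal (lam t))) ∧
      (∀ t, ∀ i : Fin (min (d 0) (d L)), (i : ℕ) < r →
        lam (t + 1) i = lam t i - η * lam t i ^ (2 * L - 1) + η * lam t i ^ (L - 1)) ∧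
      (∀ t, ∀ i : Fin (min (d 0) (d L)), r ≤ (i : ℕ) → lam t i = lam0 i) :=
  statement0_general L hL d hwidth r U V hU hV Sxx hSxxSym hSxxV η lam0 W hW1 hWL hWmid hGD
end

section
/- Let L ≥ 2, d_0 ≥ 1, d_L ≥ 1, and 1 ≤ r ≤ min{d_0, d_L}. Let U₁ ∈ ℝ^{d_L×r} and V₁ ∈ ℝ^{d_0×r} have orthonormal columns, and let μ > 0. Then the symmetric d_L d_0 × d_L d_0 matrix G = μ^{2(L−1)} ( U₁U₁ᵀ ⊗ I_{d_0} + I_{d_L} ⊗ V₁V₁ᵀ + (L−2) U₁U₁ᵀ ⊗ V₁V₁ᵀ ) has exactly two distinct nonzero eigenvalues: L μ^{2(L−1)} with multiplicity r², and μ^{2(L−1)} with multiplicity (d_0 + d_L − 2r)r; the eigenvalue 0 has multiplicity (d_L − r)(d_0 − r). -/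
/-!
Complete the orthonormal columns of `U₁` and `V₁` to orthogonal matrices `U` and `V`. Then
`U₁U₁ᵀ = U diag(p) Uᵀ` and `V₁V₁ᵀ = V diag(q) Vᵀ` with `p`, `q` indicator vectors of `r` ones,
and since `(A ⊗ B)(C ⊗ D) = AC ⊗ BD`, all three Kronecker products are diagonalised by the single
orthogonal matrix `U ⊗ V`. The eigenvalue at index `(i, j)` is
`μ^{2(L−1)} (pᵢ + q_j + (L − 2) pᵢ q_j)`, which is `L μ^{2(L−1)}`, `μ^{2(L−1)}` or `0` according
as both, exactly one or neither of `pᵢ`, `q_j` equal `1`.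
-/

open Matrix Finset
open scoped Kronecker

namespace Multiset

variable {α β γ δ : Type*}

theorem map_product_map (s : Multiset α) (t : Multiset β) (f : α → γ) (g : β → δ) :
    s.map f ×ˢ t.map g = (s ×ˢ t).map (Prod.map f g) := by
  induction s using Multiset.induction_on with
  | empty => simp
  | cons a s ih => simp [cons_product, ih, Multiset.map_map]

theorem replicate_product_replicate (m n : ℕ) (a : α) (b : β) :
    replicate m a ×ˢ replicate n b = replicate (m * n) (a, b) :=
  eq_replicate.mpr ⟨by simp [card_product], fun _ hx => by
    obtain ⟨ha, hb⟩ := mem_product.mp hx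
    exact Prod.ext (eq_of_mem_replicate ha) (eq_of_mem_replicate hb)⟩

theorem map_replicate_add_product_replicate_add (f : α × β → γ) (a a' : α) (b b' : β)
    (i i' j j' : ℕ) :
    ((replicate i a + replicate i' a') ×ˢ (replicate j b + replicate j' b')).map f =
      replicate (i * j) (f (a, b)) + replicate (i * j') (f (a, b')) +
        replicate (i' * j) (f (a', b)) + replicate (i' * j') (f (a', b')) := by
  simp only [add_product, product_add, replicate_product_replicate, map_add, map_replicate,
    add_assoc, add_left_comm]

end Multiset

namespace Finset

theorem univ_val_map_prodMap {α β γ δ ε : Type*} [Fintype α] [Fintype β] (p : α → γ)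
    (q : β → δ) (f : γ × δ → ε) :
    (univ : Finset (α × β)).val.map (fun x => f (p x.1, q x.2)) =
      (univ.val.map p ×ˢ univ.val.map q).map f := by
  rw [Multiset.map_product_map, Multiset.map_map, ← product_val, univ_product_univ]
  rfl

theorem univ_val_map_ite {α β : Type*} [Fintype α] (P : α → Prop) [DecidablePred P] (a b : β) :
    univ.val.map (fun x => if P x then a else b) =
      Multiset.replicate #{x | P x} a + Multiset.replicate #{x | ¬P x} b := by
  conv_lhs => rw [← Multiset.filter_add_not P univ.val, Multiset.map_add]
  rw [Multiset.map_congr rfl fun x hx => if_pos (Multiset.of_mem_filter hx),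
    Multiset.map_congr rfl fun x hx => if_neg (Multiset.of_mem_filter (p := fun x => ¬P x) hx)]
  simp only [Multiset.map_const']
  rfl

end Finset

namespace Matrix

variable {m k : Type*} [Fintype m]

theorem orthonormal_cols_of_transpose_mul_self_eq_one [DecidableEq k] {A : Matrix m k ℝ}
    (hA : Aᵀ * A = 1) : Orthonormal ℝ fun j => WithLp.toLp 2 (Aᵀ j) := by
  rw [orthonormal_iff_ite]
  intro i j
  rw [← one_apply, ← hA, EuclideanSpace.inner_eq_star_dotProduct, mul_apply']
  simp only [star_trivial, dotProduct_comm]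
  rfl

theorem card_le_card_of_transpose_mul_self_eq_one [Fintype k] [DecidableEq k]
    {A : Matrix m k ℝ} (hA : Aᵀ * A = 1) : Fintype.card k ≤ Fintype.card m := by
  simpa using
    (orthonormal_cols_of_transpose_mul_self_eq_one hA).linearIndependent.fintype_card_le_finrank

theorem exists_orthogonal_extension [DecidableEq m] [DecidableEq k] {A : Matrix m k ℝ}
    (hA : Aᵀ * A = 1) (e : k ↪ m) :
    ∃ U : Matrix m m ℝ, Uᵀ * U = 1 ∧ ∀ i j, U i (e j) = A i j := by
  set v : k → EuclideanSpace ℝ m := fun j => WithLp.toLp 2 (Aᵀ j)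
  have hv : Orthonormal ℝ ((Set.range e).domRestrict (Function.extend e v 0)) := by
    convert (orthonormal_cols_of_transpose_mul_self_eq_one hA).comp _
      (Equiv.ofInjective e e.injective).symm.injective
    ext ⟨_, j, rfl⟩ : 1
    simp [Set.domRestrict, e.injective.extend_apply, v]
  obtain ⟨b, hb⟩ := hv.exists_orthonormalBasis_extension_of_card_eq (by simp)
  refine ⟨(EuclideanSpace.basisFun m ℝ).toBasis.toMatrix b, ?_, fun i j => ?_⟩
  · simpa using (EuclideanSpace.basisFun m ℝ).toMatrix_orthonormalBasis_conjTranspose_mul_self b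
  · simp [Module.Basis.toMatrix_apply, hb (e j) ⟨j, rfl⟩, e.injective.extend_apply, v]

theorem exists_orthogonal_conj_diagonal_of_transpose_mul_self_eq_one [Fintype k]
    [DecidableEq m] [DecidableEq k] {A : Matrix m k ℝ} (hA : Aᵀ * A = 1) :
    ∃ (U : Matrix m m ℝ) (p : m → ℝ), Uᵀ * U = 1 ∧ A * Aᵀ = U * diagonal p * Uᵀ ∧
      univ.val.map p =
        Multiset.replicate (Fintype.card k) 1 +
          Multiset.replicate (Fintype.card m - Fintype.card k) 0 := by
  obtain ⟨e⟩ :=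
    Function.Embedding.nonempty_of_card_le (card_le_card_of_transpose_mul_self_eq_one hA)
  obtain ⟨U, hU, hUA⟩ := exists_orthogonal_extension hA e
  set s := univ.map e
  set p : m → ℝ := fun x => if x ∈ s then 1 else 0
  refine ⟨U, p, hU, ?_, ?_⟩
  · ext i l
    calc (A * Aᵀ) i l = ∑ j, U i (e j) * U l (e j) := by simp [mul_apply, hUA]
      _ = ∑ x ∈ s, U i x * U l x := (sum_map univ e fun x => U i x * U l x).symm
      _ = (U * diagonal p * Uᵀ) i l := by
        rw [mul_apply]
        simp only [mul_diagonal, transpose_apply, p, mul_ite, mul_one, mul_zero, ite_mul,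
          zero_mul, sum_ite_mem, univ_inter]
  · rw [univ_val_map_ite, filter_mem_eq_inter, filter_notMem_eq_sdiff, univ_inter,
      card_univ_sdiff, card_map, card_univ]

theorem conj_diagonal_kronecker_conj_diagonal {R n : Type*} [CommSemiring R] [Fintype n]
    [DecidableEq m] [DecidableEq n] (U : Matrix m m R) (V : Matrix n n R) (p : m → R)
    (q : n → R) :
    (U * diagonal p * Uᵀ) ⊗ₖ (V * diagonal q * Vᵀ) =
      (U ⊗ₖ V) * diagonal (fun x => p x.1 * q x.2) * (U ⊗ₖ V)ᵀ := by
  rw [mul_kronecker_mul, mul_kronecker_mul, diagonal_kronecker_diagonal, kroneckerMap_transpose]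

theorem smul_kroneckerSum_add_smul_kronecker_eq_conj_diagonal {R n : Type*} [CommRing R]
    [Fintype n] [DecidableEq m] [DecidableEq n] {U : Matrix m m R} {V : Matrix n n R}
    (hU : Uᵀ * U = 1) (hV : Vᵀ * V = 1) (p : m → R) (q : n → R) (a b : R) :
    a • ((U * diagonal p * Uᵀ) ⊗ₖ (1 : Matrix n n R) +
        (1 : Matrix m m R) ⊗ₖ (V * diagonal q * Vᵀ) +
        b • ((U * diagonal p * Uᵀ) ⊗ₖ (V * diagonal q * Vᵀ))) =
      (U ⊗ₖ V) * diagonal (fun x => a * (p x.1 + q x.2 + b * (p x.1 * q x.2))) * (U ⊗ₖ V)ᵀ := by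
  have hUone : (1 : Matrix m m R) = U * diagonal (fun _ => 1) * Uᵀ := by
    rw [diagonal_one, mul_one, mul_eq_one_comm.mp hU]
  have hVone : (1 : Matrix n n R) = V * diagonal (fun _ => 1) * Vᵀ := by
    rw [diagonal_one, mul_one, mul_eq_one_comm.mp hV]
  have hdiag : diagonal (fun x : m × n => a * (p x.1 + q x.2 + b * (p x.1 * q x.2))) =
      a • (diagonal (fun x => p x.1 * 1) + diagonal (fun x => 1 * q x.2) +
        b • diagonal (fun x => p x.1 * q x.2)) := by
    simp only [← diagonal_smul, diagonal_add]
    congr 1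
    funext x
    simp only [Pi.smul_apply, smul_eq_mul]
    ring
  rw [hUone, hVone, conj_diagonal_kronecker_conj_diagonal, conj_diagonal_kronecker_conj_diagonal,
    conj_diagonal_kronecker_conj_diagonal, hdiag]
  simp only [Matrix.mul_add, Matrix.add_mul, Matrix.mul_smul, Matrix.smul_mul]

theorem IsHermitian.map_eigenvalues_eq_of_orthogonal_conj [DecidableEq m] {A : Matrix m m ℝ}
    (hA : A.IsHermitian) {W : Matrix m m ℝ} (hW : Wᵀ * W = 1) {d : m → ℝ}
    (h : A = W * diagonal d * Wᵀ) : univ.val.map hA.eigenvalues = univ.val.map d := by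
  have hroots := hA.roots_charpoly_eq_eigenvalues
  have hchar : A.charpoly = (diagonal d).charpoly := by
    rw [h, charpoly_mul_comm, ← mul_assoc, hW, one_mul]
  rw [hchar, charpoly_diagonal, Polynomial.roots_prod] at hroots
  · simpa using hroots.symm
  · simp [prod_ne_zero_iff, Polynomial.X_sub_C_ne_zero]

end Matrix

theorem statement1_general (L d0 dL r : ℕ) (hL : 2 ≤ L)
    (U1 : Matrix (Fin dL) (Fin r) ℝ) (V1 : Matrix (Fin d0) (Fin r) ℝ)
    (hU1 : U1ᵀ * U1 = 1) (hV1 : V1ᵀ * V1 = 1)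
    (μ : ℝ) (hμ : 0 < μ)
    (G : Matrix (Fin dL × Fin d0) (Fin dL × Fin d0) ℝ)
    (hGdef : G = μ ^ (2 * (L - 1)) •
      ((U1 * U1ᵀ) ⊗ₖ (1 : Matrix (Fin d0) (Fin d0) ℝ) +
        (1 : Matrix (Fin dL) (Fin dL) ℝ) ⊗ₖ (V1 * V1ᵀ) +
        ((L : ℝ) - 2) • ((U1 * U1ᵀ) ⊗ₖ (V1 * V1ᵀ))))
    (hG : G.IsHermitian) :
    Finset.univ.val.map hG.eigenvalues =
        Multiset.replicate (r * r) ((L : ℝ) * μ ^ (2 * (L - 1))) +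
        Multiset.replicate ((d0 + dL - 2 * r) * r) (μ ^ (2 * (L - 1))) +
        Multiset.replicate ((dL - r) * (d0 - r)) (0 : ℝ) ∧
    (L : ℝ) * μ ^ (2 * (L - 1)) ≠ μ ^ (2 * (L - 1)) ∧
    μ ^ (2 * (L - 1)) ≠ 0 := by
  obtain ⟨U, p, hU, hUp, hp⟩ := exists_orthogonal_conj_diagonal_of_transpose_mul_self_eq_one hU1
  obtain ⟨V, q, hV, hVq, hq⟩ := exists_orthogonal_conj_diagonal_of_transpose_mul_self_eq_one hV1
  have hrdL := card_le_card_of_transpose_mul_self_eq_one hU1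
  have hrd0 := card_le_card_of_transpose_mul_self_eq_one hV1
  simp only [Fintype.card_fin] at hp hq hrdL hrd0
  set c := μ ^ (2 * (L - 1))
  have hc : c ≠ 0 := (pow_pos hμ _).ne'
  have hLc : (L : ℝ) * c ≠ c := by
    rw [Ne, mul_eq_right₀ hc]
    exact_mod_cast (by omega : L ≠ 1)
  refine ⟨?_, hLc, hc⟩
  have hW : (U ⊗ₖ V)ᵀ * (U ⊗ₖ V) = 1 := by
    rw [← kroneckerMap_transpose, ← mul_kronecker_mul, hU, hV, one_kronecker_one]
  rw [hUp, hVq, smul_kroneckerSum_add_smul_kronecker_eq_conj_diagonal hU hV] at hGdef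
  rw [hG.map_eigenvalues_eq_of_orthogonal_conj hW hGdef,
    univ_val_map_prodMap p q fun st => c * (st.1 + st.2 + ((L : ℝ) - 2) * (st.1 * st.2)), hp, hq,
    Multiset.map_replicate_add_product_replicate_add,
    show (d0 + dL - 2 * r) * r = r * (d0 - r) + (dL - r) * r by
      rw [show d0 + dL - 2 * r = (d0 - r) + (dL - r) by omega]; ring,
    Multiset.replicate_add]
  dsimp only
  rw [show c * (1 + 1 + ((L : ℝ) - 2) * (1 * 1)) = L * c by ring]
  simp [add_assoc]

/-- Under uniform spectral initialization with common singular value `μ > 0`,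
the Gram matrix `G = μ^{2(L−1)} (U₁U₁ᵀ ⊗ I_{d₀} + I_{d_L} ⊗ V₁V₁ᵀ + (L−2) U₁U₁ᵀ ⊗ V₁V₁ᵀ)`
of the outer-product Hessian of a depth-`L` deep linear network has exactly two distinct
nonzero eigenvalues: `L μ^{2(L−1)}` with multiplicity `r²` and `μ^{2(L−1)}` with
multiplicity `(d₀ + d_L − 2r)r`; the eigenvalue `0` has multiplicity `(d_L − r)(d₀ − r)`. -/
theorem statement1 (L d0 dL r : ℕ) (hL : 2 ≤ L) (hd0 : 1 ≤ d0) (hdL : 1 ≤ dL)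
    (hr1 : 1 ≤ r) (hr : r ≤ min d0 dL)
    (U1 : Matrix (Fin dL) (Fin r) ℝ) (V1 : Matrix (Fin d0) (Fin r) ℝ)
    (hU1 : U1ᵀ * U1 = 1) (hV1 : V1ᵀ * V1 = 1)
    (μ : ℝ) (hμ : 0 < μ)
    (G : Matrix (Fin dL × Fin d0) (Fin dL × Fin d0) ℝ)
    (hGdef : G = μ ^ (2 * (L - 1)) •
      ((U1 * U1ᵀ) ⊗ₖ (1 : Matrix (Fin d0) (Fin d0) ℝ) +
        (1 : Matrix (Fin dL) (Fin dL) ℝ) ⊗ₖ (V1 * V1ᵀ) +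
        ((L : ℝ) - 2) • ((U1 * U1ᵀ) ⊗ₖ (V1 * V1ᵀ))))
    (hG : G.IsHermitian) :
    Finset.univ.val.map hG.eigenvalues =
        Multiset.replicate (r * r) ((L : ℝ) * μ ^ (2 * (L - 1))) +
        Multiset.replicate ((d0 + dL - 2 * r) * r) (μ ^ (2 * (L - 1))) +
        Multiset.replicate ((dL - r) * (d0 - r)) (0 : ℝ) ∧
    (L : ℝ) * μ ^ (2 * (L - 1)) ≠ μ ^ (2 * (L - 1)) ∧
    μ ^ (2 * (L - 1)) ≠ 0 :=
  statement1_general L d0 dL r hL U1 V1 hU1 hV1 μ hμ G hGdef hG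
end

section
/- Let L ≥ 2, d_0 ≥ 1, d_L ≥ 1, and 1 ≤ r ≤ min{d_0, d_L}. Let U₁ ∈ ℝ^{d_L×r} and V₁ ∈ ℝ^{d_0×r} have orthonormal columns, let λ₁, …, λ_r > 0, and for l ∈ {1,…,L} set Λ_U^{(l)} = diag(λ₁^{2(L−l)}, …, λ_r^{2(L−l)}) and Λ_V^{(l)} = diag(λ₁^{2(l−1)}, …, λ_r^{2(l−1)}). Define G = U₁Λ_U^{(1)}U₁ᵀ ⊗ I_{d_0} + I_{d_L} ⊗ V₁Λ_V^{(L)}V₁ᵀ + Σ_{l=2}^{L−1} U₁Λ_U^{(l)}U₁ᵀ ⊗ V₁Λ_V^{(l)}V₁ᵀ. Then the multiset of eigenvalues of G (with multiplicity) consists of: ν_{i,j} := Σ_{l=1}^{L} λ_i^{2(L−l)} λ_j^{2(l−1)} for each pair 1 ≤ i, j ≤ r; the value λ_i^{2(L−1)} with multiplicity d_0 − r for each 1 ≤ i ≤ r; the value λ_j^{2(L−1)} with multiplicity d_L − r for each 1 ≤ j ≤ r; and 0 with multiplicity (d_L − r)(d_0 − r). In particular G has exactly (d_0 + d_L − r)r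 nonzero eigenvalues. -/
/-!
Complete the orthonormal columns of `U₁` and `V₁` to orthogonal matrices `P = [U₁ W]` and
`Q = [V₁ W']`, with columns indexed by `Fin r ⊕ Fin (d - r)`. Then `U₁ Λ U₁ᵀ = P diag(Λ, 0) Pᵀ`
and `I = Q Qᵀ`, so `G = (P ⊗ Q) D (P ⊗ Q)ᵀ` for a diagonal `D` (`gramSpectrum`), and `G` has the
diagonal entries of `D` as eigenvalues since both matrices have the same characteristic polynomial.
On each of the four blocks `inl/inr × inl/inr` the entry of `D` is `ν_{ij}`, `λ_i^{2(L-1)}`,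
`λ_j^{2(L-1)}` or `0` respectively; the first three are positive.
-/

open Matrix
open scoped Kronecker

namespace Matrix

variable {R 𝕜 : Type*} {l m n k : Type*}

theorem fromCols_mul_diagonal_sumElim_zero_mul_transpose [CommSemiring R] [Fintype m] [Fintype k]
    [DecidableEq m] [DecidableEq k] (U : Matrix n m R) (W : Matrix n k R) (μ : m → R) :
    fromCols U W * diagonal (Sum.elim μ (0 : k → R)) * (fromCols U W)ᵀ = U * diagonal μ * Uᵀ := by
  ext i j
  simp [mul_apply, diagonal_apply, Fintype.sum_sum_type]

theorem mul_mul_transpose_kronecker_mul_mul_transpose [CommSemiring R] [Fintype n] {m' n' : Type*}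
    [Fintype n'] (P : Matrix l n R) (A : Matrix n n R) (Q : Matrix m' n' R) (B : Matrix n' n' R) :
    (P * A * Pᵀ) ⊗ₖ (Q * B * Qᵀ) = (P ⊗ₖ Q) * (A ⊗ₖ B) * (P ⊗ₖ Q)ᵀ := by
  rw [← kroneckerMap_transpose, mul_kronecker_mul, mul_kronecker_mul]

theorem exists_fromCols_conjTranspose_mul_self_eq_one [RCLike 𝕜] [Fintype m] [Fintype n] [Fintype k]
    [DecidableEq m] [DecidableEq k] (hcard : Fintype.card (m ⊕ k) = Fintype.card n)
    (U : Matrix n m 𝕜) (hU : Uᴴ * U = 1) :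
    ∃ W : Matrix n k 𝕜, (fromCols U W)ᴴ * fromCols U W = 1 := by
  let v : m ⊕ k → EuclideanSpace 𝕜 n := Sum.elim (fun j => WithLp.toLp 2 fun i => U i j) 0
  have hv : Orthonormal 𝕜 ((Set.range Sum.inl).domRestrict v) := by
    rw [orthonormal_iff_ite]
    rintro ⟨_, j, rfl⟩ ⟨_, j', rfl⟩
    simpa [v, mul_apply, one_apply, PiLp.inner_apply, mul_comm, Set.domRestrict, Subtype.ext_iff]
      using congrFun (congrFun hU j) j'
  obtain ⟨b, hb⟩ := hv.exists_orthonormalBasis_extension_of_card_eq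
    (by rw [hcard, finrank_euclideanSpace])
  refine ⟨of fun i j => b (Sum.inr j) i, ?_⟩
  have hP : fromCols U (of fun i j => b (Sum.inr j) i) = of fun i j => b j i := by
    ext i (j | j)
    · simp [hb _ (Set.mem_range_self j), v]
    · simp
  ext j j'
  simpa [hP, mul_apply, one_apply, PiLp.inner_apply, mul_comm]
    using orthonormal_iff_ite.mp b.orthonormal j j'

theorem IsHermitian.map_eigenvalues_eq_of_conj_diagonal [RCLike 𝕜] [Fintype m] [Fintype n]
    [DecidableEq m] [DecidableEq n] {A : Matrix n n 𝕜} (hA : A.IsHermitian) {P : Matrix n m 𝕜}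
    (hP : Pᴴ * P = 1) (hcard : Fintype.card m = Fintype.card n) {d : m → ℝ}
    (hAP : A = P * diagonal (fun i => (d i : 𝕜)) * Pᴴ) :
    Finset.univ.val.map hA.eigenvalues = Finset.univ.val.map d := by
  have hchar : A.charpoly = (diagonal fun i => (d i : 𝕜)).charpoly := by
    have h := charpoly_mul_comm' P (diagonal (fun i => (d i : 𝕜)) * Pᴴ)
    rw [hcard, Matrix.mul_assoc _ Pᴴ, hP, Matrix.mul_one, ← Matrix.mul_assoc, ← hAP] at h
    exact (Polynomial.isRegular_X_pow _).left h
  have hroots := hA.roots_charpoly_eq_eigenvalues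
  rw [hchar, charpoly_diagonal, Polynomial.roots_prod _ _
    (by simp [Finset.prod_ne_zero_iff, Polynomial.X_sub_C_ne_zero])] at hroots
  refine Multiset.map_injective (RCLike.ofReal_injective (K := 𝕜)) ?_
  simpa [Multiset.map_map] using hroots.symm

end Matrix

namespace Finset

variable {α β γ δ M : Type*} [Fintype α] [Fintype β] [Fintype γ] [Fintype δ]

theorem univ_val_map_sum (f : α ⊕ β → M) :
    univ.val.map f = univ.val.map (f ∘ Sum.inl) + univ.val.map (f ∘ Sum.inr) := by
  rw [← univ_disjSum_univ, val_disjSum, Multiset.map_disjSum]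
  rfl

theorem univ_val_map_sum_prod_sum (f : (α ⊕ β) × (γ ⊕ δ) → M) :
    univ.val.map f =
      univ.val.map (fun p : α × γ => f (.inl p.1, .inl p.2)) +
        univ.val.map (fun p : α × δ => f (.inl p.1, .inr p.2)) +
        univ.val.map (fun p : β × γ => f (.inr p.1, .inl p.2)) +
        univ.val.map (fun p : β × δ => f (.inr p.1, .inr p.2)) := by
  let e := (Equiv.sumProdDistrib _ _ _).trans
    (Equiv.sumCongr (Equiv.prodSumDistrib α γ δ) (Equiv.prodSumDistrib β γ δ))
  rw [← Multiset.map_univ_val_equiv e.symm, Multiset.map_map, univ_val_map_sum,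
    univ_val_map_sum, univ_val_map_sum]
  simp only [add_assoc]
  rfl

theorem univ_val_map_fst (g : α → M) :
    univ.val.map (fun p : α × β => g p.1) =
      univ.val.bind fun a => Multiset.replicate (Fintype.card β) (g a) := by
  rw [← univ_product_univ, product_val]
  simp [SProd.sprod, Multiset.product, Multiset.map_bind, Multiset.map_map]

theorem univ_val_map_snd (g : β → M) :
    univ.val.map (fun p : α × β => g p.2) =
      univ.val.bind fun b => Multiset.replicate (Fintype.card α) (g b) := by
  rw [← univ_val_map_fst, ← Multiset.map_univ_val_equiv (Equiv.prodComm β α), Multiset.map_map]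
  rfl

end Finset

section GramSpectrum

variable {ι α β : Type*}

def gramSpectrum (L : ℕ) (lam : ι → ℝ) (p : (ι ⊕ α) × (ι ⊕ β)) : ℝ :=
  Sum.elim (fun i => lam i ^ (2 * (L - 1))) 0 p.1 +
    Sum.elim (fun j => lam j ^ (2 * (L - 1))) 0 p.2 +
    ∑ l ∈ Finset.Icc 2 (L - 1),
      Sum.elim (fun i => lam i ^ (2 * (L - l))) 0 p.1 *
        Sum.elim (fun j => lam j ^ (2 * (l - 1))) 0 p.2

variable {L : ℕ} (lam : ι → ℝ)

theorem gram_eq_kronecker_conj_gramSpectrum [Fintype ι] [Fintype α] [Fintype β] [DecidableEq ι]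
    [DecidableEq α] [DecidableEq β] {m n : Type*} [DecidableEq m] [DecidableEq n]
    (U : Matrix m ι ℝ) (W : Matrix m α ℝ) (V : Matrix n ι ℝ) (W' : Matrix n β ℝ)
    (hP : fromCols U W * (fromCols U W)ᵀ = 1) (hQ : fromCols V W' * (fromCols V W')ᵀ = 1) :
    (U * diagonal (fun i => lam i ^ (2 * (L - 1))) * Uᵀ) ⊗ₖ (1 : Matrix n n ℝ) +
        (1 : Matrix m m ℝ) ⊗ₖ (V * diagonal (fun i => lam i ^ (2 * (L - 1))) * Vᵀ) +
        ∑ l ∈ Finset.Icc 2 (L - 1),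
          (U * diagonal (fun i => lam i ^ (2 * (L - l))) * Uᵀ) ⊗ₖ
            (V * diagonal (fun i => lam i ^ (2 * (l - 1))) * Vᵀ) =
      (fromCols U W ⊗ₖ fromCols V W') * diagonal (gramSpectrum (α := α) (β := β) L lam) *
        (fromCols U W ⊗ₖ fromCols V W')ᵀ := by
  have hdiag : diagonal (gramSpectrum (α := α) (β := β) L lam) =
      diagonal (Sum.elim (fun i => lam i ^ (2 * (L - 1))) (0 : α → ℝ)) ⊗ₖ
          (1 : Matrix (ι ⊕ β) (ι ⊕ β) ℝ) +
        1 ⊗ₖ diagonal (Sum.elim (fun i => lam i ^ (2 * (L - 1))) (0 : β → ℝ)) +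
        ∑ l ∈ Finset.Icc 2 (L - 1),
          diagonal (Sum.elim (fun i => lam i ^ (2 * (L - l))) (0 : α → ℝ)) ⊗ₖ
            diagonal (Sum.elim (fun i => lam i ^ (2 * (l - 1))) (0 : β → ℝ)) := by
    have hsum : ∀ f : ℕ → (ι ⊕ α) × (ι ⊕ β) → ℝ, ∑ l ∈ Finset.Icc 2 (L - 1), diagonal (f l) =
        diagonal (∑ l ∈ Finset.Icc 2 (L - 1), f l) :=
      fun f => (map_sum (diagonalAddMonoidHom _ ℝ) f _).symm
    simp only [← diagonal_one, diagonal_kronecker_diagonal, hsum, diagonal_add]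
    congr 1
    funext p
    simp [gramSpectrum, Finset.sum_apply]
  rw [hdiag, Matrix.mul_add, Matrix.mul_add, Matrix.add_mul, Matrix.add_mul, Matrix.mul_sum,
    Matrix.sum_mul]
  simp only [← mul_mul_transpose_kronecker_mul_mul_transpose, Matrix.mul_one, hP, hQ,
    fromCols_mul_diagonal_sumElim_zero_mul_transpose]

theorem gramSpectrum_inl_inl (hL : 2 ≤ L) (i j : ι) :
    gramSpectrum (α := α) (β := β) L lam (.inl i, .inl j) =
      ∑ l ∈ Finset.Icc 1 L, lam i ^ (2 * (L - l)) * lam j ^ (2 * (l - 1)) := by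
  have hIcc : Finset.Icc 1 L = insert 1 (insert L (Finset.Icc 2 (L - 1))) := by
    ext; simp only [Finset.mem_Icc, Finset.mem_insert]; omega
  rw [hIcc, Finset.sum_insert (by simp; omega), Finset.sum_insert (by simp; omega)]
  simp [gramSpectrum]
  ring

@[simp]
theorem gramSpectrum_inl_inr (i : ι) (b : β) :
    gramSpectrum (α := α) L lam (.inl i, .inr b) = lam i ^ (2 * (L - 1)) := by
  simp [gramSpectrum]

@[simp]
theorem gramSpectrum_inr_inl (a : α) (j : ι) :
    gramSpectrum (β := β) L lam (.inr a, .inl j) = lam j ^ (2 * (L - 1)) := by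
  simp [gramSpectrum]

@[simp]
theorem gramSpectrum_inr_inr (a : α) (b : β) : gramSpectrum L lam (.inr a, .inr b) = 0 := by
  simp [gramSpectrum]

theorem univ_val_map_gramSpectrum [Fintype ι] [Fintype α] [Fintype β] (hL : 2 ≤ L) :
    Finset.univ.val.map (gramSpectrum (α := α) (β := β) L lam) =
      (Finset.univ.val.map fun p : ι × ι =>
          ∑ l ∈ Finset.Icc 1 L, lam p.1 ^ (2 * (L - l)) * lam p.2 ^ (2 * (l - 1))) +
        (Finset.univ.val.bind fun i =>
          Multiset.replicate (Fintype.card β) (lam i ^ (2 * (L - 1)))) +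
        (Finset.univ.val.bind fun j =>
          Multiset.replicate (Fintype.card α) (lam j ^ (2 * (L - 1)))) +
        Multiset.replicate (Fintype.card α * Fintype.card β) 0 := by
  rw [Finset.univ_val_map_sum_prod_sum]
  simp only [gramSpectrum_inl_inl lam hL, gramSpectrum_inl_inr, gramSpectrum_inr_inl,
    gramSpectrum_inr_inr, Multiset.map_const', Finset.card_val, Finset.card_univ,
    Fintype.card_prod]
  rw [Finset.univ_val_map_fst (fun i => lam i ^ (2 * (L - 1))),
    Finset.univ_val_map_snd (fun j => lam j ^ (2 * (L - 1)))]

theorem card_filter_ne_zero_univ_val_map_gramSpectrum [Fintype ι] [Fintype α] [Fintype β]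
    (hL : 2 ≤ L) (hlam : ∀ i, 0 < lam i) :
    ((Finset.univ.val.map (gramSpectrum (α := α) (β := β) L lam)).filter (· ≠ 0)).card =
      Fintype.card ι * (Fintype.card ι + Fintype.card β + Fintype.card α) := by
  rw [univ_val_map_gramSpectrum lam hL]
  have hpow : ∀ i k, lam i ^ k ≠ 0 := fun i k => (pow_pos (hlam i) k).ne'
  have hnu : ∀ i j, ∑ l ∈ Finset.Icc 1 L, lam i ^ (2 * (L - l)) * lam j ^ (2 * (l - 1)) ≠ 0 :=
    fun i j => (Finset.sum_pos (fun l _ => mul_pos (pow_pos (hlam i) _) (pow_pos (hlam j) _))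
      ⟨1, by simp; omega⟩).ne'
  simp only [Multiset.filter_add]
  rw [Multiset.filter_eq_self.mpr (Multiset.forall_mem_map_iff.mpr fun p _ => hnu p.1 p.2),
    Multiset.filter_eq_self.mpr (by simp +contextual [Multiset.mem_replicate, hpow]),
    Multiset.filter_eq_self.mpr (by simp +contextual [Multiset.mem_replicate, hpow]),
    Multiset.filter_eq_nil.mpr (by simp +contextual [Multiset.mem_replicate])]
  simp [Multiset.card_bind]
  ring

end GramSpectrum

theorem statement2_general (L d0 dL r : ℕ) (hL : 2 ≤ L) (hr : r ≤ min d0 dL)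
    (U1 : Matrix (Fin dL) (Fin r) ℝ) (V1 : Matrix (Fin d0) (Fin r) ℝ)
    (hU1 : U1ᵀ * U1 = 1) (hV1 : V1ᵀ * V1 = 1)
    (lam : Fin r → ℝ) (hlam : ∀ i, 0 < lam i)
    (G : Matrix (Fin dL × Fin d0) (Fin dL × Fin d0) ℝ)
    (hGdef : G =
      (U1 * Matrix.diagonal (fun i => lam i ^ (2 * (L - 1))) * U1ᵀ) ⊗ₖ
          (1 : Matrix (Fin d0) (Fin d0) ℝ) +
        (1 : Matrix (Fin dL) (Fin dL) ℝ) ⊗ₖ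
          (V1 * Matrix.diagonal (fun i => lam i ^ (2 * (L - 1))) * V1ᵀ) +
        ∑ l ∈ Finset.Icc 2 (L - 1),
          (U1 * Matrix.diagonal (fun i => lam i ^ (2 * (L - l))) * U1ᵀ) ⊗ₖ
            (V1 * Matrix.diagonal (fun i => lam i ^ (2 * (l - 1))) * V1ᵀ))
    (hG : G.IsHermitian) :
    Finset.univ.val.map hG.eigenvalues =
        (Finset.univ.val.map fun p : Fin r × Fin r =>
          ∑ l ∈ Finset.Icc 1 L, lam p.1 ^ (2 * (L - l)) * lam p.2 ^ (2 * (l - 1))) +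
        (Finset.univ.val.bind fun i : Fin r =>
          Multiset.replicate (d0 - r) (lam i ^ (2 * (L - 1)))) +
        (Finset.univ.val.bind fun j : Fin r =>
          Multiset.replicate (dL - r) (lam j ^ (2 * (L - 1)))) +
        Multiset.replicate ((dL - r) * (d0 - r)) (0 : ℝ) ∧
    ((Finset.univ.val.map hG.eigenvalues).filter fun x => x ≠ 0).card =
        (d0 + dL - r) * r := by
  have hcardU : Fintype.card (Fin r ⊕ Fin (dL - r)) = Fintype.card (Fin dL) := by
    simp [Nat.add_sub_cancel' (hr.trans (min_le_right _ _))]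
  have hcardV : Fintype.card (Fin r ⊕ Fin (d0 - r)) = Fintype.card (Fin d0) := by
    simp [Nat.add_sub_cancel' (hr.trans (min_le_left _ _))]
  obtain ⟨W, hW⟩ := exists_fromCols_conjTranspose_mul_self_eq_one hcardU U1
    (by rwa [conjTranspose_eq_transpose_of_trivial])
  obtain ⟨W', hW'⟩ := exists_fromCols_conjTranspose_mul_self_eq_one hcardV V1
    (by rwa [conjTranspose_eq_transpose_of_trivial])
  rw [conjTranspose_eq_transpose_of_trivial] at hW hW'
  have hPQ : (fromCols U1 W ⊗ₖ fromCols V1 W')ᴴ * (fromCols U1 W ⊗ₖ fromCols V1 W') = 1 := by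
    rw [conjTranspose_eq_transpose_of_trivial, ← kroneckerMap_transpose, ← mul_kronecker_mul, hW,
      hW', one_kronecker_one]
  have heig := hG.map_eigenvalues_eq_of_conj_diagonal hPQ
    (by simp only [Fintype.card_prod, hcardU, hcardV]) (d := gramSpectrum L lam)
    (hGdef.trans (gram_eq_kronecker_conj_gramSpectrum lam U1 W V1 W'
      ((mul_eq_one_comm_of_card_eq _ _ _ hcardU).mp hW)
      ((mul_eq_one_comm_of_card_eq _ _ _ hcardV).mp hW')))
  have hspec := univ_val_map_gramSpectrum (α := Fin (dL - r)) (β := Fin (d0 - r)) lam hL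
  simp only [Fintype.card_fin] at hspec
  refine ⟨heig.trans hspec, ?_⟩
  rw [heig, card_filter_ne_zero_univ_val_map_gramSpectrum lam hL hlam]
  simp only [Fintype.card_fin]
  rw [mul_comm]
  congr 1
  omega

/-- The Gram matrix
`G = U₁Λ_U⁽¹⁾U₁ᵀ ⊗ I_{d₀} + I_{d_L} ⊗ V₁Λ_V⁽ᴸ⁾V₁ᵀ + Σ_{l=2}^{L−1} U₁Λ_U⁽ˡ⁾U₁ᵀ ⊗ V₁Λ_V⁽ˡ⁾V₁ᵀ`
(where `Λ_U⁽ˡ⁾ = diag(λᵢ^{2(L−l)})`, `Λ_V⁽ˡ⁾ = diag(λᵢ^{2(l−1)})`) has eigenvalue multiset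
consisting of `ν_{i,j} = Σ_{l=1}^{L} λᵢ^{2(L−l)} λⱼ^{2(l−1)}` for `1 ≤ i, j ≤ r`, the value
`λᵢ^{2(L−1)}` with multiplicity `d₀ − r` for each `i ≤ r` and multiplicity `d_L − r` for each
`j ≤ r`, and `0` with multiplicity `(d_L − r)(d₀ − r)`; in particular it has exactly
`(d₀ + d_L − r)r` nonzero eigenvalues. -/
theorem statement2 (L d0 dL r : ℕ) (hL : 2 ≤ L) (hd0 : 1 ≤ d0) (hdL : 1 ≤ dL)
    (hr1 : 1 ≤ r) (hr : r ≤ min d0 dL)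
    (U1 : Matrix (Fin dL) (Fin r) ℝ) (V1 : Matrix (Fin d0) (Fin r) ℝ)
    (hU1 : U1ᵀ * U1 = 1) (hV1 : V1ᵀ * V1 = 1)
    (lam : Fin r → ℝ) (hlam : ∀ i, 0 < lam i)
    (G : Matrix (Fin dL × Fin d0) (Fin dL × Fin d0) ℝ)
    (hGdef : G =
      (U1 * Matrix.diagonal (fun i => lam i ^ (2 * (L - 1))) * U1ᵀ) ⊗ₖ
          (1 : Matrix (Fin d0) (Fin d0) ℝ) +
        (1 : Matrix (Fin dL) (Fin dL) ℝ) ⊗ₖ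
          (V1 * Matrix.diagonal (fun i => lam i ^ (2 * (L - 1))) * V1ᵀ) +
        ∑ l ∈ Finset.Icc 2 (L - 1),
          (U1 * Matrix.diagonal (fun i => lam i ^ (2 * (L - l))) * U1ᵀ) ⊗ₖ
            (V1 * Matrix.diagonal (fun i => lam i ^ (2 * (l - 1))) * V1ᵀ))
    (hG : G.IsHermitian) :
    Finset.univ.val.map hG.eigenvalues =
        (Finset.univ.val.map fun p : Fin r × Fin r =>
          ∑ l ∈ Finset.Icc 1 L, lam p.1 ^ (2 * (L - l)) * lam p.2 ^ (2 * (l - 1))) +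
        (Finset.univ.val.bind fun i : Fin r =>
          Multiset.replicate (d0 - r) (lam i ^ (2 * (L - 1)))) +
        (Finset.univ.val.bind fun j : Fin r =>
          Multiset.replicate (dL - r) (lam j ^ (2 * (L - 1)))) +
        Multiset.replicate ((dL - r) * (d0 - r)) (0 : ℝ) ∧
    ((Finset.univ.val.map hG.eigenvalues).filter fun x => x ≠ 0).card =
        (d0 + dL - r) * r :=
  statement2_general L d0 dL r hL hr U1 V1 hU1 hV1 lam hlam G hGdef hG
end

section
/- Let L ≥ 2, d_0 ≥ 1, d_L ≥ 1, and 1 ≤ r ≤ min{d_0, d_L}. Let u₁, …, u_{d_L} be an orthonormal basis of ℝ^{d_L} and v₁, …, v_{d_0} an orthonormal basis of ℝ^{d_0}; let U₁ be the matrix with columns u₁, …, u_r and V₁ the matrix with columns v₁, …, v_r. Let λ₁, …, λ_r > 0 and define G as in the general Gram-matrix construction. Then for every i ∈ {1,…,d_L} and j ∈ {1,…,d_0}, the vector u_i ⊗ v_j is an eigenvector of G with eigenvalue: Σ_{l=1}^{L} λ_i^{2(L−l)} λ_j^{2(l−1)} if i ≤ r and j ≤ r; λ_i^{2(L−1)}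 if i ≤ r and j > r; λ_j^{2(L−1)} if i > r and j ≤ r; and 0 if i > r and j > r. -/
open Matrix
open scoped Kronecker

lemma sumMulVec {m n : Type*} [Fintype m] [Fintype n] {ι : Type*} (s : Finset ι)
    (M : ι → Matrix m n ℝ) (v : n → ℝ) :
    (∑ l ∈ s, M l).mulVec v = ∑ l ∈ s, (M l).mulVec v := by
  induction s using Finset.cons_induction with
  | empty => simp [Matrix.mulVec]
  | cons a s ha ih => simp [Finset.sum_cons, Matrix.add_mulVec, ih]

lemma kronMulVec {m n : Type*} [Fintype m] [Fintype n] (A : Matrix m m ℝ) (B : Matrix n n ℝ)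
    (x : m → ℝ) (y : n → ℝ) :
    (A ⊗ₖ B).mulVec (fun p => x p.1 * y p.2) =
      fun p => A.mulVec x p.1 * B.mulVec y p.2 := by
  funext p
  simp only [Matrix.mulVec, dotProduct, Fintype.sum_prod_type,
    Matrix.kroneckerMap_apply]
  rw [Finset.sum_mul_sum]
  exact Finset.sum_congr rfl fun a _ => Finset.sum_congr rfl fun b _ => by ring

lemma colProj {n r : ℕ} (hrn : r ≤ n) (U : Matrix (Fin n) (Fin n) ℝ) (hU : Uᵀ * U = 1)
    (d : Fin r → ℝ) (i : Fin n) :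
    (U.submatrix id (Fin.castLE hrn) * Matrix.diagonal d *
        (U.submatrix id (Fin.castLE hrn))ᵀ).mulVec (fun p => U p i) =
      (if h : (i : ℕ) < r then d ⟨i, h⟩ else 0) • fun p => U p i := by
  have hw : ((U.submatrix id (Fin.castLE hrn))ᵀ).mulVec (fun p => U p i) =
      fun k => if (Fin.castLE hrn k) = i then (1:ℝ) else 0 := by
    funext k
    have : (Uᵀ * U) (Fin.castLE hrn k) i = (1 : Matrix (Fin n) (Fin n) ℝ) (Fin.castLE hrn k) i := by
      rw [hU]
    simpa [Matrix.mulVec, dotProduct, Matrix.mul_apply, Matrix.one_apply,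
      Matrix.transpose_apply, Matrix.submatrix_apply] using this
  rw [← Matrix.mulVec_mulVec, ← Matrix.mulVec_mulVec, hw]
  have inner : ∀ k : Fin r, (∑ x : Fin r, Matrix.diagonal d k x *
      if Fin.castLE hrn x = i then (1:ℝ) else 0) =
      d k * (if Fin.castLE hrn k = i then (1:ℝ) else 0) := by
    intro k
    rw [Finset.sum_eq_single k]
    · simp [Matrix.diagonal_apply]
    · intro x _ hx; simp [Matrix.diagonal_apply, Ne.symm hx]
    · intro h; exact absurd (Finset.mem_univ _) h
  funext p
  simp only [Matrix.mulVec, dotProduct, Pi.smul_apply, smul_eq_mul,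
    Matrix.submatrix_apply, id, inner]
  by_cases h : (i : ℕ) < r
  · rw [dif_pos h, Finset.sum_eq_single ⟨i, h⟩]
    · have hc : Fin.castLE hrn ⟨(i:ℕ), h⟩ = i := Fin.ext rfl
      rw [hc, if_pos rfl]; ring
    · intro k _ hk
      rw [if_neg, mul_zero, mul_zero]
      intro hc
      exact hk (Fin.ext (by simpa using congrArg Fin.val hc))
    · intro h'; exact absurd (Finset.mem_univ _) h'
  · rw [dif_neg h, zero_mul]
    apply Finset.sum_eq_zero
    intro k _
    rw [if_neg, mul_zero, mul_zero]
    intro hc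
    exact h (by have := congrArg Fin.val hc; simp at this; omega)

lemma gramKey (L d0 dL r : ℕ)
    (hr : r ≤ min d0 dL)
    (U : Matrix (Fin dL) (Fin dL) ℝ) (V : Matrix (Fin d0) (Fin d0) ℝ)
    (hU : Uᵀ * U = 1) (hV : Vᵀ * V = 1)
    (lam : Fin r → ℝ)
    (G : Matrix (Fin dL × Fin d0) (Fin dL × Fin d0) ℝ)
    (i : Fin dL) (j : Fin d0)
    (hGdef : G =
      (U.submatrix id (Fin.castLE (hr.trans (min_le_right d0 dL))) *
          Matrix.diagonal (fun i => lam i ^ (2 * (L - 1))) *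
          (U.submatrix id (Fin.castLE (hr.trans (min_le_right d0 dL))))ᵀ) ⊗ₖ
          (1 : Matrix (Fin d0) (Fin d0) ℝ) +
        (1 : Matrix (Fin dL) (Fin dL) ℝ) ⊗ₖ
          (V.submatrix id (Fin.castLE (hr.trans (min_le_left d0 dL))) *
            Matrix.diagonal (fun i => lam i ^ (2 * (L - 1))) *
            (V.submatrix id (Fin.castLE (hr.trans (min_le_left d0 dL))))ᵀ) +
        ∑ l ∈ Finset.Icc 2 (L - 1),
          (U.submatrix id (Fin.castLE (hr.trans (min_le_right d0 dL))) *
              Matrix.diagonal (fun i => lam i ^ (2 * (L - l))) *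
              (U.submatrix id (Fin.castLE (hr.trans (min_le_right d0 dL))))ᵀ) ⊗ₖ
            (V.submatrix id (Fin.castLE (hr.trans (min_le_left d0 dL))) *
              Matrix.diagonal (fun i => lam i ^ (2 * (l - 1))) *
              (V.submatrix id (Fin.castLE (hr.trans (min_le_left d0 dL))))ᵀ)) :
    G.mulVec (fun p => U p.1 i * V p.2 j) =
      ((if h : (i:ℕ) < r then lam ⟨i,h⟩ ^ (2*(L-1)) else 0)
       + (if h : (j:ℕ) < r then lam ⟨j,h⟩ ^ (2*(L-1)) else 0)
       + ∑ l ∈ Finset.Icc 2 (L-1),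
           (if h : (i:ℕ) < r then lam ⟨i,h⟩ ^ (2*(L-l)) else 0) *
           (if h : (j:ℕ) < r then lam ⟨j,h⟩ ^ (2*(l-1)) else 0)) •
        (fun p => U p.1 i * V p.2 j) := by
  subst hGdef
  rw [Matrix.add_mulVec, Matrix.add_mulVec, sumMulVec,
    kronMulVec _ _ (fun a => U a i) (fun b => V b j),
    kronMulVec _ _ (fun a => U a i) (fun b => V b j),
    Finset.sum_congr rfl (fun l _ => kronMulVec _ _ (fun a => U a i) (fun b => V b j))]
  simp only [colProj _ U hU, colProj _ V hV, Matrix.one_mulVec]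
  funext p
  simp only [Pi.add_apply, Finset.sum_apply, Pi.smul_apply, smul_eq_mul]
  rw [add_mul, add_mul, Finset.sum_mul]
  congr 1
  · ring
  · exact Finset.sum_congr rfl fun l _ => by ring

/-- Let `u₁,…,u_{d_L}` and `v₁,…,v_{d₀}` be orthonormal bases (the columns
of orthogonal matrices `U` and `V`), let `U₁`, `V₁` consist of their first `r` columns, and
let `G` be the general Gram matrix of the outer-product Hessian. Then every `u_i ⊗ v_j` is an
eigenvector of `G`, with eigenvalue `Σ_{l=1}^{L} λᵢ^{2(L−l)} λⱼ^{2(l−1)}` if `i ≤ r, j ≤ r`;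
`λᵢ^{2(L−1)}` if `i ≤ r < j`; `λⱼ^{2(L−1)}` if `j ≤ r < i`; and `0` if `i, j > r`. -/
theorem statement4 (L d0 dL r : ℕ) (hL : 2 ≤ L) (hd0 : 1 ≤ d0) (hdL : 1 ≤ dL)
    (hr1 : 1 ≤ r) (hr : r ≤ min d0 dL)
    (U : Matrix (Fin dL) (Fin dL) ℝ) (V : Matrix (Fin d0) (Fin d0) ℝ)
    (hU : Uᵀ * U = 1) (hV : Vᵀ * V = 1)
    (U1 : Matrix (Fin dL) (Fin r) ℝ) (V1 : Matrix (Fin d0) (Fin r) ℝ)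
    (hU1 : U1 = U.submatrix id (Fin.castLE (hr.trans (min_le_right d0 dL))))
    (hV1 : V1 = V.submatrix id (Fin.castLE (hr.trans (min_le_left d0 dL))))
    (lam : Fin r → ℝ) (hlam : ∀ i, 0 < lam i)
    (G : Matrix (Fin dL × Fin d0) (Fin dL × Fin d0) ℝ)
    (hGdef : G =
      (U1 * Matrix.diagonal (fun i => lam i ^ (2 * (L - 1))) * U1ᵀ) ⊗ₖ
          (1 : Matrix (Fin d0) (Fin d0) ℝ) +
        (1 : Matrix (Fin dL) (Fin dL) ℝ) ⊗ₖ
          (V1 * Matrix.diagonal (fun i => lam i ^ (2 * (L - 1))) * V1ᵀ) +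
        ∑ l ∈ Finset.Icc 2 (L - 1),
          (U1 * Matrix.diagonal (fun i => lam i ^ (2 * (L - l))) * U1ᵀ) ⊗ₖ
            (V1 * Matrix.diagonal (fun i => lam i ^ (2 * (l - 1))) * V1ᵀ)) :
    ∀ (i : Fin dL) (j : Fin d0),
      (∀ (hi : (i : ℕ) < r) (hj : (j : ℕ) < r),
        G.mulVec (fun p => U p.1 i * V p.2 j) =
          (∑ l ∈ Finset.Icc 1 L,
              lam ⟨i, hi⟩ ^ (2 * (L - l)) * lam ⟨j, hj⟩ ^ (2 * (l - 1))) •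
            fun p => U p.1 i * V p.2 j) ∧
      (∀ (hi : (i : ℕ) < r), r ≤ (j : ℕ) →
        G.mulVec (fun p => U p.1 i * V p.2 j) =
          (lam ⟨i, hi⟩ ^ (2 * (L - 1))) • fun p => U p.1 i * V p.2 j) ∧
      (r ≤ (i : ℕ) → ∀ (hj : (j : ℕ) < r),
        G.mulVec (fun p => U p.1 i * V p.2 j) =
          (lam ⟨j, hj⟩ ^ (2 * (L - 1))) • fun p => U p.1 i * V p.2 j) ∧
      (r ≤ (i : ℕ) → r ≤ (j : ℕ) →
        G.mulVec (fun p => U p.1 i * V p.2 j) =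
          (0 : ℝ) • fun p => U p.1 i * V p.2 j) := by
  subst hU1 hV1
  intro i j
  have key := gramKey L d0 dL r hr U V hU hV lam G i j hGdef
  have hIcc : Finset.Icc 1 L = insert 1 (insert L (Finset.Icc 2 (L-1))) := by
    ext m; simp only [Finset.mem_Icc, Finset.mem_insert]; omega
  refine ⟨fun hi hj => ?_, fun hi hj => ?_, fun hi hj => ?_, fun hi hj => ?_⟩
  · rw [key]
    congr 1
    rw [dif_pos hi, dif_pos hj, hIcc,
      Finset.sum_insert (by simp only [Finset.mem_Icc, Finset.mem_insert]; omega),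
      Finset.sum_insert (by simp only [Finset.mem_Icc]; omega)]
    simp only [dif_pos hi, dif_pos hj, Nat.sub_self, mul_zero, pow_zero]
    ring
  · have hj' : ¬ (j : ℕ) < r := by omega
    rw [key]
    congr 1
    simp [dif_pos hi, dif_neg hj']
  · have hi' : ¬ (i : ℕ) < r := by omega
    rw [key]
    congr 1
    simp [dif_neg hi', dif_pos hj]
  · have hi' : ¬ (i : ℕ) < r := by omega
    have hj' : ¬ (j : ℕ) < r := by omega
    rw [key]
    congr 1
    simp [dif_neg hi', dif_neg hj']
end

section
/- Fix an integer L ≥ 2 and consider the recursion λ_{t+1} = λ_t − η λ_t^{2L−1} + η λ_t^{L−1}. Let λ_0 > 0, set M = max{1, λ_0}, and suppose 0 < η < min{ 1/L, 2/((2L−1) M^{2L−2}) }. Then for every t ≥ 0 one has λ_t ∈ (0, M]. Moreover, if λ_t ∈ (0, 1] then λ_{t+1} ≥ λ_t, and if λ_t ∈ [1, M] then λ_{t+1} ≤ λ_t. -/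
/-- For the depth-`L` shared-eigenvalue gradient-descent recursion
`λ_{t+1} = λ_t − η λ_t^{2L−1} + η λ_t^{L−1}` with `λ_0 > 0`, `M = max {1, λ_0}` and
`0 < η < min {1/L, 2/((2L−1) M^{2L−2})}`, every iterate stays in `(0, M]`; moreover the
iterates increase on `(0, 1]` and decrease on `[1, M]`. -/
theorem statement8 (L : ℕ) (hL : 2 ≤ L) (η M : ℝ) (lam : ℕ → ℝ)
    (hrec : ∀ t, lam (t + 1) = lam t - η * lam t ^ (2 * L - 1) + η * lam t ^ (L - 1))
    (hlam0 : 0 < lam 0) (hM : M = max 1 (lam 0))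
    (hη0 : 0 < η)
    (hη : η < min (1 / (L : ℝ)) (2 / ((2 * (L : ℝ) - 1) * M ^ (2 * L - 2)))) :
    (∀ t, lam t ∈ Set.Ioc 0 M) ∧
    (∀ t, lam t ∈ Set.Ioc 0 1 → lam t ≤ lam (t + 1)) ∧
    (∀ t, lam t ∈ Set.Icc 1 M → lam (t + 1) ≤ lam t) := by
  have hM1 : (1:ℝ) ≤ M := by rw [hM]; exact le_max_left _ _
  have hM0 : (0:ℝ) < M := lt_of_lt_of_le one_pos hM1
  have hLR : (2:ℝ) ≤ (L:ℝ) := by exact_mod_cast hL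
  have hηL : η * (L:ℝ) < 1 := by
    have h := lt_of_lt_of_le hη (min_le_left _ _)
    rw [lt_div_iff₀ (by linarith : (0:ℝ) < (L:ℝ))] at h
    linarith
  have hηM : η * ((2 * (L:ℝ) - 1) * M ^ (2 * L - 2)) < 2 := by
    have h := lt_of_lt_of_le hη (min_le_right _ _)
    have hpos : (0:ℝ) < (2 * (L:ℝ) - 1) * M ^ (2 * L - 2) :=
      mul_pos (by linarith) (pow_pos hM0 _)
    rw [lt_div_iff₀ hpos] at h
    linarith
  -- key one-step lemma
  have key : ∀ x : ℝ, 0 < x → x ≤ M →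
      (0 < x - η * x ^ (2 * L - 1) + η * x ^ (L - 1) ∧
        x - η * x ^ (2 * L - 1) + η * x ^ (L - 1) ≤ M) ∧
      (x ≤ 1 → x ≤ x - η * x ^ (2 * L - 1) + η * x ^ (L - 1)) ∧
      (1 ≤ x → x - η * x ^ (2 * L - 1) + η * x ^ (L - 1) ≤ x) := by
    intro x hx0 hxM
    have hsplit : x ^ (2 * L - 1) = x ^ (L - 1) * x ^ L := by
      rw [← pow_add]; congr 1; omega
    have hxL1pos : (0:ℝ) < x ^ (L - 1) := pow_pos hx0 _
    constructor
    · -- membership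
      rcases le_or_gt x 1 with hx1 | hx1
      · -- x ≤ 1 : increases but stays ≤ 1
        have hxL : x ^ L ≤ 1 := pow_le_one₀ hx0.le hx1
        have hge : x ≤ x - η * x ^ (2 * L - 1) + η * x ^ (L - 1) := by
          rw [hsplit]; nlinarith [mul_pos hη0 hxL1pos]
        refine ⟨lt_of_lt_of_le hx0 hge, le_trans ?_ hM1⟩
        -- f ≤ 1
        have hB : 1 + (L:ℝ) * (x - 1) ≤ x ^ L := by
          have := one_add_mul_le_pow (a := x - 1) (by linarith) L
          simpa using this
        have hxL1 : x ^ (L - 1) ≤ 1 := pow_le_one₀ hx0.le hx1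
        rw [hsplit]
        nlinarith [mul_nonneg (mul_nonneg hη0.le (sub_nonneg.2 hxL1)) (sub_nonneg.2 hxL),
          mul_le_mul_of_nonneg_left (show 1 - x ^ L ≤ (L:ℝ) * (1 - x) by linarith) hη0.le,
          mul_nonneg (sub_nonneg.2 (show η * (L:ℝ) ≤ 1 by linarith)) (sub_nonneg.2 hx1)]
      · -- 1 < x : decreases, stays > 0
        have hxL : 1 ≤ x ^ L := one_le_pow₀ hx1.le
        have hle : x - η * x ^ (2 * L - 1) + η * x ^ (L - 1) ≤ x := by
          rw [hsplit]; nlinarith [mul_pos hη0 hxL1pos]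
        refine ⟨?_, le_trans hle hxM⟩
        have hsplit2 : x ^ (2 * L - 1) = x * x ^ (2 * L - 2) := by
          rw [← pow_succ']; congr 1; omega
        have hx2M : x ^ (2 * L - 2) ≤ M ^ (2 * L - 2) :=
          pow_le_pow_left₀ hx0.le hxM _
        have h1 : η * x ^ (2 * L - 2) < 1 := by
          nlinarith [mul_le_mul_of_nonneg_left hx2M hη0.le,
            mul_nonneg (by linarith : (0:ℝ) ≤ 2 * (L:ℝ) - 4)
              (mul_nonneg hη0.le (pow_pos hM0 (2 * L - 2)).le)]
        rw [hsplit2]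
        nlinarith [mul_pos hη0 hxL1pos]
    constructor
    · intro hx1
      have hxL : x ^ L ≤ 1 := pow_le_one₀ hx0.le hx1
      rw [hsplit]; nlinarith [mul_pos hη0 hxL1pos]
    · intro hx1
      have hxL : 1 ≤ x ^ L := one_le_pow₀ hx1
      rw [hsplit]; nlinarith [mul_pos hη0 hxL1pos]
  have mem : ∀ t, lam t ∈ Set.Ioc 0 M := by
    intro t
    induction t with
    | zero => exact ⟨hlam0, by rw [hM]; exact le_max_right _ _⟩
    | succ n ih =>
        rw [hrec n]
        exact ((key (lam n) ih.1 ih.2).1)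
  refine ⟨mem, fun t ht => ?_, fun t ht => ?_⟩
  · rw [hrec t]; exact (key (lam t) ht.1 (mem t).2).2.1 ht.2
  · rw [hrec t]; exact (key (lam t) (mem t).1 (mem t).2).2.2 ht.1
end

section
/- Fix an integer L ≥ 2 and consider the recursion λ_{t+1} = λ_t − η λ_t^{2L−1} + η λ_t^{L−1}. Let λ_0 > 0, set M = max{1, λ_0}, and suppose 0 < η < min{ 1/L, 2/((2L−1) M^{2L−2}) }. Then for every t ≥ 0 with λ_t ≠ 1, one has (λ_{t+1} − 1)² < (λ_t − 1)²; and if λ_t = 1 then λ_s = 1 for all s ≥ t. -/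
private lemma aux9 (K : ℕ) (η M x : ℝ) (hM : 1 ≤ M) (hx : 0 < x) (hxM : x ≤ M)
    (hη0 : 0 < η) (hηL : η * ((K : ℝ) + 2) < 1)
    (hηM : η * ((2 * (K : ℝ) + 3) * M ^ (2 * K + 2)) < 2) :
    0 < x - η * x ^ (2 * K + 3) + η * x ^ (K + 1) ∧
    x - η * x ^ (2 * K + 3) + η * x ^ (K + 1) ≤ M ∧
    (x ≠ 1 → (x - η * x ^ (2 * K + 3) + η * x ^ (K + 1) - 1) ^ 2 < (x - 1) ^ 2) := by
  set S : ℝ := ∑ i ∈ Finset.range (K + 2), x ^ i with hS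
  have hgeom : S * (x - 1) = x ^ (K + 2) - 1 := geom_sum_mul x (K + 2)
  have hS0 : 0 < S :=
    Finset.sum_pos (fun i _ => pow_pos hx i) (Finset.nonempty_range_iff.mpr (by omega))
  have hM0 : (0 : ℝ) < M := lt_of_lt_of_le one_pos hM
  have hSle : S ≤ ((K : ℝ) + 2) * M ^ (K + 1) := by
    have : S ≤ ∑ _i ∈ Finset.range (K + 2), M ^ (K + 1) := by
      apply Finset.sum_le_sum
      intro i hi
      have hi' : i ≤ K + 1 := by
        have := Finset.mem_range.mp hi; omega
      calc x ^ i ≤ M ^ i := pow_le_pow_left₀ hx.le hxM i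
        _ ≤ M ^ (K + 1) := pow_le_pow_right₀ hM hi'
    simpa [Finset.sum_const, Finset.card_range, nsmul_eq_mul] using this
  have hS2 : x ≤ 1 → S ≤ (K : ℝ) + 2 := by
    intro hx1
    have : S ≤ ∑ _i ∈ Finset.range (K + 2), (1 : ℝ) := by
      apply Finset.sum_le_sum
      intro i _
      exact pow_le_one₀ hx.le hx1
    simpa [Finset.sum_const, Finset.card_range] using this
  clear_value S
  clear hS
  have hpow : x ^ (2 * K + 3) = x ^ (K + 1) * x ^ (K + 2) := by
    rw [← pow_add]; congr 1; omega
  set c : ℝ := η * (x ^ (K + 1) * S) with hc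
  have hid : x - η * x ^ (2 * K + 3) + η * x ^ (K + 1) - 1 = (x - 1) * (1 - c) := by
    rw [hc, hpow]
    linear_combination (η * x ^ (K + 1)) * hgeom
  have hxKpos : 0 < x ^ (K + 1) := pow_pos hx _
  have hc0 : 0 < c := by rw [hc]; positivity
  have hcle : c ≤ η * (x ^ (K + 1) * S) := le_of_eq hc
  have hcge : η * (x ^ (K + 1) * S) ≤ c := le_of_eq hc.symm
  clear_value c
  have hxK : x ^ (K + 1) ≤ M ^ (K + 1) := pow_le_pow_left₀ hx.le hxM _
  have hMK : (0 : ℝ) < M ^ (K + 1) := pow_pos hM0 _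
  have hM2 : M ^ (K + 1) * M ^ (K + 1) = M ^ (2 * K + 2) := by
    rw [← pow_add]; congr 1; omega
  have hprod : x ^ (K + 1) * S ≤ ((K : ℝ) + 2) * M ^ (2 * K + 2) := by
    calc x ^ (K + 1) * S ≤ M ^ (K + 1) * (((K : ℝ) + 2) * M ^ (K + 1)) := by
          apply mul_le_mul hxK hSle hS0.le hMK.le
      _ = ((K : ℝ) + 2) * M ^ (2 * K + 2) := by rw [← hM2]; ring
  have hK0 : (0 : ℝ) ≤ (K : ℝ) := Nat.cast_nonneg K
  have hM22 : (0 : ℝ) < M ^ (2 * K + 2) := pow_pos hM0 _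
  have hc2 : c < 2 := by
    have h1 : c ≤ η * (((K : ℝ) + 2) * M ^ (2 * K + 2)) := by
      calc c ≤ η * (x ^ (K + 1) * S) := hcle
        _ ≤ η * (((K : ℝ) + 2) * M ^ (2 * K + 2)) :=
          mul_le_mul_of_nonneg_left hprod hη0.le
    nlinarith
  -- positivity of next iterate
  have hx2K : x ^ (2 * K + 2) ≤ M ^ (2 * K + 2) := pow_le_pow_left₀ hx.le hxM _
  have hx2Kpos : 0 < x ^ (2 * K + 2) := pow_pos hx _
  have hsmall : η * x ^ (2 * K + 2) < 1 := by
    nlinarith [mul_le_mul_of_nonneg_left hx2K hη0.le]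
  have hpow2 : x ^ (2 * K + 3) = x * x ^ (2 * K + 2) := by
    rw [← pow_succ']
  have hpos : 0 < x - η * x ^ (2 * K + 3) + η * x ^ (K + 1) := by
    have h1 : 0 < x * (1 - η * x ^ (2 * K + 2)) := mul_pos hx (by linarith)
    nlinarith [mul_pos hη0 hxKpos]
  refine ⟨hpos, ?_, ?_⟩
  · rcases le_or_gt x 1 with hx1 | hx1
    · have hxk1 : x ^ (K + 1) ≤ 1 := pow_le_one₀ hx.le hx1
      have hc1 : c ≤ 1 := by
        have h2 : x ^ (K + 1) * S ≤ 1 * ((K : ℝ) + 2) :=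
          mul_le_mul hxk1 (hS2 hx1) hS0.le zero_le_one
        nlinarith
      have hml : (x - 1) * (1 - c) ≤ 0 :=
        mul_nonpos_iff.mpr (Or.inr ⟨by linarith, by linarith⟩)
      linarith [hid]
    · have hcx : 0 ≤ c * (x - 1) := mul_nonneg hc0.le (by linarith)
      have hexp : (x - 1) * (1 - c) = (x - 1) - c * (x - 1) := by ring
      linarith [hid]
  · intro hne
    have hx1sq : 0 < (x - 1) ^ 2 := by
      have : x - 1 ≠ 0 := sub_ne_zero_of_ne hne
      positivity
    rw [hid, mul_pow]
    have h1c : (1 - c) ^ 2 < 1 := by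
      have := sq_lt_sq' (by linarith : -(1 : ℝ) < 1 - c) (by linarith : 1 - c < 1)
      simpa using this
    exact mul_lt_of_lt_one_right hx1sq h1c

/-- For the depth-`L` shared-eigenvalue gradient-descent recursion
`λ_{t+1} = λ_t − η λ_t^{2L−1} + η λ_t^{L−1}` with `λ_0 > 0`, `M = max {1, λ_0}` and
`0 < η < min {1/L, 2/((2L−1) M^{2L−2})}`, the Lyapunov function `(λ − 1)²` strictly
decreases at every step where `λ_t ≠ 1`, and the point `1` is absorbing. -/
theorem statement9 (L : ℕ) (hL : 2 ≤ L) (η M : ℝ) (lam : ℕ → ℝ)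
    (hrec : ∀ t, lam (t + 1) = lam t - η * lam t ^ (2 * L - 1) + η * lam t ^ (L - 1))
    (hlam0 : 0 < lam 0) (hM : M = max 1 (lam 0))
    (hη0 : 0 < η)
    (hη : η < min (1 / (L : ℝ)) (2 / ((2 * (L : ℝ) - 1) * M ^ (2 * L - 2)))) :
    (∀ t, lam t ≠ 1 → (lam (t + 1) - 1) ^ 2 < (lam t - 1) ^ 2) ∧
    (∀ t, lam t = 1 → ∀ s, t ≤ s → lam s = 1) := by
  obtain ⟨K, rfl⟩ : ∃ K, L = K + 2 := ⟨L - 2, by omega⟩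
  have hM1 : 1 ≤ M := hM ▸ le_max_left _ _
  have hM0 : (0 : ℝ) < M := lt_of_lt_of_le one_pos hM1
  have hlamM : lam 0 ≤ M := hM ▸ le_max_right _ _
  have e1 : 2 * (K + 2) - 1 = 2 * K + 3 := by omega
  have e2 : (K + 2) - 1 = K + 1 := by omega
  have e3 : 2 * (K + 2) - 2 = 2 * K + 2 := by omega
  rw [e3] at hη
  have hrec' : ∀ t, lam (t + 1) =
      lam t - η * lam t ^ (2 * K + 3) + η * lam t ^ (K + 1) := by
    intro t; rw [hrec t, e1, e2]
  have hL0 : (0 : ℝ) < ((K : ℝ) + 2) := by positivity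
  have hcast : ((K + 2 : ℕ) : ℝ) = (K : ℝ) + 2 := by push_cast; ring
  have hηL : η * ((K : ℝ) + 2) < 1 := by
    have h := (lt_min_iff.mp hη).1
    rw [hcast] at h
    rw [lt_div_iff₀ hL0] at h
    linarith
  have hηM : η * ((2 * (K : ℝ) + 3) * M ^ (2 * K + 2)) < 2 := by
    have h := (lt_min_iff.mp hη).2
    rw [hcast] at h
    have hd : (0 : ℝ) < (2 * ((K : ℝ) + 2) - 1) * M ^ (2 * K + 2) := by
      have hp : (0 : ℝ) < M ^ (2 * K + 2) := pow_pos hM0 _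
      nlinarith [Nat.cast_nonneg (α := ℝ) K]
    rw [lt_div_iff₀ hd] at h
    nlinarith
  have hinv : ∀ t, 0 < lam t ∧ lam t ≤ M := by
    intro t
    induction t with
    | zero => exact ⟨hlam0, hlamM⟩
    | succ n ih =>
      obtain ⟨h1, h2, _⟩ := aux9 K η M (lam n) hM1 ih.1 ih.2 hη0 hηL hηM
      rw [hrec' n]
      exact ⟨h1, h2⟩
  constructor
  · intro t ht
    obtain ⟨_, _, h3⟩ := aux9 K η M (lam t) hM1 (hinv t).1 (hinv t).2 hη0 hηL hηM
    rw [hrec' t]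
    exact h3 ht
  · intro t ht s hts
    induction s, hts using Nat.le_induction with
    | base => exact ht
    | succ n _ ih => rw [hrec' n, ih]; ring
end

section
/- Fix an integer L ≥ 2 and consider the recursion λ_{t+1} = λ_t − η λ_t^{2L−1} + η λ_t^{L−1}. Let λ_0 > 0, set M = max{1, λ_0}, and suppose 0 < η < min{ 1/L, 2/((2L−1) M^{2L−2}) }. Then for every ε with 0 < ε < 1 there exists a time T ∈ ℕ such that λ_T ∈ [1 − ε, 1 + ε]. -/
/-- Auxiliary function `h(x) = x^(L-1) * ∑_{i<L} x^i`, so that for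
`f(x) = x - η x^(2L-1) + η x^(L-1)` one has `f(x) - 1 = (x-1)(1 - η h(x))`. -/
noncomputable def st10h (L : ℕ) (x : ℝ) : ℝ := x ^ (L - 1) * ∑ i ∈ Finset.range L, x ^ i

lemma st10_key (L : ℕ) (hL : 2 ≤ L) (η x : ℝ) :
    x - η * x ^ (2 * L - 1) + η * x ^ (L - 1) - 1 = (x - 1) * (1 - η * st10h L x) := by
  rw [st10h]
  have e1 : x ^ (2 * L - 1) = x ^ (L - 1) * x ^ L := by
    rw [← pow_add]; congr 1; omega
  linear_combination η * x ^ (L - 1) * geom_sum_mul x L - η * e1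

lemma st10_hpos (L : ℕ) (hL : 2 ≤ L) (x : ℝ) (hx : 0 < x) : 0 < st10h L x := by
  rw [st10h]
  apply mul_pos (pow_pos hx _)
  exact Finset.sum_pos (fun i _ => pow_pos hx i) (Finset.nonempty_range_iff.mpr (by omega))

lemma st10_hle (L : ℕ) (hL : 2 ≤ L) (x M : ℝ) (hx : 0 ≤ x) (hM1 : 1 ≤ M) (hxM : x ≤ M) :
    st10h L x ≤ (L : ℝ) * M ^ (2 * L - 2) := by
  rw [st10h]
  have h1 : x ^ (L - 1) ≤ M ^ (L - 1) := pow_le_pow_left₀ hx hxM _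
  have h2 : ∑ i ∈ Finset.range L, x ^ i ≤ (L : ℝ) * M ^ (L - 1) := by
    calc ∑ i ∈ Finset.range L, x ^ i ≤ ∑ i ∈ Finset.range L, M ^ (L - 1) := by
          apply Finset.sum_le_sum
          intro i hi
          calc x ^ i ≤ M ^ i := pow_le_pow_left₀ hx hxM _
            _ ≤ M ^ (L - 1) := pow_le_pow_right₀ hM1 (by simp at hi; omega)
      _ = (L : ℝ) * M ^ (L - 1) := by simp [Finset.sum_const, mul_comm]
  have hM0 : (0:ℝ) ≤ M ^ (L - 1) := by positivity
  have e : M ^ (L - 1) * ((L:ℝ) * M ^ (L - 1)) = (L:ℝ) * M ^ (2 * L - 2) := by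
    rw [mul_comm, mul_assoc, ← pow_add]; congr 2; omega
  calc x ^ (L - 1) * ∑ i ∈ Finset.range L, x ^ i
      ≤ M ^ (L - 1) * ((L:ℝ) * M ^ (L - 1)) := by
        apply mul_le_mul h1 h2 ?_ hM0
        exact Finset.sum_nonneg fun i _ => by positivity
    _ = (L:ℝ) * M ^ (2 * L - 2) := e

lemma st10_hgeL (L : ℕ) (x : ℝ) (hx : 1 ≤ x) : (L : ℝ) ≤ st10h L x := by
  rw [st10h]
  have h1 : (1:ℝ) ≤ x ^ (L - 1) := one_le_pow₀ hx
  have h2 : (L : ℝ) ≤ ∑ i ∈ Finset.range L, x ^ i := by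
    calc (L:ℝ) = ∑ i ∈ Finset.range L, (1:ℝ) := by simp
      _ ≤ ∑ i ∈ Finset.range L, x ^ i := Finset.sum_le_sum fun i _ => one_le_pow₀ hx
  nlinarith

lemma st10_hleL (L : ℕ) (x : ℝ) (hx0 : 0 ≤ x) (hx : x ≤ 1) : st10h L x ≤ (L : ℝ) := by
  rw [st10h]
  have h1 : x ^ (L - 1) ≤ 1 := pow_le_one₀ hx0 hx
  have h2 : ∑ i ∈ Finset.range L, x ^ i ≤ (L : ℝ) := by
    calc ∑ i ∈ Finset.range L, x ^ i ≤ ∑ i ∈ Finset.range L, (1:ℝ) :=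
          Finset.sum_le_sum fun i _ => pow_le_one₀ hx0 hx
      _ = (L:ℝ) := by simp
  have h3 : (0:ℝ) ≤ ∑ i ∈ Finset.range L, x ^ i :=
    Finset.sum_nonneg fun i _ => by positivity
  nlinarith

set_option maxHeartbeats 1600000 in
/-- For the depth-`L` shared-eigenvalue gradient-descent recursion
`λ_{t+1} = λ_t − η λ_t^{2L−1} + η λ_t^{L−1}` with `λ_0 > 0`, `M = max {1, λ_0}` and
`0 < η < min {1/L, 2/((2L−1) M^{2L−2})}`, for every `0 < ε < 1` the trajectory enters the
neighborhood `[1 − ε, 1 + ε]` at some finite time. -/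
theorem statement10 (L : ℕ) (hL : 2 ≤ L) (η M : ℝ) (lam : ℕ → ℝ)
    (hrec : ∀ t, lam (t + 1) = lam t - η * lam t ^ (2 * L - 1) + η * lam t ^ (L - 1))
    (hlam0 : 0 < lam 0) (hM : M = max 1 (lam 0))
    (hη0 : 0 < η)
    (hη : η < min (1 / (L : ℝ)) (2 / ((2 * (L : ℝ) - 1) * M ^ (2 * L - 2)))) :
    ∀ ε : ℝ, 0 < ε → ε < 1 → ∃ T : ℕ, lam T ∈ Set.Icc (1 - ε) (1 + ε) := by
  have hM1 : 1 ≤ M := hM ▸ le_max_left _ _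
  have hlam0M : lam 0 ≤ M := hM ▸ le_max_right _ _
  have hLpos : (0:ℝ) < L := by positivity
  have hL3 : (3:ℝ) ≤ 2 * (L:ℝ) - 1 := by
    have : (2:ℝ) ≤ (L:ℝ) := by exact_mod_cast hL
    linarith
  have hMpow : (0:ℝ) < M ^ (2 * L - 2) := by positivity
  have hηL : η * L < 1 := by
    have h1 : η < 1 / (L:ℝ) := lt_of_lt_of_le hη (min_le_left _ _)
    rw [lt_div_iff₀ hLpos] at h1; linarith
  have hη2 : η * ((2 * (L:ℝ) - 1) * M ^ (2 * L - 2)) < 2 := by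
    have h1 : η < 2 / ((2 * (L:ℝ) - 1) * M ^ (2 * L - 2)) :=
      lt_of_lt_of_le hη (min_le_right _ _)
    have hD : (0:ℝ) < (2 * (L:ℝ) - 1) * M ^ (2 * L - 2) :=
      mul_pos (by linarith) hMpow
    rw [lt_div_iff₀ hD] at h1; linarith
  -- consequence: η * M^(2L-2) < 2/3 ≤ 1 and η * L * M^(2L-2) * (2L-1) < 2L
  have hA : η * M ^ (2 * L - 2) < 1 := by
    nlinarith [mul_nonneg hη0.le hMpow.le]
  have hηLM : η * ((L:ℝ) * M ^ (2 * L - 2)) * (2 * (L:ℝ) - 1) < 2 * (L:ℝ) := by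
    nlinarith [mul_nonneg hη0.le hMpow.le]
  -- contraction factor
  set q : ℝ := max (1 - η * L) (1 / (2 * (L:ℝ) - 1)) with hq
  have hq0 : 0 ≤ q := le_trans (by positivity) (le_max_right _ _)
  have hq1 : q < 1 := by
    apply max_lt
    · nlinarith
    · rw [div_lt_one (by linarith)]; linarith
  have hstep : ∀ t, lam (t + 1) - 1 = (lam t - 1) * (1 - η * st10h L (lam t)) := by
    intro t
    rw [hrec t]
    exact st10_key L hL η (lam t)
  -- invariance: 0 < lam t ≤ M
  have inv : ∀ t, 0 < lam t ∧ lam t ≤ M := by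
    intro t
    induction t with
    | zero => exact ⟨hlam0, hlam0M⟩
    | succ t ih =>
      obtain ⟨hx0, hxM⟩ := ih
      constructor
      · -- positivity
        have e2 : lam t ^ (2 * L - 1) = lam t ^ (2 * L - 2) * lam t := by
          rw [← pow_succ]; congr 1; omega
        have hxp : lam t ^ (2 * L - 2) ≤ M ^ (2 * L - 2) := pow_le_pow_left₀ hx0.le hxM _
        have h1 : η * lam t ^ (2 * L - 2) < 1 := by
          nlinarith [mul_le_mul_of_nonneg_left hxp hη0.le]
        have h2 : (0:ℝ) < lam t ^ (L - 1) := pow_pos hx0 _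
        rw [hrec t, e2]
        nlinarith [mul_pos hx0 (by linarith : (0:ℝ) < 1 - η * lam t ^ (2 * L - 2))]
      · -- upper bound
        rcases le_or_gt (lam t) 1 with hx1 | hx1
        · have hhle : st10h L (lam t) ≤ (L:ℝ) := st10_hleL L (lam t) hx0.le hx1
          have hhpos : 0 < st10h L (lam t) := st10_hpos L hL (lam t) hx0
          have : lam (t + 1) - 1 ≤ 0 := by
            rw [hstep t]
            apply mul_nonpos_of_nonpos_of_nonneg (by linarith)
            nlinarith
          linarith
        · have hhge : (L:ℝ) ≤ st10h L (lam t) := st10_hgeL L (lam t) hx1.le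
          have hup : st10h L (lam t) ≤ (L:ℝ) * M ^ (2 * L - 2) :=
            st10_hle L hL (lam t) M hx0.le hM1 hxM
          have hfac2 : -(1:ℝ) < 1 - η * st10h L (lam t) := by
            nlinarith [mul_le_mul_of_nonneg_left hup hη0.le]
          have : lam (t + 1) - 1 ≤ (lam t - 1) * 1 := by
            rw [hstep t]
            apply mul_le_mul_of_nonneg_left ?_ (by linarith)
            nlinarith
          linarith
  -- contraction above 1
  have contract : ∀ t, 1 ≤ lam t → lam (t + 1) - 1 ≤ q * (lam t - 1) := by
    intro t hx1
    obtain ⟨hx0, hxM⟩ := inv t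
    have hhge : (L:ℝ) ≤ st10h L (lam t) := st10_hgeL L (lam t) hx1
    have hfac : 1 - η * st10h L (lam t) ≤ q := by
      have h1 : 1 - η * st10h L (lam t) ≤ 1 - η * L := by nlinarith
      exact le_trans h1 (le_max_left _ _)
    calc lam (t + 1) - 1 = (lam t - 1) * (1 - η * st10h L (lam t)) := hstep t
      _ ≤ (lam t - 1) * q := mul_le_mul_of_nonneg_left hfac (by linarith)
      _ = q * (lam t - 1) := mul_comm _ _
  -- monotone below 1
  have below : ∀ t, 0 < lam t → lam t ≤ 1 → lam t ≤ lam (t + 1) ∧ lam (t + 1) ≤ 1 := by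
    intro t hx0 hx1
    have hhle : st10h L (lam t) ≤ (L:ℝ) := st10_hleL L (lam t) hx0.le hx1
    have hhpos : 0 < st10h L (lam t) := st10_hpos L hL (lam t) hx0
    constructor
    · have h1 : 0 ≤ lam (t + 1) - 1 - (lam t - 1) := by
        rw [hstep t]
        nlinarith [mul_nonneg (mul_nonneg hη0.le hhpos.le)
          (show (0:ℝ) ≤ 1 - lam t by linarith)]
      linarith
    · have h1 : lam (t + 1) - 1 ≤ 0 := by
        rw [hstep t]
        apply mul_nonpos_of_nonpos_of_nonneg (by linarith)
        nlinarith
      linarith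
  intro ε hε0 hε1
  by_cases hex : ∃ t, lam t ≤ 1
  · -- eventually below 1, then monotone increase toward 1
    obtain ⟨t₀, ht₀⟩ := hex
    have hδ0 : 0 < lam t₀ := (inv t₀).1
    have mono : ∀ n, lam t₀ ≤ lam (t₀ + n) ∧ lam (t₀ + n) ≤ 1 := by
      intro n
      induction n with
      | zero => exact ⟨le_refl _, ht₀⟩
      | succ n ih =>
        have hb := below (t₀ + n) (lt_of_lt_of_le hδ0 ih.1) ih.2
        exact ⟨le_trans ih.1 hb.1, hb.2⟩
    by_cases h2 : ∃ n, 1 - ε ≤ lam (t₀ + n)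
    · obtain ⟨n, hn⟩ := h2
      exact ⟨t₀ + n, hn, by linarith [(mono n).2]⟩
    · push_neg at h2
      set c : ℝ := η * lam t₀ ^ (L - 1) * (1 - (1 - ε) ^ L) with hc
      have hεL : (1 - ε) ^ L < 1 := pow_lt_one₀ (by linarith) (by linarith) (by omega)
      have hεL0 : (0:ℝ) ≤ (1 - ε) ^ L := pow_nonneg (by linarith) _
      have hc0 : 0 < c := by
        apply mul_pos (mul_pos hη0 (pow_pos hδ0 _)); linarith
      have grow : ∀ n, lam t₀ + n * c ≤ lam (t₀ + n) := by
        intro n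
        induction n with
        | zero => simp
        | succ n ih =>
          have hx := mono n
          have hx0 : 0 < lam (t₀ + n) := lt_of_lt_of_le hδ0 hx.1
          have hxε : lam (t₀ + n) ≤ 1 - ε := (h2 n).le
          have e2 : lam (t₀ + n) ^ (2 * L - 1)
              = lam (t₀ + n) ^ (L - 1) * lam (t₀ + n) ^ L := by
            rw [← pow_add]; congr 1; omega
          have hp1 : lam t₀ ^ (L - 1) ≤ lam (t₀ + n) ^ (L - 1) :=
            pow_le_pow_left₀ hδ0.le hx.1 _
          have hp2 : lam (t₀ + n) ^ L ≤ (1 - ε) ^ L := pow_le_pow_left₀ hx0.le hxε _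
          have hfac : lam t₀ ^ (L - 1) * (1 - (1 - ε) ^ L)
              ≤ lam (t₀ + n) ^ (L - 1) * (1 - lam (t₀ + n) ^ L) :=
            mul_le_mul hp1 (by linarith) (by linarith) (pow_nonneg hx0.le _)
          have key : lam (t₀ + n) + c ≤ lam (t₀ + n + 1) := by
            rw [hrec (t₀ + n), e2]
            nlinarith [mul_le_mul_of_nonneg_left hfac hη0.le]
          have h4 : lam t₀ + (n + 1 : ℕ) * c ≤ lam (t₀ + n) + c := by
            push_cast; nlinarith
          exact le_trans h4 key
      obtain ⟨n, hn⟩ := exists_nat_gt ((1 - lam t₀) / c)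
      have h5 : 1 - lam t₀ < n * c := by
        rw [div_lt_iff₀ hc0] at hn; nlinarith
      have h6 := grow n
      have h7 := (mono n).2
      have h8 := h2 n
      linarith
  · -- always above 1: geometric contraction
    push_neg at hex
    have geo : ∀ t, lam t - 1 ≤ q ^ t * (lam 0 - 1) := by
      intro t
      induction t with
      | zero => simp
      | succ t ih =>
        calc lam (t + 1) - 1 ≤ q * (lam t - 1) := contract t (hex t).le
          _ ≤ q * (q ^ t * (lam 0 - 1)) := mul_le_mul_of_nonneg_left ih hq0
          _ = q ^ (t + 1) * (lam 0 - 1) := by ring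
    have hB : 0 < lam 0 - 1 := by linarith [hex 0]
    obtain ⟨T, hT⟩ := exists_pow_lt_of_lt_one (div_pos hε0 hB) hq1
    refine ⟨T, ?_, ?_⟩
    · linarith [hex T]
    · have h1 := geo T
      rw [lt_div_iff₀ hB] at hT
      nlinarith [pow_nonneg hq0 T]
end

section
/- Fix an integer L ≥ 2 and consider the recursion λ_{t+1} = λ_t − η λ_t^{2L−1} + η λ_t^{L−1}. Let λ_0 > 0, set M = max{1, λ_0}, and suppose 0 < η < min{ 1/L, 2/((2L−1) M^{2L−2}) }. Then λ_t converges to 1 as t → ∞. -/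
/-!
Writing `λ_{t+1} - 1 = (λ_t - 1)(1 - η g(λ_t))` with
`g(x) = x^{L-1}(1 + x + ⋯ + x^{L-1})`, increasing on `x ≥ 0`, the error is multiplied at each step
by a factor that is uniformly less than `1` in absolute value as soon as the iterates stay in an
interval `[m, M]` with `m > 0`. Such an interval is invariant: below `1` the step moves up but not
past `1` since `η g ≤ η L < 1`, and above `1` it moves down but, as `η M^{2L-2} < 1`, not below
`1 - η M^{2L-2}`. On `[m, M]` one has `η g(m) > 0` and `η g(M) ≤ η L M^{2L-2} < 2L/(2L-1) ≤ 2`.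
-/

open Filter Set Topology

theorem tendsto_of_dist_le_mul {α : Type*} [PseudoMetricSpace α] {u : ℕ → α} {a : α} {q : ℝ}
    (hq0 : 0 ≤ q) (hq1 : q < 1) (h : ∀ n, dist (u (n + 1)) a ≤ q * dist (u n) a) :
    Tendsto u atTop (𝓝 a) := by
  have hgeom : ∀ n, dist (u n) a ≤ q ^ n * dist (u 0) a := by
    intro n
    induction n with
    | zero => simp
    | succ n ih =>
      calc dist (u (n + 1)) a ≤ q * dist (u n) a := h n
        _ ≤ q * (q ^ n * dist (u 0) a) := by gcongr
        _ = q ^ (n + 1) * dist (u 0) a := by ring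
  have hlim : Tendsto (fun n => q ^ n * dist (u 0) a) atTop (𝓝 0) := by
    simpa using (tendsto_pow_atTop_nhds_zero_of_lt_one hq0 hq1).mul_const (dist (u 0) a)
  exact tendsto_iff_dist_tendsto_zero.mpr (squeeze_zero (fun _ => dist_nonneg) hgeom hlim)

namespace DeepLinear

def step (L : ℕ) (η x : ℝ) : ℝ := x - η * x ^ (2 * L - 1) + η * x ^ (L - 1)

/-- The divided difference `(x^{2L-1} - x^{L-1}) / (x - 1)`, written without division. -/
def gain (L : ℕ) (x : ℝ) : ℝ := x ^ (L - 1) * ∑ i ∈ Finset.range L, x ^ i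

variable {L : ℕ} {η m M x : ℝ}

theorem step_sub_one (L : ℕ) (η x : ℝ) : step L η x - 1 = (x - 1) * (1 - η * gain L x) := by
  rcases Nat.eq_zero_or_pos L with rfl | hL
  · simp [step, gain]
  have hpow : x ^ (L - 1) * x ^ L = x ^ (2 * L - 1) := by rw [← pow_add]; congr 1; omega
  calc step L η x - 1
      = (x - 1) - η * (x ^ (L - 1) * x ^ L - x ^ (L - 1)) := by rw [hpow, step]; ring
    _ = (x - 1) - η * (x ^ (L - 1) * ((∑ i ∈ Finset.range L, x ^ i) * (x - 1))) := by
        rw [geom_sum_mul]; ring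
    _ = (x - 1) * (1 - η * gain L x) := by rw [gain]; ring

theorem gain_nonneg (hx : 0 ≤ x) : 0 ≤ gain L x := by
  unfold gain; positivity

theorem gain_pos (hL : L ≠ 0) (hx : 0 < x) : 0 < gain L x :=
  mul_pos (pow_pos hx _)
    (Finset.sum_pos (fun i _ => pow_pos hx i) (Finset.nonempty_range_iff.mpr hL))

theorem gain_monotoneOn : MonotoneOn (gain L) (Ici 0) := by
  intro x (hx : 0 ≤ x) y _ hxy
  have hy : 0 ≤ y := hx.trans hxy
  unfold gain
  gcongr

theorem gain_one : gain L 1 = L := by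
  simp [gain]

theorem gain_le_of_one_le (hM : 1 ≤ M) : gain L M ≤ L * M ^ (2 * L - 2) := by
  have hsum : ∑ i ∈ Finset.range L, M ^ i ≤ L * M ^ (L - 1) := by
    calc ∑ i ∈ Finset.range L, M ^ i ≤ ∑ _i ∈ Finset.range L, M ^ (L - 1) :=
          Finset.sum_le_sum fun i hi =>
            pow_le_pow_right₀ hM (by have := Finset.mem_range.mp hi; omega)
      _ = L * M ^ (L - 1) := by simp
  calc gain L M ≤ M ^ (L - 1) * (L * M ^ (L - 1)) := by unfold gain; gcongr
    _ = L * M ^ (2 * L - 2) := by rw [show 2 * L - 2 = (L - 1) + (L - 1) by omega, pow_add]; ring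

theorem step_mem_Icc_of_le_one (hη : 0 ≤ η) (hηL : η * L ≤ 1) (hx0 : 0 ≤ x) (hx1 : x ≤ 1) :
    step L η x ∈ Icc x 1 := by
  have hg0 : 0 ≤ η * gain L x := mul_nonneg hη (gain_nonneg hx0)
  have hg1 : η * gain L x ≤ 1 := by
    calc η * gain L x ≤ η * gain L 1 := by
          gcongr; exact gain_monotoneOn hx0 (mem_Ici.mpr zero_le_one) hx1
      _ ≤ 1 := by rwa [gain_one]
  have h := step_sub_one L η x
  constructor <;> nlinarith

theorem step_le_self_of_one_le (hη : 0 ≤ η) (hx : 1 ≤ x) : step L η x ≤ x := by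
  have hg0 : 0 ≤ η * gain L x := mul_nonneg hη (gain_nonneg (by linarith))
  have h := step_sub_one L η x
  nlinarith

theorem one_sub_le_step (hL : L ≠ 0) (hη : 0 ≤ η) (hx : 1 ≤ x) (h : η * x ^ (2 * L - 2) ≤ 1) :
    1 - η * x ^ (2 * L - 2) ≤ step L η x := by
  have hpow : x ^ (2 * L - 1) = x ^ (2 * L - 2) * x := by rw [← pow_succ]; congr 1; omega
  have hlow : 0 ≤ η * x ^ (L - 1) := mul_nonneg hη (pow_nonneg (by linarith) _)
  calc 1 - η * x ^ (2 * L - 2) ≤ x * (1 - η * x ^ (2 * L - 2)) := by nlinarith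
    _ ≤ step L η x := by rw [step, hpow]; linarith

theorem mapsTo_step (hL : L ≠ 0) (hη : 0 ≤ η) (hηL : η * L ≤ 1) (hm0 : 0 ≤ m)
    (hm : m ≤ 1 - η * M ^ (2 * L - 2)) (hM : 1 ≤ M) :
    MapsTo (step L η) (Icc m M) (Icc m M) := by
  rintro x ⟨hmx, hxM⟩
  rcases le_or_gt x 1 with hx1 | hx1
  · obtain ⟨hlow, hup⟩ := step_mem_Icc_of_le_one hη hηL (hm0.trans hmx) hx1
    exact ⟨hmx.trans hlow, hup.trans hM⟩
  · have hpow : η * x ^ (2 * L - 2) ≤ η * M ^ (2 * L - 2) := by gcongr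
    have hlow := one_sub_le_step hL hη hx1.le (by linarith)
    exact ⟨by linarith, (step_le_self_of_one_le hη hx1.le).trans hxM⟩

theorem abs_one_sub_mul_gain_le (hη : 0 ≤ η) (hm0 : 0 ≤ m) (hx : x ∈ Icc m M) :
    |1 - η * gain L x| ≤ max (1 - η * gain L m) (η * gain L M - 1) := by
  have hx0 : 0 ≤ x := hm0.trans hx.1
  have hgm : η * gain L m ≤ η * gain L x := by gcongr; exact gain_monotoneOn hm0 hx0 hx.1
  have hgM : η * gain L x ≤ η * gain L M := by
    gcongr; exact gain_monotoneOn hx0 (hx0.trans hx.2) hx.2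
  rw [abs_le]
  constructor
  · linarith [le_max_right (1 - η * gain L m) (η * gain L M - 1)]
  · linarith [le_max_left (1 - η * gain L m) (η * gain L M - 1)]

theorem abs_step_sub_one_le (hη : 0 ≤ η) (hm0 : 0 ≤ m) (hx : x ∈ Icc m M) :
    |step L η x - 1| ≤ max (1 - η * gain L m) (η * gain L M - 1) * |x - 1| := by
  rw [step_sub_one, abs_mul, mul_comm]
  exact mul_le_mul_of_nonneg_right (abs_one_sub_mul_gain_le hη hm0 hx) (abs_nonneg _)

theorem mul_gain_lt_two (hL : 1 ≤ L) (hη : 0 ≤ η) (hM : 1 ≤ M)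
    (h : η * ((2 * L - 1) * M ^ (2 * L - 2)) < 2) : η * gain L M < 2 := by
  have hL' : (1 : ℝ) ≤ L := by exact_mod_cast hL
  have hy : 0 ≤ η * M ^ (2 * L - 2) := by positivity
  calc η * gain L M ≤ η * (L * M ^ (2 * L - 2)) := by gcongr; exact gain_le_of_one_le hM
    _ < 2 := by nlinarith

end DeepLinear

open DeepLinear in
/-- For the depth-`L` shared-eigenvalue gradient-descent recursion
`λ_{t+1} = λ_t − η λ_t^{2L−1} + η λ_t^{L−1}` with `λ_0 > 0`, `M = max {1, λ_0}` and
`0 < η < min {1/L, 2/((2L−1) M^{2L−2})}`, the iterates converge to `1`. -/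
theorem statement11 (L : ℕ) (hL : 2 ≤ L) (η M : ℝ) (lam : ℕ → ℝ)
    (hrec : ∀ t, lam (t + 1) = lam t - η * lam t ^ (2 * L - 1) + η * lam t ^ (L - 1))
    (hlam0 : 0 < lam 0) (hM : M = max 1 (lam 0))
    (hη0 : 0 < η)
    (hη : η < min (1 / (L : ℝ)) (2 / ((2 * (L : ℝ) - 1) * M ^ (2 * L - 2)))) :
    Filter.Tendsto lam Filter.atTop (nhds 1) := by
  obtain ⟨hη1, hη2⟩ := lt_min_iff.mp hη
  have hLr : (2 : ℝ) ≤ L := by exact_mod_cast hL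
  have hM1 : 1 ≤ M := hM ▸ le_max_left _ _
  have hηL : η * L < 1 := by rwa [lt_div_iff₀ (by linarith)] at hη1
  have hηM : η * ((2 * L - 1) * M ^ (2 * L - 2)) < 2 := by
    rw [lt_div_iff₀ (mul_pos (by linarith) (pow_pos (by linarith) _))] at hη2; linarith
  set m := min (lam 0) (1 - η * M ^ (2 * L - 2))
  have hm0 : 0 < m := lt_min hlam0 (by nlinarith [pow_pos (by linarith : (0 : ℝ) < M) (2 * L - 2)])
  have hmem : ∀ t, lam t ∈ Icc m M := by
    intro t
    induction t with
    | zero => exact ⟨min_le_left _ _, hM ▸ le_max_right _ _⟩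
    | succ t ih =>
      rw [hrec]
      exact mapsTo_step (by omega) hη0.le hηL.le hm0.le (min_le_right _ _) hM1 ih
  set q := max (1 - η * gain L m) (η * gain L M - 1)
  have hq0 : 0 ≤ q := (abs_nonneg _).trans (abs_one_sub_mul_gain_le hη0.le hm0.le (hmem 0))
  have hq1 : q < 1 := max_lt
    (by linarith [mul_pos hη0 (gain_pos (L := L) (by omega) hm0)])
    (by linarith [mul_gain_lt_two (by omega) hη0.le hM1 hηM])
  refine tendsto_of_dist_le_mul hq0 hq1 fun t => ?_
  rw [Real.dist_eq, Real.dist_eq, hrec]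
  exact abs_step_sub_one_le hη0.le hm0.le (hmem t)
end

section
/- Fix an integer L ≥ 2 and consider, for each i = 1, …, r, a sequence following the recursion λ_{i,t+1} = λ_{i,t} − η λ_{i,t}^{2L−1} + η λ_{i,t}^{L−1} with λ_{i,0} ∈ (0, M], where M = max over i of max{1, λ_{i,0}}, and suppose 0 < η < min{ 1/L, 1/M^{2L−2} }. Then: (i) there exists a constant C_min > 0 such that λ_{i,t} ≥ C_min for all t ≥ 0 and all i = 1, …, r; (ii) there exist T ∈ ℕ and a constant α > 0, independent of t, such that for all t ≥ T, min_{i = 1,…,r} λ_{i,t}^{2L−2} ≥ α. -/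
/-- For `r` sequences each following the depth-`L` shared-eigenvalue
gradient-descent recursion `λ_{i,t+1} = λ_{i,t} − η λ_{i,t}^{2L−1} + η λ_{i,t}^{L−1}`, with
`λ_{i,0} ∈ (0, M]` where `M = max_i max {1, λ_{i,0}}` and `0 < η < min {1/L, 1/M^{2L−2}}`:
(i) the iterates are uniformly bounded away from zero, and (ii) eventually
`min_i λ_{i,t}^{2L−2}` admits a positive lower bound `α` independent of `t`. -/
theorem statement12 (L : ℕ) (hL : 2 ≤ L) (r : ℕ) (hr : 1 ≤ r)
    (η M : ℝ) (lam : Fin r → ℕ → ℝ)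
    (hrec : ∀ i t, lam i (t + 1) =
      lam i t - η * lam i t ^ (2 * L - 1) + η * lam i t ^ (L - 1))
    (hlam0 : ∀ i, 0 < lam i 0 ∧ lam i 0 ≤ M)
    (hMub : ∀ i, max 1 (lam i 0) ≤ M) (hMmem : ∃ i, M = max 1 (lam i 0))
    (hη0 : 0 < η)
    (hη : η < min (1 / (L : ℝ)) (1 / M ^ (2 * L - 2))) :
    (∃ Cmin : ℝ, 0 < Cmin ∧ ∀ t, ∀ i, Cmin ≤ lam i t) ∧
    (∃ T : ℕ, ∃ α : ℝ, 0 < α ∧ ∀ t, T ≤ t → ∀ i, α ≤ lam i t ^ (2 * L - 2)) := by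
  obtain ⟨K, rfl⟩ : ∃ K, L = K + 2 := ⟨L - 2, by omega⟩
  have e1 : 2 * (K + 2) - 1 = 2 * K + 3 := by omega
  have e2 : (K + 2) - 1 = K + 1 := by omega
  have e3 : 2 * (K + 2) - 2 = 2 * K + 2 := by omega
  rw [lt_min_iff] at hη
  obtain ⟨hη1, hη2⟩ := hη
  have i0 : Fin r := ⟨0, hr⟩
  have hM1 : (1 : ℝ) ≤ M := le_trans (le_max_left 1 _) (hMub i0)
  have hM0 : (0 : ℝ) < M := by linarith
  have hηL : η * ((K : ℝ) + 2) < 1 := by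
    have h : (0 : ℝ) < (K : ℝ) + 2 := by positivity
    have hη1' : η < 1 / ((K : ℝ) + 2) := by push_cast at hη1; exact hη1
    have := (lt_div_iff₀ h).mp hη1'
    linarith
  have hηM : η * M ^ (2 * K + 2) < 1 := by
    rw [e3] at hη2
    have h : (0 : ℝ) < M ^ (2 * K + 2) := by positivity
    have := (lt_div_iff₀ h).mp hη2
    linarith
  have hrec' : ∀ i t, lam i (t + 1) =
      lam i t - η * lam i t ^ (2 * K + 3) + η * lam i t ^ (K + 1) := by
    intro i t
    rw [hrec i t, e1, e2]
  -- main invariant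
  have key : ∀ i t, min η (lam i 0) ≤ lam i t ∧ lam i t ≤ M := by
    intro i t
    induction t with
    | zero => exact ⟨min_le_right _ _, (hlam0 i).2⟩
    | succ t ih =>
      obtain ⟨ihl, ihu⟩ := ih
      set x := lam i t with hxdef
      have hx0 : 0 < x := lt_of_lt_of_le (lt_min hη0 (hlam0 i).1) ihl
      rw [hrec' i t]
      constructor
      · by_cases hx1 : x ≤ 1
        · -- nondecreasing below 1
          have h2 : x ^ (K + 2) ≤ 1 := pow_le_one₀ hx0.le hx1
          have h3 : (0 : ℝ) < x ^ (K + 1) := by positivity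
          have hid : x ^ (2 * K + 3) = x ^ (K + 1) * x ^ (K + 2) := by ring
          have : x ≤ x - η * x ^ (2 * K + 3) + η * x ^ (K + 1) := by
            rw [hid]
            nlinarith [mul_nonneg (mul_nonneg hη0.le h3.le)
              (sub_nonneg.mpr h2)]
          linarith
        · -- above 1: stays at least η
          push_neg at hx1
          have h1 : x ^ (2 * K + 2) ≤ M ^ (2 * K + 2) :=
            pow_le_pow_left₀ hx0.le ihu _
          have h4 : (1 : ℝ) ≤ x ^ (K + 1) := one_le_pow₀ hx1.le
          have hid : x ^ (2 * K + 3) = x * x ^ (2 * K + 2) := by ring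
          have h5 : 0 ≤ x * (1 - η * x ^ (2 * K + 2)) := by
            apply mul_nonneg hx0.le
            nlinarith
          have hmin : min η (lam i 0) ≤ η := min_le_left _ _
          have h6 : 0 ≤ η * (x ^ (K + 1) - 1) :=
            mul_nonneg hη0.le (by linarith)
          have : η ≤ x - η * x ^ (2 * K + 3) + η * x ^ (K + 1) := by
            rw [hid]
            nlinarith [h5, h6]
          linarith
      · by_cases hx1 : x ≤ 1
        · -- stays ≤ 1 ≤ M
          have hB : 1 + ((K : ℝ) + 2) * (x - 1) ≤ x ^ (K + 2) := by
            have := one_add_mul_le_pow (show (-2 : ℝ) ≤ x - 1 by linarith) (K + 2)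
            have hx : (1 : ℝ) + (x - 1) = x := by ring
            rw [hx] at this
            push_cast at this ⊢
            linarith
          have h2 : x ^ (K + 2) ≤ 1 := pow_le_one₀ hx0.le hx1
          have h2' : x ^ (K + 1) ≤ 1 := pow_le_one₀ hx0.le hx1
          have h3 : (0 : ℝ) < x ^ (K + 1) := by positivity
          have eA : η * (1 - x ^ (K + 2)) ≤ 1 - x := by
            nlinarith [mul_nonneg (show (0:ℝ) ≤ 1 - η * ((K : ℝ) + 2) by linarith)
              (show (0:ℝ) ≤ 1 - x by linarith),
              mul_le_mul_of_nonneg_left hB hη0.le]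
          have eB : η * x ^ (K + 1) * (1 - x ^ (K + 2)) ≤ η * (1 - x ^ (K + 2)) := by
            nlinarith [mul_nonneg (mul_nonneg hη0.le
              (show (0:ℝ) ≤ 1 - x ^ (K + 2) by linarith))
              (show (0:ℝ) ≤ 1 - x ^ (K + 1) by linarith)]
          have hid : x - η * x ^ (2 * K + 3) + η * x ^ (K + 1)
              = x + η * x ^ (K + 1) * (1 - x ^ (K + 2)) := by ring
          rw [hid]
          linarith
        · -- above 1: nonincreasing
          push_neg at hx1
          have h4 : (1 : ℝ) ≤ x ^ (K + 2) := one_le_pow₀ hx1.le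
          have h3 : (0 : ℝ) < x ^ (K + 1) := by positivity
          have hid : x ^ (2 * K + 3) = x ^ (K + 1) * x ^ (K + 2) := by ring
          have : x - η * x ^ (2 * K + 3) + η * x ^ (K + 1) ≤ x := by
            rw [hid]
            nlinarith [mul_nonneg (mul_nonneg hη0.le h3.le)
              (show (0:ℝ) ≤ x ^ (K + 2) - 1 by linarith)]
          linarith
  -- global constant
  have hne : (Finset.univ : Finset (Fin r)).Nonempty := ⟨i0, Finset.mem_univ _⟩
  set c := (Finset.univ.inf' hne fun i => lam i 0) with hc
  have hcpos : 0 < c := by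
    rw [hc, Finset.lt_inf'_iff]
    intro i _
    exact (hlam0 i).1
  have hCle : ∀ i t, min η c ≤ lam i t := by
    intro i t
    refine le_trans ?_ (key i t).1
    exact min_le_min le_rfl (Finset.inf'_le _ (Finset.mem_univ i))
  have hC0 : 0 < min η c := lt_min hη0 hcpos
  have hα : 0 < (min η c) ^ (2 * K + 2) := pow_pos hC0 _
  refine ⟨⟨min η c, hC0, fun t i => hCle i t⟩, 0, (min η c) ^ (2 * K + 2), hα,
    fun t _ i => ?_⟩
  rw [e3]
  exact pow_le_pow_left₀ hC0.le (hCle i t) _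
end

section
/- Let L ≥ 2 be an integer, η > 0, λ > 0, and set λ' = λ − η λ^{2L−1} + η λ^{L−1}. If λ' ≥ 0, then 1 − (λ')^L ≤ (1 − L η λ^{2L−2}) (1 − λ^L). -/
/-- One-step inequality for the depth-`L` recursion: if
`λ' = λ − η λ^{2L−1} + η λ^{L−1}` with `λ > 0`, `η > 0`, and `λ' ≥ 0`, then
`1 − (λ')^L ≤ (1 − L η λ^{2L−2}) (1 − λ^L)`. -/
theorem statement13 (L : ℕ) (hL : 2 ≤ L) (η lam lam' : ℝ)
    (hη : 0 < η) (hlam : 0 < lam)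
    (hrec : lam' = lam - η * lam ^ (2 * L - 1) + η * lam ^ (L - 1))
    (hlam' : 0 ≤ lam') :
    1 - lam' ^ L ≤ (1 - (L : ℝ) * η * lam ^ (2 * L - 2)) * (1 - lam ^ L) := by
  have hpow : lam ^ (2*L-1) = lam ^ L * lam ^ (L-1) := by
    rw [← pow_add]; congr 1; omega
  have hpow2 : lam ^ (2*L-2) = lam ^ (L-1) * lam ^ (L-1) := by
    rw [← pow_add]; congr 1; omega
  set d := η * lam ^ (L-1) * (1 - lam ^ L) with hd
  have hlam2 : lam' = lam + d := by rw [hrec, hd, hpow]; ring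
  have hpos : 0 ≤ lam + d := hlam2 ▸ hlam'
  have ha : -2 ≤ d / lam := by
    have h2 : -1 ≤ d / lam := by
      rw [le_div_iff₀ hlam]; linarith
    linarith
  have hb := one_add_mul_le_pow ha L
  have key : lam ^ L + L * lam^(L-1) * d ≤ lam' ^ L := by
    have h3 : lam' ^ L = lam ^ L * (1 + d/lam) ^ L := by
      rw [hlam2, ← mul_pow]
      congr 1
      field_simp
    rw [h3]
    have hLs : lam ^ L = lam * lam ^ (L-1) := by
      rw [← pow_succ']; congr 1; omega
    calc lam ^ L + L * lam^(L-1) * d = lam ^ L * (1 + L * (d/lam)) := by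
          rw [hLs]; field_simp
      _ ≤ lam ^ L * (1 + d/lam)^L :=
          mul_le_mul_of_nonneg_left hb (pow_pos hlam L).le
  have hfin : (1 - (L:ℝ)*η*lam^(2*L-2)) * (1 - lam^L) = 1 - lam^L - L*lam^(L-1)*d := by
    rw [hpow2, hd]; ring
  linarith
end

section
/- Fix an integer L ≥ 2, η > 0, α > 0, and for each i = 1, …, r let (λ_{i,t})_{t≥0} follow the recursion λ_{i,t+1} = λ_{i,t} − η λ_{i,t}^{2L−1} + η λ_{i,t}^{L−1}. Suppose that for all t ≥ 0 and all i: λ_{i,t} ∈ (0, 1] and α ≤ λ_{i,t}^{2L−2} and L η λ_{i,t}^{2L−2} ≤ 1. Define the excess loss L̃_t = (1/2) Σ_{i=1}^{r} (1 − λ_{i,t}^L)². Then for all t ≥ 0, L̃_t ≤ e^{−2 L α η t} · L̃_0. -/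
/-- Bernoulli-type inequality: `(a+d)^(n+1) ≥ a^(n+1) + (n+1) a^n d` for `a, d ≥ 0`. -/
lemma statement14_bern (a d : ℝ) (ha : 0 ≤ a) (hd : 0 ≤ d) (n : ℕ) :
    a ^ (n + 1) + ((n : ℝ) + 1) * a ^ n * d ≤ (a + d) ^ (n + 1) := by
  induction n with
  | zero => simp
  | succ n ih =>
    push_cast
    have hpow : 0 ≤ a ^ n := pow_nonneg ha n
    have hnn : (0 : ℝ) ≤ ((n : ℝ) + 1) * a ^ n * (d * d) := by positivity
    have had : 0 ≤ a + d := by linarith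
    calc a ^ (n + 1 + 1) + ((n : ℝ) + 1 + 1) * a ^ (n + 1) * d
        ≤ (a + d) * (a ^ (n + 1) + ((n : ℝ) + 1) * a ^ n * d) := by
          have h2 : a ^ (n + 1 + 1) = a * a ^ (n + 1) := by ring
          have h3 : ((n : ℝ) + 1) * a ^ n * d * a = ((n : ℝ) + 1) * a ^ (n + 1) * d := by
            rw [pow_succ]; ring
          nlinarith [hnn, h2, h3]
      _ ≤ (a + d) * (a + d) ^ (n + 1) := mul_le_mul_of_nonneg_left ih had
      _ = (a + d) ^ (n + 1 + 1) := by ring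

/-- One-step contraction for a single eigenvalue. -/
lemma statement14_step (L : ℕ) (hL : 2 ≤ L) (η α : ℝ) (hη : 0 < η) (hα : 0 < α)
    (a b : ℝ) (hrec : b = a - η * a ^ (2 * L - 1) + η * a ^ (L - 1))
    (ha : a ∈ Set.Ioc (0 : ℝ) 1) (hb : b ∈ Set.Ioc (0 : ℝ) 1)
    (hlow : α ≤ a ^ (2 * L - 2))
    (hstep : (L : ℝ) * η * a ^ (2 * L - 2) ≤ 1) :
    (1 - b ^ L) ^ 2 ≤ Real.exp (-(2 * (L : ℝ) * α * η)) * (1 - a ^ L) ^ 2 := by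
  obtain ⟨M, rfl⟩ : ∃ M, L = M + 1 := ⟨L - 1, by omega⟩
  rw [show 2 * (M + 1) - 1 = 2 * M + 1 from by omega] at hrec
  rw [show 2 * (M + 1) - 2 = 2 * M from by omega] at hlow hstep
  rw [show M + 1 - 1 = M from by omega] at hrec
  obtain ⟨ha0, ha1⟩ := ha
  obtain ⟨hb0, hb1⟩ := hb
  have haL1 : a ^ (M + 1) ≤ 1 := pow_le_one₀ ha0.le ha1
  have hbL1 : b ^ (M + 1) ≤ 1 := pow_le_one₀ hb0.le hb1
  set d : ℝ := η * a ^ M * (1 - a ^ (M + 1)) with hd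
  have h1 : a ^ M * a ^ (M + 1) = a ^ (2 * M + 1) := by rw [← pow_add]; congr 1; omega
  have h2 : a ^ M * a ^ M = a ^ (2 * M) := by rw [← pow_add]; congr 1; omega
  have hbad : b = a + d := by
    rw [hrec, hd]; linear_combination η * h1
  have hd0 : 0 ≤ d := by
    rw [hd]
    exact mul_nonneg (mul_nonneg hη.le (pow_nonneg ha0.le M)) (by linarith)
  have hbern := statement14_bern a d ha0.le hd0 M
  have hkey : a ^ (M + 1) + ((M : ℝ) + 1) * η * a ^ (2 * M) * (1 - a ^ (M + 1))
      ≤ b ^ (M + 1) := by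
    rw [hbad]
    refine le_trans (le_of_eq ?_) hbern
    rw [hd]; linear_combination ((M : ℝ) + 1) * η * (1 - a ^ (M + 1)) * h2.symm
  have hLcast : ((M + 1 : ℕ) : ℝ) = (M : ℝ) + 1 := by push_cast; ring
  rw [hLcast] at hstep ⊢
  set c : ℝ := ((M : ℝ) + 1) * η * a ^ (2 * M) with hc
  have hcα : ((M : ℝ) + 1) * α * η ≤ c := by
    rw [hc]
    have h := mul_le_mul_of_nonneg_left hlow
      (show (0 : ℝ) ≤ ((M : ℝ) + 1) * η by positivity)
    nlinarith [h]
  have hone : 0 ≤ 1 - b ^ (M + 1) := by linarith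
  have hLαη : ((M : ℝ) + 1) * α * η ≤ 1 := le_trans hcα hstep
  have h1' : 1 - b ^ (M + 1) ≤ (1 - ((M : ℝ) + 1) * α * η) * (1 - a ^ (M + 1)) := by
    have step1 : 1 - b ^ (M + 1) ≤ (1 - c) * (1 - a ^ (M + 1)) := by nlinarith [hkey]
    refine step1.trans ?_
    nlinarith [mul_nonneg (sub_nonneg.2 hcα) (sub_nonneg.2 haL1)]
  have hcnn : 0 ≤ 1 - ((M : ℝ) + 1) * α * η := by linarith
  have hexp : 1 - ((M : ℝ) + 1) * α * η ≤ Real.exp (-(((M : ℝ) + 1) * α * η)) := by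
    have := Real.add_one_le_exp (-(((M : ℝ) + 1) * α * η))
    linarith
  have hrhs0 : 0 ≤ (1 - ((M : ℝ) + 1) * α * η) * (1 - a ^ (M + 1)) :=
    mul_nonneg hcnn (by linarith)
  have hsq : (1 - b ^ (M + 1)) ^ 2 ≤
      ((1 - ((M : ℝ) + 1) * α * η) * (1 - a ^ (M + 1))) ^ 2 :=
    sq_le_sq' (by linarith) h1'
  calc (1 - b ^ (M + 1)) ^ 2
      ≤ (1 - ((M : ℝ) + 1) * α * η) ^ 2 * (1 - a ^ (M + 1)) ^ 2 := by
        rw [← mul_pow]; exact hsq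
    _ ≤ Real.exp (-(((M : ℝ) + 1) * α * η)) ^ 2 * (1 - a ^ (M + 1)) ^ 2 :=
        mul_le_mul_of_nonneg_right (pow_le_pow_left₀ hcnn hexp 2) (sq_nonneg _)
    _ = Real.exp (-(2 * ((M : ℝ) + 1) * α * η)) * (1 - a ^ (M + 1)) ^ 2 := by
        have harg : ((2 : ℕ) : ℝ) * -(((M : ℝ) + 1) * α * η) = -(2 * ((M : ℝ) + 1) * α * η) := by
          push_cast; ring
        rw [← Real.exp_nat_mul, harg]

/-- Linear convergence of the excess loss
`L̃_t = (1/2) Σ_{i=1}^{r} (1 − λ_{i,t}^L)²` of a depth-`L` deep linear network whose shared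
eigenvalues follow `λ_{i,t+1} = λ_{i,t} − η λ_{i,t}^{2L−1} + η λ_{i,t}^{L−1}`, under
`λ_{i,t} ∈ (0, 1]`, `α ≤ λ_{i,t}^{2L−2}` and `L η λ_{i,t}^{2L−2} ≤ 1`:
`L̃_t ≤ e^{−2Lαηt} L̃_0`. -/
theorem statement14 (L : ℕ) (hL : 2 ≤ L) (η α : ℝ) (hη : 0 < η) (hα : 0 < α)
    (r : ℕ) (lam : Fin r → ℕ → ℝ)
    (hrec : ∀ i t, lam i (t + 1) =
      lam i t - η * lam i t ^ (2 * L - 1) + η * lam i t ^ (L - 1))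
    (hmem : ∀ i t, lam i t ∈ Set.Ioc (0 : ℝ) 1)
    (hlow : ∀ i t, α ≤ lam i t ^ (2 * L - 2))
    (hstep : ∀ i t, (L : ℝ) * η * lam i t ^ (2 * L - 2) ≤ 1) :
    ∀ t : ℕ, (1 / 2 : ℝ) * ∑ i, (1 - lam i t ^ L) ^ 2 ≤
      Real.exp (-(2 * (L : ℝ) * α * η * t)) * ((1 / 2 : ℝ) * ∑ i, (1 - lam i 0 ^ L) ^ 2) := by
  intro t
  induction t with
  | zero => simp
  | succ t ih =>
    have hsum : ∑ i, (1 - lam i (t + 1) ^ L) ^ 2 ≤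
        Real.exp (-(2 * (L : ℝ) * α * η)) * ∑ i, (1 - lam i t ^ L) ^ 2 := by
      rw [Finset.mul_sum]
      exact Finset.sum_le_sum fun i _ =>
        statement14_step L hL η α hη hα (lam i t) (lam i (t + 1)) (hrec i t)
          (hmem i t) (hmem i (t + 1)) (hlow i t) (hstep i t)
    have hexp : Real.exp (-(2 * (L : ℝ) * α * η)) * Real.exp (-(2 * (L : ℝ) * α * η * t)) =
        Real.exp (-(2 * (L : ℝ) * α * η * ((t : ℕ) + 1 : ℕ))) := by
      rw [← Real.exp_add]; push_cast; ring_nf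
    calc (1 / 2 : ℝ) * ∑ i, (1 - lam i (t + 1) ^ L) ^ 2
        ≤ (1 / 2 : ℝ) * (Real.exp (-(2 * (L : ℝ) * α * η)) * ∑ i, (1 - lam i t ^ L) ^ 2) := by
          linarith
      _ = Real.exp (-(2 * (L : ℝ) * α * η)) * ((1 / 2 : ℝ) * ∑ i, (1 - lam i t ^ L) ^ 2) := by
          ring
      _ ≤ Real.exp (-(2 * (L : ℝ) * α * η)) *
          (Real.exp (-(2 * (L : ℝ) * α * η * t)) * ((1 / 2 : ℝ) * ∑ i, (1 - lam i 0 ^ L) ^ 2)) :=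
          mul_le_mul_of_nonneg_left ih (Real.exp_pos _).le
      _ = _ := by rw [← mul_assoc, hexp]
end

section
/- Let L ≥ 2, d_0 ≥ 1, d_L ≥ 1, and 1 ≤ r ≤ min{d_0, d_L}. Let U₁ ∈ ℝ^{d_L×r} and V₁ ∈ ℝ^{d_0×r} have orthonormal columns, let λ₁, …, λ_r > 0, and define G as in the general Gram-matrix construction. Suppose λ_i ∈ [m − δ, m + δ] for all i, with 0 < δ < m and (m + δ)/(m − δ) < L^{1/(2(L−1))}. Let E be a symmetric d_L d_0 × d_L d_0 real matrix with ‖E‖₂ ≤ ε. Then the eigenvalues of H := G + E, counted with multiplicity, split into three groups: (i) r² eigenvalues lying in [L(m − δ)^{2(L−1)} − ε, L(m + δ)^{2(L−1)} + ε]; (ii) (d_0 + d_L − 2r)r eigenvalues lying in [(m − δ)^{2(L−1)} − ε, (m + δ)^{2(L−1)} + ε]; (iii) (d_L − r)(d_0 − r) eigenvalues lying in [−ε, ε]. Moreover, if additionally ε < (m − δ)^{2(L−1)}, then for any eigenvalue λ_dom from group (i) and any eigenvalue λ_bulk from group (ii), L · ((m−δ)^{2(L−1)} − ε/L) / ((m+δ)^{2(L−1)}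 + ε) ≤ λ_dom/λ_bulk ≤ L · ((m+δ)^{2(L−1)} + ε/L) / ((m−δ)^{2(L−1)} − ε). -/
open Matrix
open scoped Kronecker

/-- The spectral norm (largest singular value) of a real matrix, i.e. the operator norm of
the induced linear map between Euclidean spaces. -/
noncomputable def matSpectralNorm {m n : Type*} [Fintype m] [Fintype n] [DecidableEq n]
    (A : Matrix m n ℝ) : ℝ :=
  ‖LinearMap.toContinuousLinearMap (Matrix.toEuclideanLin A)‖

/-!
Extend the columns of `U₁` and `V₁` to orthonormal bases `(u_k)` and `(v_l)`. Every Kronecker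
factor of `G` is diagonal in these bases, so `G` is diagonal in the basis `(u_k ⊗ v_l)`. When both
`u_k` and `v_l` are columns, the eigenvalue is a sum of `L` monomials `λ_i^{2(L-l)} λ_j^{2(l-1)}`,
each in `[(m-δ)^{2(L-1)}, (m+δ)^{2(L-1)}]`. When exactly one of them is a column, it is a single
power `λ^{2(L-1)}`. Otherwise it is `0`. These are the three groups for `G`.

A Courant–Fischer counting argument carries them over to `H = G + E`. If the quadratic form of `G`
is `≥ a` on a subspace of dimension `n`, that subspace meets the span of the eigenvectors of `H`
with eigenvalue `< a - ε` only in `0`, so `H` has at least `n` eigenvalues `≥ a - ε`; the bound from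
above is symmetric. Cutting the sorted spectrum of `H` at these counts gives the three groups. The
ratio bounds are then interval arithmetic.
-/

open Module Finset
open scoped RealInnerProductSpace

section MinMax

variable {ι κ F : Type*} [Fintype ι] [Fintype κ] [NormedAddCommGroup F] [InnerProductSpace ℝ F]

namespace OrthonormalBasis

variable (b : OrthonormalBasis ι ℝ F) {T : F →ₗ[ℝ] F} {μ : ι → ℝ}

theorem inner_map_self_eq_sum (hT : ∀ i, T (b i) = μ i • b i) (x : F) :
    ⟪x, T x⟫ = ∑ i, μ i * ⟪b i, x⟫ ^ 2 := by
  conv_lhs => rw [← b.sum_repr' x, map_sum]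
  simp only [map_smul, hT, inner_sum, real_inner_smul_right]
  exact sum_congr rfl fun i _ => by rw [b.sum_repr', real_inner_comm]; ring

theorem inner_eq_zero_of_mem_span_image {S : Set ι} {x : F}
    (hx : x ∈ Submodule.span ℝ (b '' S)) {i : ι} (hi : i ∉ S) : ⟪b i, x⟫ = 0 := by
  rw [← b.coe_toBasis, Basis.mem_span_image] at hx
  simpa [OrthonormalBasis.repr_apply_apply] using Finsupp.notMem_support_iff.mp fun h => hi (hx h)

theorem finrank_span_image (S : Finset ι) :
    finrank ℝ (Submodule.span ℝ (b '' S)) = #S := by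
  rw [Set.image_eq_range]
  exact (finrank_span_eq_card (b.orthonormal.linearIndependent.comp _ Subtype.val_injective)).trans
    (Fintype.card_coe S)

theorem mul_norm_sq_sub_inner_map_self (hT : ∀ i, T (b i) = μ i • b i) (a : ℝ) (x : F) :
    a * ‖x‖ ^ 2 - ⟪x, T x⟫ = ∑ i, (a - μ i) * ⟪b i, x⟫ ^ 2 := by
  rw [b.inner_map_self_eq_sum hT, ← b.sum_sq_inner_right, mul_sum, ← sum_sub_distrib]
  exact sum_congr rfl fun i _ => by ring

theorem mul_norm_sq_le_inner_map_self (hT : ∀ i, T (b i) = μ i • b i) {S : Set ι} {a : ℝ}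
    (ha : ∀ i ∈ S, a ≤ μ i) {x : F} (hx : x ∈ Submodule.span ℝ (b '' S)) :
    a * ‖x‖ ^ 2 ≤ ⟪x, T x⟫ := by
  rw [← sub_nonpos, b.mul_norm_sq_sub_inner_map_self hT]
  refine sum_nonpos fun i _ => ?_
  by_cases hi : i ∈ S
  · exact mul_nonpos_of_nonpos_of_nonneg (by linarith [ha i hi]) (sq_nonneg _)
  · simp [b.inner_eq_zero_of_mem_span_image hx hi]

theorem inner_map_self_lt_mul_norm_sq (hT : ∀ i, T (b i) = μ i • b i) {S : Set ι} {a : ℝ}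
    (ha : ∀ i ∈ S, μ i < a) {x : F} (hx : x ∈ Submodule.span ℝ (b '' S)) (hx0 : x ≠ 0) :
    ⟪x, T x⟫ < a * ‖x‖ ^ 2 := by
  rw [← sub_pos, b.mul_norm_sq_sub_inner_map_self hT]
  obtain ⟨j, hj⟩ : ∃ j, ⟪b j, x⟫ ≠ 0 := by
    by_contra! h
    exact hx0 (by simpa [h] using (b.sum_repr' x).symm)
  have hjS : j ∈ S := by
    by_contra hjS
    exact hj (b.inner_eq_zero_of_mem_span_image hx hjS)
  refine sum_pos' (fun i _ => ?_) ⟨j, mem_univ _, mul_pos (by linarith [ha j hjS]) (by positivity)⟩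
  by_cases hi : i ∈ S
  · exact mul_nonneg (by linarith [ha i hi]) (sq_nonneg _)
  · simp [b.inner_eq_zero_of_mem_span_image hx hi]

end OrthonormalBasis

theorem card_eigenvalues_ge_le_of_inner_map_self_le {T T' : F →ₗ[ℝ] F} {μ : ι → ℝ} {μ' : κ → ℝ}
    (b : OrthonormalBasis ι ℝ F) (b' : OrthonormalBasis κ ℝ F) (hT : ∀ i, T (b i) = μ i • b i)
    (hT' : ∀ k, T' (b' k) = μ' k • b' k) {ε : ℝ}
    (hTT' : ∀ x, ⟪x, T x⟫ - ε * ‖x‖ ^ 2 ≤ ⟪x, T' x⟫) (a : ℝ) :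
    #{i | a ≤ μ i} ≤ #{k | a - ε ≤ μ' k} := by
  have := b.toBasis.finiteDimensional_of_finite
  set S : Finset ι := {i | a ≤ μ i}
  set W : Finset κ := {k | μ' k < a - ε}
  have hW : #W + #{k | a - ε ≤ μ' k} = finrank ℝ F := by
    have h := card_filter_add_card_filter_not (s := univ) (p := fun k => μ' k < a - ε)
    simp only [not_lt] at h
    rw [h, card_univ, finrank_eq_card_basis b'.toBasis]
  have hdisj : Disjoint (Submodule.span ℝ (b '' S)) (Submodule.span ℝ (b' '' W)) := by
    rw [Submodule.disjoint_def]
    intro x hxS hxW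
    by_contra hx0
    have h₁ := b.mul_norm_sq_le_inner_map_self hT (S := S) (a := a) (by simp [S]) hxS
    have h₂ := b'.inner_map_self_lt_mul_norm_sq hT' (S := W) (a := a - ε) (by simp [W]) hxW hx0
    linarith [hTT' x]
  have := Submodule.finrank_add_finrank_le_of_disjoint hdisj
  rw [b.finrank_span_image, b'.finrank_span_image] at this
  omega

end MinMax

section Counting

variable {ι γ : Type*} [Fintype ι] [Fintype γ] {P : ι → Prop} [DecidablePred P]

theorem card_filter_comp_equiv (e : γ ≃ ι) (p : ι → Prop) [DecidablePred p] :
    #{c | p (e c)} = #{i | p i} := by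
  simp only [card_filter]
  exact e.sum_comp fun i => if p i then 1 else 0

theorem card_filter_lt_eq_sub (f : ι → ℝ) (c : ℝ) :
    #{i | f i < c} = Fintype.card ι - #{i | c ≤ f i} := by
  have h := card_filter_add_card_filter_not (s := univ) (p := fun i => f i < c)
  simp only [not_lt, card_univ] at h
  omega

theorem card_le_card_filter_of_injective {f : γ → ι} (hf : Function.Injective f)
    (hP : ∀ c, P (f c)) : Fintype.card γ ≤ #{i | P i} := by
  rw [← card_univ]
  exact card_le_card_of_injOn f (fun c _ => by simpa using hP c) hf.injOn

theorem card_sub_le_card_filter_of_subset_range {f : γ → ι}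
    (hP : ∀ i, ¬ P i → i ∈ Set.range f) : Fintype.card ι - Fintype.card γ ≤ #{i | P i} := by
  classical
  have h₁ : #{i | ¬ P i} ≤ Fintype.card γ :=
    calc #{i | ¬ P i} ≤ #(univ.image f) := card_le_card fun i hi => by
          simpa using hP i (mem_filter.1 hi).2
      _ ≤ Fintype.card γ := card_image_le.trans_eq card_univ
  have h₂ := card_filter_add_card_filter_not (s := univ) (p := fun i => P i)
  rw [card_univ] at h₂
  omega

theorem forall_of_card_le_card_filter (h : Fintype.card ι ≤ #{i | P i}) (i : ι) : P i :=
  (card_filter_eq_iff (s := univ)).1 (le_antisymm (card_le_univ _) h) i (mem_univ i)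

end Counting

section Perturbation

variable {ι κ : Type*} [Fintype ι] [DecidableEq ι] [Fintype κ]

theorem abs_inner_toEuclideanLin_self_le (A : Matrix ι ι ℝ) (x : EuclideanSpace ℝ ι) :
    |⟪x, toEuclideanLin A x⟫| ≤ matSpectralNorm A * ‖x‖ ^ 2 :=
  calc |⟪x, toEuclideanLin A x⟫| ≤ ‖x‖ * ‖toEuclideanLin A x‖ := abs_real_inner_le_norm _ _
    _ ≤ ‖x‖ * (matSpectralNorm A * ‖x‖) := mul_le_mul_of_nonneg_left
        ((LinearMap.toContinuousLinearMap (toEuclideanLin A)).le_opNorm x) (norm_nonneg x)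
    _ = matSpectralNorm A * ‖x‖ ^ 2 := by ring

theorem toEuclideanLin_eq_smul_of_mulVec_eq_smul {A : Matrix ι ι ℝ} {v : EuclideanSpace ℝ ι}
    {c : ℝ} (h : A *ᵥ v = c • ⇑v) : toEuclideanLin A v = c • v := by
  rw [toLpLin_apply, h]
  rfl

theorem card_le_card_eigenvalues_add {G E : Matrix ι ι ℝ} (hH : (G + E).IsHermitian)
    (w : OrthonormalBasis κ ℝ (EuclideanSpace ℝ ι)) {d : κ → ℝ}
    (hw : ∀ k, G *ᵥ w k = d k • ⇑(w k)) {ε : ℝ} (hE : matSpectralNorm E ≤ ε) (a : ℝ) :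
    #{k | a ≤ d k} ≤ #{i | a - ε ≤ hH.eigenvalues i} ∧
      #{k | d k ≤ a} ≤ #{i | hH.eigenvalues i ≤ a + ε} := by
  have hG k : toEuclideanLin G (w k) = d k • w k :=
    toEuclideanLin_eq_smul_of_mulVec_eq_smul (hw k)
  have hH' i : toEuclideanLin (G + E) (hH.eigenvectorBasis i) =
      hH.eigenvalues i • hH.eigenvectorBasis i :=
    toEuclideanLin_eq_smul_of_mulVec_eq_smul (hH.mulVec_eigenvectorBasis i)
  have hGE x : |⟪x, toEuclideanLin (G + E) x⟫ - ⟪x, toEuclideanLin G x⟫| ≤ ε * ‖x‖ ^ 2 := by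
    rw [map_add, LinearMap.add_apply, inner_add_right, add_sub_cancel_left]
    exact (abs_inner_toEuclideanLin_self_le E x).trans
      (mul_le_mul_of_nonneg_right hE (sq_nonneg _))
  constructor
  · exact card_eigenvalues_ge_le_of_inner_map_self_le w hH.eigenvectorBasis hG hH'
      (fun x => by linarith [(abs_le.1 (hGE x)).1]) a
  · -- the upper count is the lower count for `-G` and `-(G + E)`
    have h := card_eigenvalues_ge_le_of_inner_map_self_le (T := -toEuclideanLin G)
      (T' := -toEuclideanLin (G + E)) (μ := -d) (μ' := -hH.eigenvalues) (ε := ε)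
      w hH.eigenvectorBasis (fun k => by simp [hG])
      (fun i => by rw [LinearMap.neg_apply, hH', Pi.neg_apply, neg_smul])
      (fun x => by
        simp only [LinearMap.neg_apply, inner_neg_right]
        linarith [(abs_le.1 (hGE x)).2])
      (-a)
    convert h using 2 <;> ext <;> simp only [mem_filter, mem_univ, true_and, Pi.neg_apply] <;>
      constructor <;> intro <;> linarith

theorem eigenvalues_add_mem_Icc {G E : Matrix ι ι ℝ} (hH : (G + E).IsHermitian)
    (w : OrthonormalBasis κ ℝ (EuclideanSpace ℝ ι)) {d : κ → ℝ}
    (hw : ∀ k, G *ᵥ w k = d k • ⇑(w k)) {ε : ℝ} (hE : matSpectralNorm E ≤ ε) {a b : ℝ}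
    (hd : ∀ k, d k ∈ Set.Icc a b) (i : ι) :
    hH.eigenvalues i ∈ Set.Icc (a - ε) (b + ε) := by
  have hκ : Fintype.card κ = Fintype.card ι := by
    rw [← finrank_eq_card_basis w.toBasis, finrank_euclideanSpace]
  have hlo := (card_le_card_eigenvalues_add hH w hw hE a).1
  have hhi := (card_le_card_eigenvalues_add hH w hw hE b).2
  rw [(card_filter_eq_iff (s := univ)).2 fun k _ => (hd k).1, card_univ, hκ] at hlo
  rw [(card_filter_eq_iff (s := univ)).2 fun k _ => (hd k).2, card_univ, hκ] at hhi
  exact ⟨forall_of_card_le_card_filter hlo i, forall_of_card_le_card_filter hhi i⟩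

end Perturbation

section Sorting

variable {ι : Type*} [Fintype ι]

theorem exists_equiv_fin_monotone (f : ι → ℝ) :
    ∃ e : ι ≃ Fin (Fintype.card ι), Monotone (f ∘ e.symm) := by
  let e₀ := Fintype.equivFin ι
  exact ⟨e₀.trans (Tuple.sort (f ∘ e₀.symm)).symm, Tuple.monotone_sort (f ∘ e₀.symm)⟩

theorem Fin.card_filter_le_val (n t : ℕ) : #{k : Fin n | t ≤ (k : ℕ)} = n - t := by
  have h := card_filter_add_card_filter_not (s := univ) (p := fun k : Fin n => (k : ℕ) < t)
  simp only [not_lt, Fin.card_filter_val_lt, card_univ, Fintype.card_fin] at h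
  omega

theorem Monotone.le_of_lt_card_filter_le {n : ℕ} {g : Fin n → ℝ} (hg : Monotone g) {c : ℝ}
    {k : Fin n} (hk : (k : ℕ) < #{j | g j ≤ c}) : g k ≤ c :=
  (Fin.lt_card_filter_univ_iff_apply_of_imp _ fun _ _ hji hi => (hg hji).trans hi).1 hk

theorem Monotone.le_of_card_filter_lt_le {n : ℕ} {g : Fin n → ℝ} (hg : Monotone g) {c : ℝ}
    {k : Fin n} (hk : #{j | g j < c} ≤ (k : ℕ)) : c ≤ g k :=
  not_lt.1 fun h => hk.not_gt <|
    (Fin.lt_card_filter_univ_iff_apply_of_imp _ fun _ _ hji hi => (hg hji).trans_lt hi).2 h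

theorem exists_three_blocks [DecidableEq ι] (f : ι → ℝ) {n₁ n₃ : ℕ}
    (hn : n₁ + n₃ ≤ Fintype.card ι) {a₁ a₂ b₂ b₃ : ℝ} (h₁ : n₁ ≤ #{i | a₁ ≤ f i})
    (h₂ : Fintype.card ι - n₁ ≤ #{i | f i ≤ b₂}) (h₃ : Fintype.card ι - n₃ ≤ #{i | a₂ ≤ f i})
    (h₄ : n₃ ≤ #{i | f i ≤ b₃}) :
    ∃ S₁ S₂ S₃ : Finset ι, Disjoint S₁ S₂ ∧ Disjoint S₁ S₃ ∧ Disjoint S₂ S₃ ∧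
      S₁ ∪ S₂ ∪ S₃ = univ ∧ #S₁ = n₁ ∧ #S₂ = Fintype.card ι - n₁ - n₃ ∧ #S₃ = n₃ ∧
      (∀ i ∈ S₁, a₁ ≤ f i) ∧ (∀ i ∈ S₂, f i ∈ Set.Icc a₂ b₂) ∧ ∀ i ∈ S₃, f i ≤ b₃ := by
  obtain ⟨e, hg⟩ := exists_equiv_fin_monotone f
  have hf i : f i = (f ∘ e.symm) (e i) := by simp
  have hcount (P : ℝ → Prop) [DecidablePred P] : #{k | P ((f ∘ e.symm) k)} = #{i | P (f i)} :=
    card_filter_comp_equiv e.symm fun i => P (f i)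
  -- `S₃`, `S₂`, `S₁` are consecutive segments of the increasing rearrangement `f ∘ e.symm`.
  set S₁ : Finset ι := {i | Fintype.card ι - n₁ ≤ e i}
  set S₂ : Finset ι := {i | n₃ ≤ e i ∧ (e i : ℕ) < Fintype.card ι - n₁}
  set S₃ : Finset ι := {i | (e i : ℕ) < n₃}
  have d₁₂ : Disjoint S₁ S₂ := disjoint_filter.2 fun _ _ _ _ => by omega
  have d₁₃ : Disjoint S₁ S₃ := disjoint_filter.2 fun _ _ _ _ => by omega
  have d₂₃ : Disjoint S₂ S₃ := disjoint_filter.2 fun _ _ _ _ => by omega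
  have hU : S₁ ∪ S₂ ∪ S₃ = univ := by
    ext i
    simp only [S₁, S₂, S₃, mem_union, mem_filter, mem_univ, true_and, iff_true]
    omega
  have c₁ : #S₁ = n₁ :=
    (card_filter_comp_equiv e fun k : Fin _ => Fintype.card ι - n₁ ≤ (k : ℕ)).trans
      (by rw [Fin.card_filter_le_val]; omega)
  have c₃ : #S₃ = n₃ :=
    (card_filter_comp_equiv e fun k : Fin _ => (k : ℕ) < n₃).trans
      (by rw [Fin.card_filter_val_lt]; omega)
  have c₂ : #S₂ = Fintype.card ι - n₁ - n₃ := by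
    have h := card_union_of_disjoint (disjoint_union_left.2 ⟨d₁₃, d₂₃⟩)
    rw [hU, card_univ, card_union_of_disjoint d₁₂] at h
    omega
  refine ⟨S₁, S₂, S₃, d₁₂, d₁₃, d₂₃, hU, c₁, c₂, c₃, fun i hi => ?_, fun i hi => ?_,
    fun i hi => ?_⟩ <;> simp only [S₁, S₂, S₃, mem_filter] at hi <;> rw [hf i]
  · exact hg.le_of_card_filter_lt_le (by rw [hcount (· < a₁), card_filter_lt_eq_sub]; omega)
  · exact ⟨hg.le_of_card_filter_lt_le (by rw [hcount (· < a₂), card_filter_lt_eq_sub]; omega),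
      hg.le_of_lt_card_filter_le (by rw [hcount (· ≤ b₂)]; omega)⟩
  · exact hg.le_of_lt_card_filter_le (by rw [hcount (· ≤ b₃)]; omega)

end Sorting

section ColumnExtension

variable {n r : ℕ} {U : Matrix (Fin n) (Fin r) ℝ}

theorem inner_toLp_col (j : Fin r) (v : EuclideanSpace ℝ (Fin n)) :
    ⟪WithLp.toLp 2 (U.col j), v⟫ = (Uᵀ *ᵥ v) j := by
  simp [EuclideanSpace.inner_eq_star_dotProduct, mulVec, dotProduct, mul_comm]

theorem orthonormal_toLp_col (hU : Uᵀ * U = 1) :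
    Orthonormal ℝ fun j => WithLp.toLp 2 (U.col j) := by
  refine orthonormal_iff_ite.2 fun i j => ?_
  rw [inner_toLp_col, ← mulVec_single_one, mulVec_mulVec, hU, one_mulVec]
  simp [Pi.single_apply]

theorem exists_orthonormalBasis_extending_cols (hU : Uᵀ * U = 1) (hrn : r ≤ n) :
    ∃ b : OrthonormalBasis (Fin r ⊕ Fin (n - r)) ℝ (EuclideanSpace ℝ (Fin n)),
      ∀ j, b (Sum.inl j) = WithLp.toLp 2 (U.col j) := by
  have hv : Orthonormal ℝ ((Set.range Sum.inl).domRestrict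
      (Sum.elim (fun j => WithLp.toLp 2 (U.col j)) 0 : Fin r ⊕ Fin (n - r) → _)) := by
    refine orthonormal_iff_ite.2 ?_
    rintro ⟨_, i, rfl⟩ ⟨_, j, rfl⟩
    simpa [Subtype.ext_iff] using orthonormal_iff_ite.1 (orthonormal_toLp_col hU) i j
  obtain ⟨b, hb⟩ := hv.exists_orthonormalBasis_extension_of_card_eq (by simp; omega)
  exact ⟨b, fun j => hb _ ⟨j, rfl⟩⟩

theorem mul_diagonal_mul_transpose_mulVec (hU : Uᵀ * U = 1) {s : ℕ}
    (b : OrthonormalBasis (Fin r ⊕ Fin s) ℝ (EuclideanSpace ℝ (Fin n)))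
    (hb : ∀ j, b (Sum.inl j) = WithLp.toLp 2 (U.col j)) (f : Fin r → ℝ) (k : Fin r ⊕ Fin s) :
    (U * diagonal f * Uᵀ) *ᵥ b k = Sum.elim f 0 k • ⇑(b k) := by
  rcases k with j | k
  · have hUU : (U * diagonal f * Uᵀ) * U = U * diagonal f := by
      rw [Matrix.mul_assoc, hU, Matrix.mul_one]
    rw [hb, ← mulVec_single_one]
    simp only [mulVec_mulVec, hUU]
    rw [← mulVec_mulVec, diagonal_mulVec_single, mul_one, Sum.elim_inl, ← mulVec_smul]
    congr 1
    ext i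
    simp [Pi.single_apply]
  · have hUb : Uᵀ *ᵥ b (Sum.inr k) = 0 := by
      ext j
      rw [← inner_toLp_col, ← hb]
      exact b.orthonormal.2 (by simp)
    simp [← mulVec_mulVec, hUb]

end ColumnExtension

section Kronecker

variable {m n ι κ : Type*} [Fintype m] [Fintype n] [Fintype ι] [Fintype κ]

theorem kronecker_mulVec_mul (A : Matrix m m ℝ) (B : Matrix n n ℝ) (x : m → ℝ) (y : n → ℝ) :
    (A ⊗ₖ B) *ᵥ (fun q => x q.1 * y q.2) = fun q => (A *ᵥ x) q.1 * (B *ᵥ y) q.2 := by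
  ext q
  simp only [mulVec, dotProduct, kroneckerMap_apply, Fintype.sum_prod_type, sum_mul_sum]
  exact sum_congr rfl fun _ _ => sum_congr rfl fun _ _ => by ring

theorem kronecker_mulVec_mul_of_mulVec_eq_smul {A : Matrix m m ℝ} {B : Matrix n n ℝ}
    {x : m → ℝ} {y : n → ℝ} {α β : ℝ} (hA : A *ᵥ x = α • x) (hB : B *ᵥ y = β • y) :
    (A ⊗ₖ B) *ᵥ (fun q => x q.1 * y q.2) = (α * β) • fun q => x q.1 * y q.2 := by
  rw [kronecker_mulVec_mul, hA, hB]
  ext q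
  simp only [Pi.smul_apply, smul_eq_mul]
  ring

theorem orthonormal_kronecker (b : OrthonormalBasis ι ℝ (EuclideanSpace ℝ m))
    (b' : OrthonormalBasis κ ℝ (EuclideanSpace ℝ n)) :
    Orthonormal ℝ fun p : ι × κ => WithLp.toLp 2 fun q : m × n => b p.1 q.1 * b' p.2 q.2 := by
  classical
  have h (p p' : ι × κ) : ⟪WithLp.toLp 2 fun q : m × n => b p.1 q.1 * b' p.2 q.2,
      WithLp.toLp 2 fun q : m × n => b p'.1 q.1 * b' p'.2 q.2⟫ =
      ⟪b p.1, b p'.1⟫ * ⟪b' p.2, b' p'.2⟫ := by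
    simp only [EuclideanSpace.inner_eq_star_dotProduct, dotProduct, star_trivial,
      Fintype.sum_prod_type, sum_mul_sum]
    exact sum_congr rfl fun _ _ => sum_congr rfl fun _ _ => by ring
  refine orthonormal_iff_ite.2 ?_
  rintro ⟨i, k⟩ ⟨i', k'⟩
  rw [h, orthonormal_iff_ite.1 b.orthonormal, orthonormal_iff_ite.1 b'.orthonormal]
  by_cases hi : i = i' <;> by_cases hk : k = k' <;> simp [hi, hk]

noncomputable def OrthonormalBasis.kronecker (b : OrthonormalBasis ι ℝ (EuclideanSpace ℝ m))
    (b' : OrthonormalBasis κ ℝ (EuclideanSpace ℝ n)) :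
    OrthonormalBasis (ι × κ) ℝ (EuclideanSpace ℝ (m × n)) :=
  OrthonormalBasis.mk (orthonormal_kronecker b b') <| by
    refine ((orthonormal_kronecker b b').linearIndependent.span_eq_top_of_card_eq_finrank' ?_).ge
    simp [← finrank_eq_card_basis b.toBasis, ← finrank_eq_card_basis b'.toBasis]

theorem OrthonormalBasis.kronecker_apply (b : OrthonormalBasis ι ℝ (EuclideanSpace ℝ m))
    (b' : OrthonormalBasis κ ℝ (EuclideanSpace ℝ n)) (p : ι × κ) :
    ⇑(b.kronecker b' p) = fun q => b p.1 q.1 * b' p.2 q.2 := by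
  simp [OrthonormalBasis.kronecker]

end Kronecker

section Gram

variable {d0 dL r : ℕ}

noncomputable def gramMatrix (L : ℕ) (U1 : Matrix (Fin dL) (Fin r) ℝ)
    (V1 : Matrix (Fin d0) (Fin r) ℝ) (lam : Fin r → ℝ) :
    Matrix (Fin dL × Fin d0) (Fin dL × Fin d0) ℝ :=
  (U1 * Matrix.diagonal (fun i => lam i ^ (2 * (L - 1))) * U1ᵀ) ⊗ₖ
      (1 : Matrix (Fin d0) (Fin d0) ℝ) +
    (1 : Matrix (Fin dL) (Fin dL) ℝ) ⊗ₖ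
      (V1 * Matrix.diagonal (fun i => lam i ^ (2 * (L - 1))) * V1ᵀ) +
    ∑ l ∈ Finset.Icc 2 (L - 1),
      (U1 * Matrix.diagonal (fun i => lam i ^ (2 * (L - l))) * U1ᵀ) ⊗ₖ
        (V1 * Matrix.diagonal (fun i => lam i ^ (2 * (l - 1))) * V1ᵀ)

/-- The eigenvalue of `gramMatrix` at `u ⊗ v`, where `Sum.inl j` indexes the `j`-th column of `U1`
(or `V1`) and `Sum.inr` an orthonormal basis of the orthogonal complement of the columns. -/
noncomputable def gramEigenvalue {α β : Type*} (L : ℕ) (lam : Fin r → ℝ)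
    (p : (Fin r ⊕ α) × (Fin r ⊕ β)) : ℝ :=
  Sum.elim (fun i => lam i ^ (2 * (L - 1))) 0 p.1 +
    Sum.elim (fun i => lam i ^ (2 * (L - 1))) 0 p.2 +
    ∑ l ∈ Icc 2 (L - 1),
      Sum.elim (fun i => lam i ^ (2 * (L - l))) 0 p.1 *
        Sum.elim (fun i => lam i ^ (2 * (l - 1))) 0 p.2

theorem exists_orthonormalBasis_gramMatrix_mulVec (L : ℕ) {U1 : Matrix (Fin dL) (Fin r) ℝ}
    {V1 : Matrix (Fin d0) (Fin r) ℝ} (hU1 : U1ᵀ * U1 = 1) (hV1 : V1ᵀ * V1 = 1) (hrdL : r ≤ dL)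
    (hrd0 : r ≤ d0) (lam : Fin r → ℝ) :
    ∃ w : OrthonormalBasis ((Fin r ⊕ Fin (dL - r)) × (Fin r ⊕ Fin (d0 - r))) ℝ
        (EuclideanSpace ℝ (Fin dL × Fin d0)),
      ∀ p, gramMatrix L U1 V1 lam *ᵥ w p = gramEigenvalue L lam p • ⇑(w p) := by
  obtain ⟨bU, hbU⟩ := exists_orthonormalBasis_extending_cols hU1 hrdL
  obtain ⟨bV, hbV⟩ := exists_orthonormalBasis_extending_cols hV1 hrd0
  have hU := mul_diagonal_mul_transpose_mulVec hU1 bU hbU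
  have hV := mul_diagonal_mul_transpose_mulVec hV1 bV hbV
  have hone {n : ℕ} (v : Fin n → ℝ) : (1 : Matrix (Fin n) (Fin n) ℝ) *ᵥ v = (1 : ℝ) • v := by
    rw [one_mulVec, one_smul]
  refine ⟨bU.kronecker bV, fun p => ?_⟩
  rw [OrthonormalBasis.kronecker_apply, gramMatrix, add_mulVec, add_mulVec, sum_mulVec,
    kronecker_mulVec_mul_of_mulVec_eq_smul (hU _ p.1) (hone _),
    kronecker_mulVec_mul_of_mulVec_eq_smul (hone _) (hV _ p.2),
    sum_congr rfl fun l _ => kronecker_mulVec_mul_of_mulVec_eq_smul (hU _ p.1) (hV _ p.2),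
    ← sum_smul, ← add_smul, ← add_smul, gramEigenvalue, mul_one, one_mul]

end Gram

section GramSpectrum

variable {r L : ℕ} {α β : Type*} {lam : Fin r → ℝ} {a b : ℝ}

@[simp] theorem gramEigenvalue_inl_inr (i : Fin r) (k : β) :
    gramEigenvalue (α := α) L lam (Sum.inl i, Sum.inr k) = lam i ^ (2 * (L - 1)) := by
  simp [gramEigenvalue]

@[simp] theorem gramEigenvalue_inr_inl (k : α) (j : Fin r) :
    gramEigenvalue (β := β) L lam (Sum.inr k, Sum.inl j) = lam j ^ (2 * (L - 1)) := by
  simp [gramEigenvalue]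

@[simp] theorem gramEigenvalue_inr_inr (k : α) (l : β) :
    gramEigenvalue L lam (Sum.inr k, Sum.inr l) = 0 := by
  simp [gramEigenvalue]

theorem pow_mem_Icc_pow {x : ℝ} (ha : 0 ≤ a) (hx : x ∈ Set.Icc a b) (n : ℕ) :
    x ^ n ∈ Set.Icc (a ^ n) (b ^ n) :=
  ⟨pow_le_pow_left₀ ha hx.1 n, pow_le_pow_left₀ (ha.trans hx.1) hx.2 n⟩

theorem pow_mul_pow_mem_Icc_pow {x y : ℝ} (ha : 0 ≤ a) (hx : x ∈ Set.Icc a b)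
    (hy : y ∈ Set.Icc a b) {e₁ e₂ n : ℕ} (he : e₁ + e₂ = n) :
    x ^ e₁ * y ^ e₂ ∈ Set.Icc (a ^ n) (b ^ n) := by
  have h₁ := pow_mem_Icc_pow ha hx e₁
  have h₂ := pow_mem_Icc_pow ha hy e₂
  have h₁₀ := (pow_nonneg ha e₁).trans h₁.1
  have h₂₀ := (pow_nonneg ha e₂).trans h₂.1
  rw [← he, pow_add, pow_add]
  exact ⟨mul_le_mul h₁.1 h₂.1 (pow_nonneg ha e₂) h₁₀,
    mul_le_mul h₁.2 h₂.2 h₂₀ (h₁₀.trans h₁.2)⟩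

theorem gramEigenvalue_inl_inl_mem_Icc (hL : 2 ≤ L) (ha : 0 ≤ a) {i j : Fin r}
    (hli : lam i ∈ Set.Icc a b) (hlj : lam j ∈ Set.Icc a b) :
    gramEigenvalue (α := α) (β := β) L lam (Sum.inl i, Sum.inl j) ∈
      Set.Icc (L * a ^ (2 * (L - 1))) (L * b ^ (2 * (L - 1))) := by
  have hterm : ∀ l ∈ Icc 2 (L - 1), lam i ^ (2 * (L - l)) * lam j ^ (2 * (l - 1)) ∈
      Set.Icc (a ^ (2 * (L - 1))) (b ^ (2 * (L - 1))) := fun l hl =>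
    pow_mul_pow_mem_Icc_pow ha hli hlj (by rw [mem_Icc] at hl; omega)
  have hsum_lo := card_nsmul_le_sum _ _ _ fun l hl => (hterm l hl).1
  have hsum_hi := sum_le_card_nsmul _ _ _ fun l hl => (hterm l hl).2
  have hcard : (#(Icc 2 (L - 1)) : ℝ) = L - 2 := by
    rw [Nat.card_Icc, show L - 1 + 1 - 2 = L - 2 by omega, Nat.cast_sub hL, Nat.cast_two]
  rw [nsmul_eq_mul, hcard] at hsum_lo hsum_hi
  have hi := pow_mem_Icc_pow ha hli (2 * (L - 1))
  have hj := pow_mem_Icc_pow ha hlj (2 * (L - 1))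
  simp only [gramEigenvalue, Sum.elim_inl]
  constructor <;> nlinarith [hi.1, hi.2, hj.1, hj.2]

theorem gramEigenvalue_mem_Icc (hL : 2 ≤ L) (ha : 0 ≤ a) (hlam : ∀ i, lam i ∈ Set.Icc a b)
    (p : (Fin r ⊕ α) × (Fin r ⊕ β)) :
    gramEigenvalue L lam p ∈ Set.Icc 0 (L * b ^ (2 * (L - 1))) := by
  have hL1 : (1 : ℝ) ≤ L := by exact_mod_cast (by omega : 1 ≤ L)
  have hb : 0 ≤ b ^ (2 * (L - 1)) := (even_two_mul _).pow_nonneg b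
  have hbulk (i : Fin r) : lam i ^ (2 * (L - 1)) ∈ Set.Icc 0 (L * b ^ (2 * (L - 1))) := by
    have h := pow_mem_Icc_pow ha (hlam i) (2 * (L - 1))
    exact ⟨(pow_nonneg ha _).trans h.1, h.2.trans (le_mul_of_one_le_left hb hL1)⟩
  rcases p with ⟨i | k, j | l⟩
  · have h := gramEigenvalue_inl_inl_mem_Icc (α := α) (β := β) hL ha (hlam i) (hlam j)
    exact ⟨(mul_nonneg (by positivity) (pow_nonneg ha _)).trans h.1, h.2⟩
  · simpa using hbulk i
  · simpa using hbulk j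
  · simpa using mul_nonneg (by positivity) hb

end GramSpectrum

section GramCounting

variable {r L : ℕ} {α β : Type*} [Fintype α] [Fintype β] {lam : Fin r → ℝ} {a b : ℝ}

theorem card_le_card_filter_gramEigenvalue_ge (hL : 2 ≤ L) (ha : 0 ≤ a)
    (hlam : ∀ i, lam i ∈ Set.Icc a b) :
    r * r ≤
      #{p : (Fin r ⊕ α) × (Fin r ⊕ β) | L * a ^ (2 * (L - 1)) ≤ gramEigenvalue L lam p} := by
  simpa using card_le_card_filter_of_injective
    (f := fun q : Fin r × Fin r => ((Sum.inl q.1, Sum.inl q.2) : (Fin r ⊕ α) × (Fin r ⊕ β)))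
    (fun q q' h => by simpa [Prod.ext_iff] using h)
    fun q => (gramEigenvalue_inl_inl_mem_Icc hL ha (hlam q.1) (hlam q.2)).1

theorem card_sub_le_card_filter_gramEigenvalue_le (ha : 0 ≤ a)
    (hlam : ∀ i, lam i ∈ Set.Icc a b) :
    Fintype.card ((Fin r ⊕ α) × (Fin r ⊕ β)) - r * r ≤
      #{p : (Fin r ⊕ α) × (Fin r ⊕ β) | gramEigenvalue L lam p ≤ b ^ (2 * (L - 1))} := by
  have hb : 0 ≤ b ^ (2 * (L - 1)) := (even_two_mul _).pow_nonneg b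
  have h := card_sub_le_card_filter_of_subset_range
    (f := fun q : Fin r × Fin r => ((Sum.inl q.1, Sum.inl q.2) : (Fin r ⊕ α) × (Fin r ⊕ β)))
    (P := fun p => gramEigenvalue L lam p ≤ b ^ (2 * (L - 1))) <| by
    rintro ⟨i | k, j | l⟩ hp
    · exact ⟨(i, j), rfl⟩
    · exact absurd (by simpa using (pow_mem_Icc_pow ha (hlam i) _).2) hp
    · exact absurd (by simpa using (pow_mem_Icc_pow ha (hlam j) _).2) hp
    · exact absurd (by simpa using hb) hp
  simpa using h

theorem card_sub_le_card_filter_gramEigenvalue_ge (hL : 2 ≤ L) (ha : 0 ≤ a)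
    (hlam : ∀ i, lam i ∈ Set.Icc a b) :
    Fintype.card ((Fin r ⊕ α) × (Fin r ⊕ β)) - Fintype.card α * Fintype.card β ≤
      #{p : (Fin r ⊕ α) × (Fin r ⊕ β) | a ^ (2 * (L - 1)) ≤ gramEigenvalue L lam p} := by
  have hL1 : (1 : ℝ) ≤ L := by exact_mod_cast (by omega : 1 ≤ L)
  have h := card_sub_le_card_filter_of_subset_range
    (f := fun q : α × β => ((Sum.inr q.1, Sum.inr q.2) : (Fin r ⊕ α) × (Fin r ⊕ β)))
    (P := fun p => a ^ (2 * (L - 1)) ≤ gramEigenvalue L lam p) <| by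
    rintro ⟨i | k, j | l⟩ hp
    · exact absurd ((le_mul_of_one_le_left (pow_nonneg ha _) hL1).trans
        (gramEigenvalue_inl_inl_mem_Icc hL ha (hlam i) (hlam j)).1) hp
    · exact absurd (by simpa using (pow_mem_Icc_pow ha (hlam i) _).1) hp
    · exact absurd (by simpa using (pow_mem_Icc_pow ha (hlam j) _).1) hp
    · exact ⟨(k, l), rfl⟩
  simpa using h

theorem card_le_card_filter_gramEigenvalue_le_zero :
    Fintype.card α * Fintype.card β ≤
      #{p : (Fin r ⊕ α) × (Fin r ⊕ β) | gramEigenvalue L lam p ≤ 0} := by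
  simpa using card_le_card_filter_of_injective
    (f := fun q : α × β => ((Sum.inr q.1, Sum.inr q.2) : (Fin r ⊕ α) × (Fin r ⊕ β)))
    (fun q q' h => by simpa [Prod.ext_iff] using h) fun q => by simp

end GramCounting

theorem div_le_div_and_div_le_div_of_mem_Icc {a b c d x y : ℝ} (ha : 0 ≤ a) (hc : 0 < c)
    (hx : x ∈ Set.Icc a b) (hy : y ∈ Set.Icc c d) : a / d ≤ x / y ∧ x / y ≤ b / c :=
  ⟨div_le_div₀ (ha.trans hx.1) hx.1 (hc.trans_le hy.1) hy.2,
    div_le_div₀ (ha.trans (hx.1.trans hx.2)) hx.2 hc hy.1⟩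

theorem block_card_identity {r d0 dL : ℕ} (h0 : r ≤ d0) (hL : r ≤ dL) :
    dL * d0 = r * r + (d0 + dL - 2 * r) * r + (dL - r) * (d0 - r) := by
  obtain ⟨a, rfl⟩ := Nat.exists_eq_add_of_le h0
  obtain ⟨b, rfl⟩ := Nat.exists_eq_add_of_le hL
  rw [show r + a + (r + b) - 2 * r = a + b by omega, Nat.add_sub_cancel_left,
    Nat.add_sub_cancel_left]
  ring

theorem statement16_general (L d0 dL r : ℕ) (hL : 2 ≤ L)
    (hr : r ≤ min d0 dL)
    (U1 : Matrix (Fin dL) (Fin r) ℝ) (V1 : Matrix (Fin d0) (Fin r) ℝ)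
    (hU1 : U1ᵀ * U1 = 1) (hV1 : V1ᵀ * V1 = 1)
    (lam : Fin r → ℝ)
    (m δ : ℝ) (hδm : δ < m)
    (hmem : ∀ i, lam i ∈ Set.Icc (m - δ) (m + δ))
    (G : Matrix (Fin dL × Fin d0) (Fin dL × Fin d0) ℝ)
    (hGdef : G =
      (U1 * Matrix.diagonal (fun i => lam i ^ (2 * (L - 1))) * U1ᵀ) ⊗ₖ
          (1 : Matrix (Fin d0) (Fin d0) ℝ) +
        (1 : Matrix (Fin dL) (Fin dL) ℝ) ⊗ₖ
          (V1 * Matrix.diagonal (fun i => lam i ^ (2 * (L - 1))) * V1ᵀ) +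
        ∑ l ∈ Finset.Icc 2 (L - 1),
          (U1 * Matrix.diagonal (fun i => lam i ^ (2 * (L - l))) * U1ᵀ) ⊗ₖ
            (V1 * Matrix.diagonal (fun i => lam i ^ (2 * (l - 1))) * V1ᵀ))
    (ε : ℝ)
    (E : Matrix (Fin dL × Fin d0) (Fin dL × Fin d0) ℝ)
    (hEnorm : matSpectralNorm E ≤ ε)
    (hH : (G + E).IsHermitian) :
    ∃ S1 S2 S3 : Finset (Fin dL × Fin d0),
      Disjoint S1 S2 ∧ Disjoint S1 S3 ∧ Disjoint S2 S3 ∧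
      S1 ∪ S2 ∪ S3 = Finset.univ ∧
      S1.card = r * r ∧ S2.card = (d0 + dL - 2 * r) * r ∧
      S3.card = (dL - r) * (d0 - r) ∧
      (∀ k ∈ S1, hH.eigenvalues k ∈
        Set.Icc ((L : ℝ) * (m - δ) ^ (2 * (L - 1)) - ε)
          ((L : ℝ) * (m + δ) ^ (2 * (L - 1)) + ε)) ∧
      (∀ k ∈ S2, hH.eigenvalues k ∈
        Set.Icc ((m - δ) ^ (2 * (L - 1)) - ε) ((m + δ) ^ (2 * (L - 1)) + ε)) ∧
      (∀ k ∈ S3, hH.eigenvalues k ∈ Set.Icc (-ε) ε) ∧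
      (ε < (m - δ) ^ (2 * (L - 1)) →
        ∀ k ∈ S1, ∀ k' ∈ S2,
          (L : ℝ) * ((m - δ) ^ (2 * (L - 1)) - ε / (L : ℝ)) /
              ((m + δ) ^ (2 * (L - 1)) + ε) ≤
            hH.eigenvalues k / hH.eigenvalues k' ∧
          hH.eigenvalues k / hH.eigenvalues k' ≤
            (L : ℝ) * ((m + δ) ^ (2 * (L - 1)) + ε / (L : ℝ)) /
              ((m - δ) ^ (2 * (L - 1)) - ε)) := by
  obtain ⟨hrd0, hrdL⟩ := le_min_iff.1 hr
  have ha : 0 ≤ m - δ := by linarith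
  obtain ⟨w, hw⟩ := exists_orthonormalBasis_gramMatrix_mulVec L hU1 hV1 hrdL hrd0 lam
  subst hGdef
  have hcount := card_le_card_eigenvalues_add hH w hw hEnorm
  have hspec := eigenvalues_add_mem_Icc hH w hw hEnorm (gramEigenvalue_mem_Icc hL ha hmem)
  have hN : Fintype.card (Fin dL × Fin d0) = dL * d0 := by simp
  have hN' : Fintype.card ((Fin r ⊕ Fin (dL - r)) × (Fin r ⊕ Fin (d0 - r))) = dL * d0 := by
    simp only [Fintype.card_prod, Fintype.card_sum, Fintype.card_fin]
    rw [Nat.add_sub_cancel' hrdL, Nat.add_sub_cancel' hrd0]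
  have hblocks := block_card_identity hrd0 hrdL
  have h₂ := (card_sub_le_card_filter_gramEigenvalue_le ha hmem).trans (hcount _).2
  have h₃ := (card_sub_le_card_filter_gramEigenvalue_ge hL ha hmem).trans (hcount _).1
  simp only [Fintype.card_fin] at h₃
  rw [hN', ← hN] at h₂ h₃
  obtain ⟨S1, S2, S3, h12, h13, h23, hU, c1, c2, c3, hS1, hS2, hS3⟩ :=
    exists_three_blocks hH.eigenvalues (n₁ := r * r) (n₃ := (dL - r) * (d0 - r)) (by omega)
      ((card_le_card_filter_gramEigenvalue_ge hL ha hmem).trans (hcount _).1) h₂ h₃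
      (by simpa using card_le_card_filter_gramEigenvalue_le_zero.trans (hcount 0).2)
  refine ⟨S1, S2, S3, h12, h13, h23, hU, c1, by omega, c3, fun k hk => ⟨hS1 k hk, (hspec k).2⟩,
    hS2, fun k hk => ⟨by simpa using (hspec k).1, hS3 k hk⟩, fun hsmall k hk k' hk' => ?_⟩
  have hL1 : (1 : ℝ) ≤ L := by exact_mod_cast hL.trans' one_le_two
  have hdom := le_mul_of_one_le_left (pow_nonneg ha (2 * (L - 1))) hL1
  rw [mul_sub, mul_add, mul_div_cancel₀ _ (by positivity)]
  exact div_le_div_and_div_le_div_of_mem_Icc (by linarith) (by linarith)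
    ⟨hS1 k hk, (hspec k).2⟩ (hS2 k' hk')

/-- Hessian bifurcation with a perturbation: if `G` is the general Gram
matrix of the outer-product Hessian with `λᵢ ∈ [m − δ, m + δ]`, `0 < δ < m`,
`(m + δ)/(m − δ) < L^{1/(2(L−1))}`, and `E` is symmetric with `‖E‖₂ ≤ ε`, then the
eigenvalues of `H = G + E` split into a dominant group of `r²` in
`[L(m−δ)^{2(L−1)} − ε, L(m+δ)^{2(L−1)} + ε]`, a bulk group of `(d₀ + d_L − 2r)r` in
`[(m−δ)^{2(L−1)} − ε, (m+δ)^{2(L−1)} + ε]`, and `(d_L − r)(d₀ − r)` eigenvalues in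
`[−ε, ε]`; moreover if `ε < (m−δ)^{2(L−1)}` the dominant/bulk ratio is pinched between
`L((m−δ)^{2(L−1)} − ε/L)/((m+δ)^{2(L−1)} + ε)` and
`L((m+δ)^{2(L−1)} + ε/L)/((m−δ)^{2(L−1)} − ε)`. -/
theorem statement16 (L d0 dL r : ℕ) (hL : 2 ≤ L) (hd0 : 1 ≤ d0) (hdL : 1 ≤ dL)
    (hr1 : 1 ≤ r) (hr : r ≤ min d0 dL)
    (U1 : Matrix (Fin dL) (Fin r) ℝ) (V1 : Matrix (Fin d0) (Fin r) ℝ)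
    (hU1 : U1ᵀ * U1 = 1) (hV1 : V1ᵀ * V1 = 1)
    (lam : Fin r → ℝ) (hlam : ∀ i, 0 < lam i)
    (m δ : ℝ) (hδ : 0 < δ) (hδm : δ < m)
    (hmem : ∀ i, lam i ∈ Set.Icc (m - δ) (m + δ))
    (hgap : (m + δ) / (m - δ) < (L : ℝ) ^ ((1 : ℝ) / (2 * ((L : ℝ) - 1))))
    (G : Matrix (Fin dL × Fin d0) (Fin dL × Fin d0) ℝ)
    (hGdef : G =
      (U1 * Matrix.diagonal (fun i => lam i ^ (2 * (L - 1))) * U1ᵀ) ⊗ₖ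
          (1 : Matrix (Fin d0) (Fin d0) ℝ) +
        (1 : Matrix (Fin dL) (Fin dL) ℝ) ⊗ₖ
          (V1 * Matrix.diagonal (fun i => lam i ^ (2 * (L - 1))) * V1ᵀ) +
        ∑ l ∈ Finset.Icc 2 (L - 1),
          (U1 * Matrix.diagonal (fun i => lam i ^ (2 * (L - l))) * U1ᵀ) ⊗ₖ
            (V1 * Matrix.diagonal (fun i => lam i ^ (2 * (l - 1))) * V1ᵀ))
    (ε : ℝ) (hε : 0 ≤ ε)
    (E : Matrix (Fin dL × Fin d0) (Fin dL × Fin d0) ℝ)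
    (hE : E.IsHermitian) (hEnorm : matSpectralNorm E ≤ ε)
    (hH : (G + E).IsHermitian) :
    ∃ S1 S2 S3 : Finset (Fin dL × Fin d0),
      Disjoint S1 S2 ∧ Disjoint S1 S3 ∧ Disjoint S2 S3 ∧
      S1 ∪ S2 ∪ S3 = Finset.univ ∧
      S1.card = r * r ∧ S2.card = (d0 + dL - 2 * r) * r ∧
      S3.card = (dL - r) * (d0 - r) ∧
      (∀ k ∈ S1, hH.eigenvalues k ∈
        Set.Icc ((L : ℝ) * (m - δ) ^ (2 * (L - 1)) - ε)
          ((L : ℝ) * (m + δ) ^ (2 * (L - 1)) + ε)) ∧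
      (∀ k ∈ S2, hH.eigenvalues k ∈
        Set.Icc ((m - δ) ^ (2 * (L - 1)) - ε) ((m + δ) ^ (2 * (L - 1)) + ε)) ∧
      (∀ k ∈ S3, hH.eigenvalues k ∈ Set.Icc (-ε) ε) ∧
      (ε < (m - δ) ^ (2 * (L - 1)) →
        ∀ k ∈ S1, ∀ k' ∈ S2,
          (L : ℝ) * ((m - δ) ^ (2 * (L - 1)) - ε / (L : ℝ)) /
              ((m + δ) ^ (2 * (L - 1)) + ε) ≤
            hH.eigenvalues k / hH.eigenvalues k' ∧
          hH.eigenvalues k / hH.eigenvalues k' ≤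
            (L : ℝ) * ((m + δ) ^ (2 * (L - 1)) + ε / (L : ℝ)) /
              ((m - δ) ^ (2 * (L - 1)) - ε)) :=
  statement16_general L d0 dL r hL hr U1 V1 hU1 hV1 lam m δ hδm hmem G hGdef ε E hEnorm hH
end
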